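/- arXiv:1504.01789 — 11 statements merged into one kernel-verified Lean document; each statement's English description precedes it below -/
import Mathlib

section
/- The quotient of a line L_n by any congruence θ is isomorphic (as a frame) to a line L_k for some k. -/
/-- The accessibility relation of the line `L_n`: universe `{0,…,n}`, `x R y ↔ |x-y| ≤ 1`. -/
def lineR (n x y : ℕ) : Prop := x ≤ n ∧ y ≤ n ∧ x ≤ y + 1 ∧ y ≤ x + 1

/-- A congruence of the line `L_n`: an equivalence relation on `{0,…,n}` that is a bisimulation. -/
structure LineCong (n : ℕ) : Type where
  rel : ℕ → ℕ → Prop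
  refl : ∀ x, x ≤ n → rel x x
  symm : ∀ {x y}, rel x y → rel y x
  trans : ∀ {x y z}, rel x y → rel y z → rel x z
  dom : ∀ {x y}, rel x y → x ≤ n ∧ y ≤ n
  bisim : ∀ {x x' y}, rel x' x → lineR n x y → ∃ y', lineR n x' y' ∧ rel y' y

/-- The equivalence class `x/θ`. -/
def cls {n : ℕ} (θ : LineCong n) (x : ℕ) : Set ℕ := {y | θ.rel x y}

/-- The set of equivalence classes of `θ`. -/
def classes {n : ℕ} (θ : LineCong n) : Set (Set ℕ) := {S | ∃ x, x ≤ n ∧ S = cls θ x}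

/-- `qrel θ x y` holds iff `x/θ R_θ y/θ` in the quotient frame. -/
def qrel {n : ℕ} (θ : LineCong n) (x y : ℕ) : Prop :=
  ∃ x' y', θ.rel x' x ∧ θ.rel y' y ∧ lineR n x' y'

/-- `vq θ x` is the number of `R_θ`-successor classes of `x/θ` in the quotient frame. -/
noncomputable def vq {n : ℕ} (θ : LineCong n) (x : ℕ) : ℕ :=
  {S : Set ℕ | ∃ y, qrel θ x y ∧ S = cls θ y}.ncard

/-- `θ` is trivial: it has exactly one class. -/
def TrivialCong {n : ℕ} (θ : LineCong n) : Prop := ∀ x y, x ≤ n → y ≤ n → θ.rel x y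

/-- The step of `θ`: the number of classes minus one. -/
noncomputable def stepC {n : ℕ} (θ : LineCong n) : ℕ := (classes θ).ncard - 1

/-- `e` is an extreme of `θ`: its class is an endpoint of the quotient line. -/
def IsExtremeC {n : ℕ} (θ : LineCong n) (e : ℕ) : Prop := e ≤ n ∧ vq θ e ≤ 2

/-- The join of two congruences: the transitive closure of their union. -/
def joinRel {n : ℕ} (θ δ : LineCong n) : ℕ → ℕ → Prop :=
  Relation.TransGen (fun x y => θ.rel x y ∨ δ.rel x y)

/-- Inclusion of congruences. -/
def LeCong {n : ℕ} (θ δ : LineCong n) : Prop := ∀ x y, θ.rel x y → δ.rel x y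

/-- The frequency of `θ` : `|ext(θ)| - (number of rests) - 1`. -/
noncomputable def freqC {n : ℕ} (θ : LineCong n) : ℕ :=
  {e | IsExtremeC θ e}.ncard - {r | θ.rel r (r + 1)}.ncard - 1

/-- `Δ_r̄(x) = |{i : r_i < x}|`. -/
def deltaFn (m : ℕ) (r : Fin m → ℕ) (x : ℤ) : ℤ :=
  ((Finset.univ.filter (fun i => (r i : ℤ) < x)).card : ℤ)

/-- The relation `⟨k; r̄⟩` on `ℤ`:
`x ∼ y ↔ x - Δ(x) ≡ ±(y - Δ(y)) (mod 2k)`. -/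
def conr (k m : ℕ) (r : Fin m → ℕ) (x y : ℤ) : Prop :=
  x - deltaFn m r x ≡ y - deltaFn m r y [ZMOD (2 * (k : ℤ))] ∨
  x - deltaFn m r x ≡ -(y - deltaFn m r y) [ZMOD (2 * (k : ℤ))]


section Stmt3Aux

variable {n : ℕ}

/-- Adjacency of classes in the quotient. -/
def Adj (n : ℕ) (S T : Set ℕ) : Prop := ∃ x ∈ S, ∃ y ∈ T, lineR n x y

lemma lineR_symm {x y : ℕ} (h : lineR n x y) : lineR n y x :=
  ⟨h.2.1, h.1, h.2.2.2, h.2.2.1⟩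

lemma adj_symm {S T : Set ℕ} (h : Adj n S T) : Adj n T S := by
  obtain ⟨x, hx, y, hy, hr⟩ := h
  exact ⟨y, hy, x, hx, lineR_symm hr⟩

lemma cls_eq_of_rel (θ : LineCong n) {a b : ℕ} (h : θ.rel a b) : cls θ a = cls θ b := by
  ext z
  exact ⟨fun hz => θ.trans (θ.symm h) hz, fun hz => θ.trans h hz⟩

lemma adj_refl (θ : LineCong n) {a : ℕ} (ha : a ≤ n) : Adj n (cls θ a) (cls θ a) :=
  ⟨a, θ.refl a ha, a, θ.refl a ha, ha, ha, by omega, by omega⟩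

/-- Degree bound: any class adjacent to `cls θ a` is the class of `a-1`, `a`, or `a+1`. -/
lemma neighbor (θ : LineCong n) {a : ℕ} {T : Set ℕ} (hT : T ∈ classes θ)
    (h : Adj n (cls θ a) T) :
    T = cls θ (a - 1) ∨ T = cls θ a ∨ T = cls θ (a + 1) := by
  obtain ⟨x, hx, y, hy, hr⟩ := h
  obtain ⟨b, _, rfl⟩ := hT
  obtain ⟨y', hy', hrel⟩ := θ.bisim (x' := a) hx hr
  have hTy : cls θ b = cls θ y' := cls_eq_of_rel θ (θ.trans hy (θ.symm hrel))
  obtain ⟨_, _, h1, h2⟩ := hy'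
  have : y' = a - 1 ∨ y' = a ∨ y' = a + 1 := by omega
  rcases this with rfl | rfl | rfl
  · exact Or.inl hTy
  · exact Or.inr (Or.inl hTy)
  · exact Or.inr (Or.inr hTy)

/-- `steps θ m S`: `S` is a class reachable from the class of `0` in `m` steps. -/
def steps (θ : LineCong n) : ℕ → Set ℕ → Prop
  | 0 => fun S => S = cls θ 0
  | (m + 1) => fun S => S ∈ classes θ ∧ ∃ T, steps θ m T ∧ Adj n T S

lemma steps_classes (θ : LineCong n) {m : ℕ} {S : Set ℕ} (h : steps θ m S) :
    S ∈ classes θ := by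
  cases m with
  | zero => exact ⟨0, Nat.zero_le n, h⟩
  | succ m => exact h.1

/-- Distance from the class of `0`. -/
noncomputable def D (θ : LineCong n) (S : Set ℕ) : ℕ := sInf {m | steps θ m S}

lemma exists_steps (θ : LineCong n) : ∀ a, a ≤ n → ∃ m ≤ a, steps θ m (cls θ a) := by
  intro a
  induction a with
  | zero => exact fun _ => ⟨0, le_refl 0, rfl⟩
  | succ a ih =>
    intro ha
    obtain ⟨m, hm, hs⟩ := ih (by omega)
    exact ⟨m + 1, by omega, ⟨a + 1, ha, rfl⟩, cls θ a, hs,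
      a, θ.refl a (by omega), a + 1, θ.refl (a + 1) ha, by omega, ha, by omega, by omega⟩

lemma steps_D (θ : LineCong n) {S : Set ℕ} (hS : S ∈ classes θ) : steps θ (D θ S) S := by
  obtain ⟨a, ha, rfl⟩ := hS
  obtain ⟨m, _, hs⟩ := exists_steps θ a ha
  exact Nat.sInf_mem (⟨m, hs⟩ : {m | steps θ m (cls θ a)}.Nonempty)

lemma D_le (θ : LineCong n) {m : ℕ} {S : Set ℕ} (h : steps θ m S) : D θ S ≤ m :=
  Nat.sInf_le h

lemma D_le_of_adj (θ : LineCong n) {S T : Set ℕ} (hS : S ∈ classes θ) (hT : T ∈ classes θ)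
    (h : Adj n S T) : D θ T ≤ D θ S + 1 :=
  D_le θ ⟨hT, S, steps_D θ hS, h⟩

lemma D_zero_eq (θ : LineCong n) {S : Set ℕ} (hS : S ∈ classes θ) (h : D θ S = 0) :
    S = cls θ 0 := by
  have := steps_D θ hS
  rw [h] at this
  exact this

lemma pred_class (θ : LineCong n) {S : Set ℕ} {m : ℕ} (hS : S ∈ classes θ)
    (hD : D θ S = m + 1) : ∃ T ∈ classes θ, Adj n T S ∧ D θ T = m := by
  have h := steps_D θ hS
  rw [hD] at h
  obtain ⟨_, T, hs, hadj⟩ := h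
  have hTc := steps_classes θ hs
  have h1 : D θ T ≤ m := D_le θ hs
  have h2 : D θ S ≤ D θ T + 1 := D_le_of_adj θ hTc hS hadj
  exact ⟨T, hTc, hadj, by omega⟩

lemma D_cls_le (θ : LineCong n) {a : ℕ} (ha : a ≤ n) : D θ (cls θ a) ≤ a := by
  obtain ⟨m, hm, hs⟩ := exists_steps θ a ha
  exact le_trans (D_le θ hs) hm

/-- Uniqueness: there is at most one class at each distance. -/
lemma uniq (θ : LineCong n) : ∀ d, ∀ S T, S ∈ classes θ → T ∈ classes θ →
    D θ S = d → D θ T = d → S = T := by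
  intro d
  induction d with
  | zero =>
    intro S T hS hT h1 h2
    rw [D_zero_eq θ hS h1, D_zero_eq θ hT h2]
  | succ d ih =>
    intro S T hS hT h1 h2
    obtain ⟨U, hU, hUS, hDU⟩ := pred_class θ hS h1
    obtain ⟨U', hU', hUT, hDU'⟩ := pred_class θ hT h2
    have hUU : U' = U := ih U' U hU' hU hDU' hDU
    subst hUU
    cases d with
    | zero =>
      have hU0 : U' = cls θ 0 := D_zero_eq θ hU hDU
      subst hU0
      have hS3 := neighbor θ hS hUS
      have hT3 := neighbor θ hT hUT
      have hSne : S ≠ cls θ 0 := by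
        intro e; rw [e] at h1; omega
      have hTne : T ≠ cls θ 0 := by
        intro e; rw [e] at h2; omega
      simp only [Nat.zero_sub] at hS3 hT3
      rcases hS3 with e | e | e <;> rcases hT3 with e' | e' | e' <;>
        first
          | (exact absurd e hSne)
          | (exact absurd e' hTne)
          | (rw [e, e'])
    | succ d' =>
      obtain ⟨V, hV, hVU, hDV⟩ := pred_class θ hU hDU
      obtain ⟨a, _, rfl⟩ := hU
      have hS3 := neighbor θ hS hUS
      have hT3 := neighbor θ hT hUT
      have hV3 := neighbor θ hV (adj_symm hVU)
      have hSa : S ≠ cls θ a := by intro e; rw [e] at h1; omega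
      have hTa : T ≠ cls θ a := by intro e; rw [e] at h2; omega
      have hVa : V ≠ cls θ a := by intro e; rw [e] at hDV; omega
      have hVS : V ≠ S := by intro e; rw [e, h1] at hDV; omega
      have hVT : V ≠ T := by intro e; rw [e, h2] at hDV; omega
      rcases hV3 with ev | ev | ev
      · rcases hS3 with e | e | e
        · exact absurd (ev.trans e.symm) hVS
        · exact absurd e hSa
        · rcases hT3 with e' | e' | e'
          · exact absurd (ev.trans e'.symm) hVT
          · exact absurd e' hTa
          · rw [e, e']
      · exact absurd ev hVa
      · rcases hS3 with e | e | e
        · rcases hT3 with e' | e' | e'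
          · rw [e, e']
          · exact absurd e' hTa
          · exact absurd (ev.trans e'.symm) hVT
        · exact absurd e hSa
        · exact absurd (ev.trans e.symm) hVS

lemma exists_lower (θ : LineCong n) : ∀ m, ∀ j, j ≤ m → (∃ S ∈ classes θ, D θ S = m) →
    ∃ T ∈ classes θ, D θ T = j := by
  intro m
  induction m with
  | zero =>
    intro j hj h
    have : j = 0 := by omega
    subst this
    exact h
  | succ m ih =>
    intro j hj h
    obtain ⟨S, hS, hD⟩ := h
    rcases Nat.eq_or_lt_of_le hj with rfl | hlt
    · exact ⟨S, hS, hD⟩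
    · obtain ⟨T, hT, _, hDT⟩ := pred_class θ hS hD
      exact ih j (by omega) ⟨T, hT, hDT⟩

end Stmt3Aux

/-- The quotient of a line by any congruence is isomorphic, as a frame, to a line `L_k`. -/
theorem stmt_3 (n : ℕ) (θ : LineCong n) :
    ∃ k : ℕ, ∃ f : Set ℕ → ℕ,
      Set.BijOn f (classes θ) (Set.Iic k) ∧
      ∀ S ∈ classes θ, ∀ T ∈ classes θ,
        ((∃ x ∈ S, ∃ y ∈ T, lineR n x y) ↔ (f S ≤ f T + 1 ∧ f T ≤ f S + 1)) := by
  classical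
  set K : Set ℕ := D θ '' classes θ with hK
  have hcls0 : cls θ 0 ∈ classes θ := ⟨0, Nat.zero_le n, rfl⟩
  have hKne : K.Nonempty := ⟨D θ (cls θ 0), cls θ 0, hcls0, rfl⟩
  have hKbdd : BddAbove K := by
    refine ⟨n, ?_⟩
    rintro m ⟨S, ⟨a, ha, rfl⟩, rfl⟩
    exact le_trans (D_cls_le θ ha) ha
  set k := sSup K with hk
  have hk_mem : k ∈ K := Nat.sSup_mem hKne hKbdd
  refine ⟨k, D θ, ⟨?_, ?_, ?_⟩, ?_⟩
  · -- MapsTo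
    intro S hS
    exact le_csSup hKbdd ⟨S, hS, rfl⟩
  · -- InjOn
    intro S hS T hT h
    exact uniq θ (D θ T) S T hS hT h rfl
  · -- SurjOn
    intro j hj
    obtain ⟨S, hSc, hDS⟩ := hk_mem
    obtain ⟨T, hT, hDT⟩ := exists_lower θ k j hj ⟨S, hSc, hDS⟩
    exact ⟨T, hT, hDT⟩
  · -- edges
    intro S hS T hT
    constructor
    · rintro ⟨x, hx, y, hy, hr⟩
      have hadj : Adj n S T := ⟨x, hx, y, hy, hr⟩
      exact ⟨D_le_of_adj θ hT hS (adj_symm hadj), D_le_of_adj θ hS hT hadj⟩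
    · rintro ⟨h1, h2⟩
      have hadj : Adj n S T := by
        rcases Nat.lt_trichotomy (D θ S) (D θ T) with h | h | h
        · have he : D θ T = D θ S + 1 := by omega
          obtain ⟨U, hU, hUT, hDU⟩ := pred_class θ hT he
          have : U = S := uniq θ (D θ S) U S hU hS hDU rfl
          rwa [this] at hUT
        · have : S = T := uniq θ (D θ T) S T hS hT h rfl
          subst this
          obtain ⟨a, ha, rfl⟩ := hS
          exact adj_refl θ ha
        · have he : D θ S = D θ T + 1 := by omega
          obtain ⟨U, hU, hUS, hDU⟩ := pred_class θ hS he
          have : U = T := uniq θ (D θ T) U T hU hT hDU rfl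
          rw [this] at hUS
          exact adj_symm hUS
      exact hadj
end

section
/- Let θ be a congruence of the line L_n. If a θ b and a < b, then there exists x ∈ [a, b) such that the class x/θ has at most 2 successors in the quotient frame, i.e., v(x/θ) ≤ 2. -/
lemma cls_eq {n : ℕ} (θ : LineCong n) {x y : ℕ} (h : θ.rel x y) : cls θ x = cls θ y := by
  ext z
  exact ⟨fun hz => θ.trans (θ.symm h) hz, fun hz => θ.trans h hz⟩

lemma succ_subset {n : ℕ} (θ : LineCong n) (x : ℕ) :
    {S : Set ℕ | ∃ y, qrel θ x y ∧ S = cls θ y} ⊆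
      {cls θ (x-1), cls θ x, cls θ (x+1)} := by
  rintro S ⟨y, ⟨u, y', hux, hy'y, hline⟩, rfl⟩
  obtain ⟨z, hz, hzy'⟩ := θ.bisim (θ.symm hux) hline
  have hzy : θ.rel z y := θ.trans hzy' hy'y
  have hSz : cls θ y = cls θ z := (cls_eq θ hzy).symm
  obtain ⟨_, _, h1, h2⟩ := hz
  simp only [Set.mem_insert_iff, Set.mem_singleton_iff]
  rcases (show z = x - 1 ∨ z = x ∨ z = x + 1 by omega) with hc | hc | hc <;>
    rw [hSz, hc] <;> tauto

lemma vq_le_two {n : ℕ} (θ : LineCong n) (x : ℕ)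
    (h : cls θ (x+1) = cls θ x ∨ cls θ (x+1) = cls θ (x-1)) : vq θ x ≤ 2 := by
  have hsub : {S : Set ℕ | ∃ y, qrel θ x y ∧ S = cls θ y} ⊆
      {cls θ (x-1), cls θ x} := by
    intro S hS
    have h3 := succ_subset θ x hS
    simp only [Set.mem_insert_iff, Set.mem_singleton_iff] at h3 ⊢
    rcases h3 with h3 | h3 | h3 <;> rcases h with h | h <;> simp_all
  have hfin : ({cls θ (x-1), cls θ x} : Set (Set ℕ)).Finite :=
    (Set.finite_singleton _).insert _
  refine le_trans (Set.ncard_le_ncard hsub hfin) ?_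
  refine le_trans (Set.ncard_insert_le _ _) ?_
  simp [Set.ncard_singleton]

lemma vq_rest {n : ℕ} (θ : LineCong n) {x : ℕ} (h : θ.rel x (x+1)) : vq θ x ≤ 2 :=
  vq_le_two θ x (Or.inl (cls_eq θ h).symm)

lemma vq_turn {n : ℕ} (θ : LineCong n) {x : ℕ} (h : θ.rel (x-1) (x+1)) : vq θ x ≤ 2 :=
  vq_le_two θ x (Or.inr (cls_eq θ h).symm)

lemma fold_exists {n : ℕ} (θ : LineCong n) :
    ∀ M a b, 2*(b-a) + (n-b) ≤ M → θ.rel a b → a < b →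
    ∃ x, a ≤ x ∧ x < b ∧ (θ.rel x (x+1) ∨ θ.rel (x-1) (x+1)) := by
  intro M
  induction M with
  | zero => intro a b hM hab h; exfalso; omega
  | succ M ih =>
    intro a b hM hab h
    have ha : a ≤ n := (θ.dom hab).1
    have hb : b ≤ n := (θ.dom hab).2
    by_cases h1 : b = a + 1
    · exact ⟨a, le_refl a, by omega, Or.inl (h1 ▸ hab)⟩
    by_cases h2 : b = a + 2
    · refine ⟨a+1, by omega, by omega, Or.inr ?_⟩
      simpa using (h2 ▸ hab)
    have hb3 : a + 3 ≤ b := by omega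
    have hlr : lineR n a (a+1) := ⟨ha, by omega, by omega, by omega⟩
    obtain ⟨y', hy', hrel⟩ := θ.bisim (θ.symm hab) hlr
    obtain ⟨_, hy'n, hbl, hbu⟩ := hy'
    rcases (show y' + 1 = b ∨ y' = b ∨ y' = b + 1 by omega) with hc | hc | hc
    · have h5 : θ.rel (a+1) y' := θ.symm hrel
      obtain ⟨x, hx1, hx2, hx3⟩ := ih (a+1) y' (by omega) h5 (by omega)
      exact ⟨x, by omega, by omega, hx3⟩
    · subst hc
      have h5 : θ.rel a (a+1) := θ.trans hab hrel
      exact ⟨a, le_refl a, by omega, Or.inl h5⟩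
    · subst hc
      have h6 : θ.rel (a+1) (b+1) := θ.symm hrel
      obtain ⟨x, hx1, hx2, hx3⟩ := ih (a+1) (b+1) (by omega) h6 (by omega)
      by_cases hxb : x < b
      · exact ⟨x, by omega, hxb, hx3⟩
      · have hxeq : x = b := by omega
        subst hxeq
        rcases hx3 with hrest | hturn
        · have h7 : θ.rel (a+1) x := θ.trans h6 (θ.symm hrest)
          obtain ⟨x', hx1', hx2', hx3'⟩ := ih (a+1) x (by omega) h7 (by omega)
          exact ⟨x', by omega, by omega, hx3'⟩
        · have h8 : θ.rel (a+1) (x-1) := θ.trans h6 (θ.symm hturn)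
          obtain ⟨x', hx1', hx2', hx3'⟩ := ih (a+1) (x-1) (by omega) h8 (by omega)
          exact ⟨x', by omega, by omega, hx3'⟩

/-- If `a θ b` with `a < b`, then some `x ∈ [a,b)` has `v(x/θ) ≤ 2`. -/
theorem stmt_4 (n : ℕ) (θ : LineCong n) (a b : ℕ) (hab : θ.rel a b) (h : a < b) :
    ∃ x, a ≤ x ∧ x < b ∧ vq θ x ≤ 2 := by
  obtain ⟨x, hx1, hx2, hx3⟩ := fold_exists θ (2*(b-a) + (n-b)) a b (le_refl _) hab h
  refine ⟨x, hx1, hx2, ?_⟩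
  rcases hx3 with h' | h'
  · exact vq_rest θ h'
  · exact vq_turn θ h'
end

section
/- Let θ be a nontrivial congruence of L_n and let k = min{x ∈ [1,n] : v(x/θ) = 2}. Then L_n/θ is isomorphic to L_k, and 0/θ, 1/θ, ..., k/θ are exactly all the equivalence classes of θ. -/
/-!
Bisimulation forces `θ` to respect the path structure of `L_n`: if `x/θ` contains all neighbours
of `x`, then it spreads along the path and `θ` is trivial. Hence for nontrivial `θ` every inner
class has two or three neighbouring classes, and below the first point `k ≥ 1` with exactly two
neighbours the classes `x - 1, x, x + 1` are pairwise distinct. An induction on `b ≤ k` then shows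
that `0, …, k` lie in distinct classes with no `R_θ`-shortcuts, while at `k` the line folds back:
`(k + 1)/θ` is `(k - 1)/θ` or `k/θ`, so walking along `L_n` never leaves the classes of `0, …, k`.
-/

lemma lineR.symm {n x y : ℕ} (h : lineR n x y) : lineR n y x :=
  ⟨h.2.1, h.1, h.2.2.2, h.2.2.1⟩

lemma lineR_induction {n x : ℕ} {P : ℕ → Prop} (hx : x ≤ n) (hPx : P x)
    (hstep : ∀ m m', P m → lineR n m m' → P m') {m : ℕ} (hm : m ≤ n) : P m := by
  have hP0 : P 0 := by
    have hdown : ∀ d ≤ x, P (x - d) := by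
      intro d
      induction d with
      | zero => simpa using hPx
      | succ d ih =>
        intro hd
        exact hstep _ _ (ih (by omega)) ⟨by omega, by omega, by omega, by omega⟩
    simpa using hdown x le_rfl
  induction m with
  | zero => exact hP0
  | succ m ih => exact hstep _ _ (ih (by omega)) ⟨by omega, hm, by omega, by omega⟩

lemma Set.pairwise_ne_of_ncard_triple_ne_two {α : Type*} {a b c : α}
    (h : ({a, b, c} : Set α).ncard ≠ 2) (hne : ¬(a = b ∧ b = c)) : a ≠ b ∧ b ≠ c ∧ a ≠ c := by
  refine ⟨?_, ?_, ?_⟩ <;> rintro rfl <;> simp_all [Ne.symm]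

namespace LineCong

variable {n : ℕ} (θ : LineCong n)

lemma cls_eq_of_rel {x y : ℕ} (h : θ.rel x y) : cls θ x = cls θ y :=
  Set.ext fun _ => ⟨θ.trans (θ.symm h), θ.trans h⟩

lemma cls_eq_iff {x y : ℕ} (hx : x ≤ n) : cls θ x = cls θ y ↔ θ.rel x y :=
  ⟨fun h => θ.symm (h ▸ θ.refl x hx : x ∈ cls θ y), θ.cls_eq_of_rel⟩

lemma qrel_iff {x y : ℕ} (hx : x ≤ n) : qrel θ x y ↔ ∃ z, lineR n x z ∧ θ.rel z y := by
  constructor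
  · rintro ⟨x', y', hx', hy', hxy⟩
    obtain ⟨z, hxz, hzy⟩ := θ.bisim (θ.symm hx') hxy
    exact ⟨z, hxz, θ.trans hzy hy'⟩
  · rintro ⟨z, hxz, hzy⟩
    exact ⟨x, z, θ.refl x hx, hzy, hxz⟩

lemma qrel_comm {x y : ℕ} : qrel θ x y ↔ qrel θ y x :=
  ⟨fun ⟨x', y', hx, hy, hxy⟩ => ⟨y', x', hy, hx, hxy.symm⟩,
    fun ⟨y', x', hy, hx, hyx⟩ => ⟨x', y', hx, hy, hyx.symm⟩⟩

lemma exists_mem_cls_lineR_iff_qrel (i j : ℕ) :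
    (∃ x ∈ cls θ i, ∃ y ∈ cls θ j, lineR n x y) ↔ qrel θ i j :=
  ⟨fun ⟨x, hx, y, hy, hxy⟩ => ⟨x, y, θ.symm hx, θ.symm hy, hxy⟩,
    fun ⟨x, y, hx, hy, hxy⟩ => ⟨x, θ.symm hx, y, θ.symm hy, hxy⟩⟩

lemma trivialCong_of_forall_lineR_rel {x : ℕ} (hx : x ≤ n)
    (h : ∀ z, lineR n x z → θ.rel x z) : TrivialCong θ := by
  have hall : ∀ m ≤ n, θ.rel x m := fun m hm =>
    lineR_induction (P := θ.rel x) hx (θ.refl x hx) (fun m m' hxm hmm' => by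
      obtain ⟨z, hxz, hzm'⟩ := θ.bisim hxm hmm'
      exact θ.trans (h z hxz) hzm') hm
  exact fun a b ha hb => θ.trans (θ.symm (hall a ha)) (hall b hb)

lemma not_rel_zero_one (hnt : ¬TrivialCong θ) : ¬θ.rel 0 1 := fun h01 =>
  hnt <| θ.trivialCong_of_forall_lineR_rel (Nat.zero_le n) fun z hz => by
    obtain rfl | rfl : z = 0 ∨ z = 1 := by obtain ⟨-, -, -, h⟩ := hz; omega
    exacts [θ.refl 0 (Nat.zero_le n), h01]

lemma vq_succ_eq_ncard {x : ℕ} (hx : x + 2 ≤ n) :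
    vq θ (x + 1) = ({cls θ x, cls θ (x + 1), cls θ (x + 2)} : Set (Set ℕ)).ncard := by
  unfold vq
  congr 1
  ext S
  simp only [Set.mem_ofPred_eq, Set.mem_insert_iff, Set.mem_singleton_iff,
    θ.qrel_iff (show x + 1 ≤ n by omega)]
  constructor
  · rintro ⟨y, ⟨z, hz, hzy⟩, rfl⟩
    rw [← θ.cls_eq_of_rel hzy]
    obtain rfl | rfl | rfl : z = x ∨ z = x + 1 ∨ z = x + 2 := by
      obtain ⟨-, -, h₁, h₂⟩ := hz; omega
    all_goals simp
  · have hnbr : ∀ z, x ≤ z → z ≤ x + 2 → ∃ y, (∃ w, lineR n (x + 1) w ∧ θ.rel w y) ∧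
        cls θ z = cls θ y := fun z h₁ h₂ =>
      ⟨z, ⟨z, ⟨by omega, by omega, by omega, by omega⟩, θ.refl z (by omega)⟩, rfl⟩
    rintro (rfl | rfl | rfl) <;> exact hnbr _ (by omega) (by omega)

lemma exists_iso_line_of_classes_eq_image {k : ℕ} (himage : classes θ = cls θ '' Set.Iic k)
    (hinj : Set.InjOn (cls θ) (Set.Iic k))
    (hadj : ∀ i ≤ k, ∀ j ≤ k, qrel θ i j ↔ i ≤ j + 1 ∧ j ≤ i + 1) :
    ∃ f : Set ℕ → ℕ, Set.BijOn f (classes θ) (Set.Iic k) ∧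
      ∀ S ∈ classes θ, ∀ T ∈ classes θ,
        ((∃ x ∈ S, ∃ y ∈ T, lineR n x y) ↔ (f S ≤ f T + 1 ∧ f T ≤ f S + 1)) := by
  have hbij : Set.BijOn (cls θ) (Set.Iic k) (classes θ) := himage ▸ hinj.bijOn_image
  have hinv := hbij.invOn_invFunOn
  refine ⟨Function.invFunOn (cls θ) (Set.Iic k), hbij.symm hinv.symm, ?_⟩
  rw [himage]
  rintro _ ⟨i, hi, rfl⟩ _ ⟨j, hj, rfl⟩
  rw [θ.exists_mem_cls_lineR_iff_qrel, hinv.1 hi, hinv.1 hj, hadj i hi j hj]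

lemma cls_pairwise_ne_of_vq_ne_two (hnt : ¬TrivialCong θ) {x : ℕ} (hx : x + 2 ≤ n)
    (hv : vq θ (x + 1) ≠ 2) :
    cls θ x ≠ cls θ (x + 1) ∧ cls θ (x + 1) ≠ cls θ (x + 2) ∧ cls θ x ≠ cls θ (x + 2) := by
  refine Set.pairwise_ne_of_ncard_triple_ne_two (θ.vq_succ_eq_ncard hx ▸ hv) ?_
  rintro ⟨h₁, h₂⟩
  refine hnt (θ.trivialCong_of_forall_lineR_rel (x := x + 1) (by omega) fun z hz => ?_)
  obtain rfl | rfl | rfl : z = x ∨ z = x + 1 ∨ z = x + 2 := by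
    obtain ⟨-, -, h₁, h₂⟩ := hz; omega
  · exact θ.symm ((θ.cls_eq_iff (by omega)).1 h₁)
  · exact θ.refl _ (by omega)
  · exact (θ.cls_eq_iff (by omega)).1 h₂

abbrev IsFirstFold (k : ℕ) : Prop := IsLeast {x | 1 ≤ x ∧ x ≤ n ∧ vq θ x = 2} k

section FirstFold

variable {k : ℕ}

lemma cls_pairwise_ne_of_lt_first_fold (hnt : ¬TrivialCong θ)
    (hk : θ.IsFirstFold k) {x : ℕ} (hx : x + 1 < k) :
    cls θ x ≠ cls θ (x + 1) ∧ cls θ (x + 1) ≠ cls θ (x + 2) ∧ cls θ x ≠ cls θ (x + 2) := by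
  have hkn := hk.1.2.1
  exact θ.cls_pairwise_ne_of_vq_ne_two hnt (by omega) fun hv =>
    absurd (hk.2 ⟨by omega, by omega, hv⟩) (by omega)

lemma not_rel_succ_of_lt_first_fold (hnt : ¬TrivialCong θ)
    (hk : θ.IsFirstFold k) {x : ℕ} (hx : x < k) :
    ¬θ.rel x (x + 1) := by
  obtain _ | x := x
  · exact θ.not_rel_zero_one hnt
  · exact fun h => (θ.cls_pairwise_ne_of_lt_first_fold hnt hk hx).2.1 (θ.cls_eq_of_rel h)

lemma not_rel_of_lt_of_le_first_fold (hnt : ¬TrivialCong θ)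
    (hk : θ.IsFirstFold k) {a b : ℕ} (hab : a < b) (hb : b ≤ k) :
    ¬θ.rel a b := by
  induction b using Nat.strong_induction_on generalizing a with
  | _ b ih =>
  intro hrel
  obtain rfl | hab' : b = a + 1 ∨ a + 1 < b := by omega
  · exact θ.not_rel_succ_of_lt_first_fold hnt hk hb hrel
  -- bisimulation carries the edge `b R (b - 1)` over to an edge `a R z` with `z θ (b - 1)`
  have hbn := (θ.dom hrel).2
  obtain ⟨z, haz, hzb⟩ := θ.bisim hrel
    (show lineR n b (b - 1) from ⟨hbn, by omega, by omega, by omega⟩)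
  obtain ⟨-, -, -, hza⟩ := haz
  obtain hz | rfl : z < b - 1 ∨ z = b - 1 := by omega
  · exact ih (b - 1) (by omega) hz (by omega) hzb
  · obtain rfl : b = a + 2 := by omega
    exact (θ.cls_pairwise_ne_of_lt_first_fold hnt hk (x := a) (by omega)).2.2
      (θ.cls_eq_of_rel hrel)

lemma qrel_iff_of_le_first_fold (hnt : ¬TrivialCong θ)
    (hk : θ.IsFirstFold k) {i j : ℕ} (hi : i ≤ k) (hj : j ≤ k) :
    qrel θ i j ↔ i ≤ j + 1 ∧ j ≤ i + 1 := by
  have hkn := hk.1.2.1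
  have hfar : ∀ a b, a + 2 ≤ b → b ≤ k → ¬qrel θ a b := fun a b hab hb hq => by
    obtain ⟨z, ⟨-, -, -, hza⟩, hzb⟩ := (θ.qrel_iff (by omega)).1 hq
    exact θ.not_rel_of_lt_of_le_first_fold hnt hk (by omega) hb hzb
  refine ⟨fun hq => ⟨?_, ?_⟩, fun h => ⟨i, j, θ.refl i (by omega), θ.refl j (by omega),
    by omega, by omega, h⟩⟩
  · by_contra! h
    exact hfar j i (by omega) hi (θ.qrel_comm.1 hq)
  · by_contra! h
    exact hfar i j (by omega) hj hq

lemma exists_rel_succ_first_fold (hnt : ¬TrivialCong θ)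
    (hk : θ.IsFirstFold k) (hkn : k < n) :
    ∃ m ≤ k, θ.rel m (k + 1) := by
  obtain ⟨hk1, -, hv⟩ := hk.1
  obtain ⟨k, rfl⟩ : ∃ k', k = k' + 1 := ⟨k - 1, by omega⟩
  have hne : cls θ k ≠ cls θ (k + 1) := fun h =>
    θ.not_rel_succ_of_lt_first_fold hnt hk (by omega) ((θ.cls_eq_iff (by omega)).1 h)
  by_contra! hfold
  have hthree : ({cls θ k, cls θ (k + 1), cls θ (k + 2)} : Set (Set ℕ)).ncard = 3 :=
    Set.ncard_eq_three.2 ⟨_, _, _, hne,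
      fun h => hfold k (by omega) ((θ.cls_eq_iff (by omega)).1 h),
      fun h => hfold (k + 1) le_rfl ((θ.cls_eq_iff (by omega)).1 h), rfl⟩
  rw [θ.vq_succ_eq_ncard (by omega)] at hv
  omega

lemma exists_rel_of_le_first_fold (hnt : ¬TrivialCong θ)
    (hk : θ.IsFirstFold k) {x : ℕ} (hx : x ≤ n) :
    ∃ j ≤ k, θ.rel j x := by
  refine lineR_induction (P := fun x => ∃ j ≤ k, θ.rel j x) (Nat.zero_le n)
    ⟨0, Nat.zero_le k, θ.refl 0 (Nat.zero_le n)⟩ ?_ hx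
  rintro m m' ⟨j, hj, hjm⟩ hmm'
  obtain ⟨z, ⟨-, hzn, -, hzj⟩, hzm'⟩ := θ.bisim hjm hmm'
  by_cases hzk : z ≤ k
  · exact ⟨z, hzk, hzm'⟩
  · obtain rfl : z = k + 1 := by omega
    obtain ⟨m₀, hm₀, hm₀k⟩ := θ.exists_rel_succ_first_fold hnt hk (by omega)
    exact ⟨m₀, hm₀, θ.trans hm₀k hzm'⟩

lemma classes_eq_image_first_fold (hnt : ¬TrivialCong θ)
    (hk : θ.IsFirstFold k) :
    classes θ = cls θ '' Set.Iic k := by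
  ext S
  constructor
  · rintro ⟨x, hx, rfl⟩
    obtain ⟨j, hj, hjx⟩ := θ.exists_rel_of_le_first_fold hnt hk hx
    exact ⟨j, hj, θ.cls_eq_of_rel hjx⟩
  · rintro ⟨j, hj, rfl⟩
    exact ⟨j, le_trans hj hk.1.2.1, rfl⟩

lemma cls_injOn_first_fold (hnt : ¬TrivialCong θ)
    (hk : θ.IsFirstFold k) :
    Set.InjOn (cls θ) (Set.Iic k) := by
  intro i hi j hj h
  have hkn := hk.1.2.1
  have hij := (θ.cls_eq_iff (le_trans hi hkn)).1 h
  rcases lt_trichotomy i j with hlt | heq | hgt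
  · exact absurd hij (θ.not_rel_of_lt_of_le_first_fold hnt hk hlt hj)
  · exact heq
  · exact absurd (θ.symm hij) (θ.not_rel_of_lt_of_le_first_fold hnt hk hgt hi)

end FirstFold

end LineCong

/-- For nontrivial `θ` with `k = min {x ∈ [1,n] : v(x/θ) = 2}`, the quotient is isomorphic to
`L_k` and `0/θ, …, k/θ` are exactly all the classes. -/
theorem stmt_5 (n : ℕ) (θ : LineCong n) (hnt : ¬ TrivialCong θ) (k : ℕ)
    (hk : IsLeast {x | 1 ≤ x ∧ x ≤ n ∧ vq θ x = 2} k) :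
    (∃ f : Set ℕ → ℕ,
      Set.BijOn f (classes θ) (Set.Iic k) ∧
      ∀ S ∈ classes θ, ∀ T ∈ classes θ,
        ((∃ x ∈ S, ∃ y ∈ T, lineR n x y) ↔ (f S ≤ f T + 1 ∧ f T ≤ f S + 1))) ∧
    (∀ S ∈ classes θ, ∃ j ≤ k, S = cls θ j) ∧
    (∀ i ≤ k, ∀ j ≤ k, cls θ i = cls θ j → i = j) := by
  have himage := θ.classes_eq_image_first_fold hnt hk
  have hinj := θ.cls_injOn_first_fold hnt hk
  refine ⟨θ.exists_iso_line_of_classes_eq_image himage hinj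
    fun i hi j hj => θ.qrel_iff_of_le_first_fold hnt hk hi hj, ?_, fun i hi j hj => hinj hi hj⟩
  rw [himage]
  rintro _ ⟨j, hj, rfl⟩
  exact ⟨j, hj, rfl⟩
end

section
/- Every nontrivial congruence θ of the line L_n equals the relation ⟨k; r̄⟩ restricted to {0,...,n}, where k is the step of θ (i.e., |L_n/θ| − 1) and r̄ enumerates in increasing order the set {x : x θ x+1}. -/
/-!
Let `θ.level x` be the distance from `0/θ` to `x/θ` in the quotient frame. The bisimulation
property forces all points of one level to be `θ`-related, so `x θ y ↔ level x = level y`, and the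
levels are exactly `0, …, k`. Walking along the line, the level stays put exactly at the rests,
moves by one otherwise, and can turn around only at `0` and `k`, since a point of an interior level
needs neighbours both one level below and one level above. Hence `level x` is the triangle wave of
period `2k` evaluated at the number `x - Δ(x)` of non-rest steps below `x`, and two values of this
wave agree iff the arguments are congruent up to sign modulo `2k`.
-/

def triWave (k t : ℕ) : ℕ := min (t % (2 * k)) (2 * k - t % (2 * k))

lemma add_one_mod_two_mul (k t : ℕ) :
    (t + 1) % (2 * k) = if 2 * k ≤ t % (2 * k) + 1 then t % (2 * k) + 1 - 2 * k
      else t % (2 * k) + 1 := by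
  rw [Nat.add_mod_eq_ite, Nat.one_mod_eq_one.mpr (by omega)]

lemma triWave_zero (k : ℕ) : triWave k 0 = 0 := by simp [triWave]

lemma triWave_succ_of_eq_zero {k t : ℕ} (hk : 0 < k) (h : triWave k t = 0) :
    triWave k (t + 1) = 1 := by
  have := Nat.mod_lt t (show 0 < 2 * k by omega)
  unfold triWave at *
  rw [add_one_mod_two_mul k t]
  split_ifs <;> omega

lemma triWave_succ_of_eq_self {k t : ℕ} (h : triWave k t = k) : triWave k (t + 1) = k - 1 := by
  rcases Nat.eq_zero_or_pos k with rfl | hk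
  · simp [triWave]
  have := Nat.mod_lt t (show 0 < 2 * k by omega)
  unfold triWave at *
  rw [add_one_mod_two_mul k t]
  split_ifs <;> omega

lemma triWave_add_triWave_add_two {k t : ℕ} (h0 : 0 < triWave k (t + 1))
    (hk : triWave k (t + 1) < k) : triWave k t + triWave k (t + 2) = 2 * triWave k (t + 1) := by
  have := Nat.mod_lt t (show 0 < 2 * k by omega)
  have := Nat.mod_lt (t + 1) (show 0 < 2 * k by omega)
  unfold triWave at *
  rw [add_one_mod_two_mul k (t + 1), add_one_mod_two_mul k t] at *
  split_ifs at * <;> omega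

lemma triWave_eq_triWave_iff {k : ℕ} (hk : 0 < k) (s t : ℕ) :
    triWave k s = triWave k t ↔ (s : ℤ) ≡ t [ZMOD 2 * k] ∨ (s : ℤ) ≡ -t [ZMOD 2 * k] := by
  have hcast : (2 * k : ℤ) = ((2 * k : ℕ) : ℤ) := by push_cast; ring
  have hneg : (s : ℤ) ≡ -t [ZMOD 2 * k] ↔ (s + t) % (2 * k) = 0 := by
    rw [Int.modEq_iff_dvd, show -(t : ℤ) - s = -((s + t : ℕ) : ℤ) by push_cast; ring, dvd_neg,
      hcast, Int.natCast_dvd_natCast, Nat.dvd_iff_mod_eq_zero]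
  rw [hneg, hcast, Int.natCast_modEq_iff, Nat.ModEq, Nat.add_mod_eq_ite]
  have := Nat.mod_lt s (show 0 < 2 * k by omega)
  have := Nat.mod_lt t (show 0 < 2 * k by omega)
  unfold triWave
  split_ifs <;> omega

/-- `hmid` says that the walk `d` can turn around only at `0` and `k`. -/
theorem eq_triWave_of_reflecting_walk {k N : ℕ} {d f : ℕ → ℕ} (hd0 : d 0 = 0) (hf0 : f 0 = 0)
    (hdk : ∀ x ≤ N, d x ≤ k) (hstep : ∀ x < N, d (x + 1) ≤ d x + 1 ∧ d x ≤ d (x + 1) + 1)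
    (hf : ∀ x < N, f (x + 1) = f x + if d (x + 1) = d x then 0 else 1)
    (hmid : ∀ x, x + 2 ≤ N → 0 < d (x + 1) → d (x + 1) < k → d x + d (x + 2) = 2 * d (x + 1)) :
    ∀ x ≤ N, d x = triWave k (f x) := by
  intro x
  induction x using Nat.strong_induction_on with
  | _ x ih =>
  rcases x with _ | x
  · intro
    rw [hd0, hf0, triWave_zero]
  intro hx
  have ihx := ih x (by omega) (by omega)
  by_cases hpause : d (x + 1) = d x
  · rw [hf x hx, if_pos hpause, add_zero, hpause, ihx]
  rw [hf x hx, if_neg hpause]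
  have := hdk x (by omega)
  have := hdk (x + 1) hx
  have := hstep x hx
  by_cases hzero : d x = 0
  · rw [triWave_succ_of_eq_zero (by omega) (ihx ▸ hzero)]
    omega
  by_cases htop : d x = k
  · rw [triWave_succ_of_eq_self (ihx ▸ htop)]
    omega
  obtain ⟨y, rfl⟩ := Nat.exists_eq_add_one_of_ne_zero fun h => hzero (h ▸ hd0)
  rw [show y + 1 + 1 = y + 2 from rfl] at *
  have hmidy := hmid y hx (by omega) (by omega)
  have hfy := hf y (by omega)
  rw [if_neg (by omega)] at hfy
  rw [hfy] at ihx ⊢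
  rw [show f y + 1 + 1 = f y + 2 from rfl]
  have := triWave_add_triWave_add_two (k := k) (t := f y) (by omega) (by omega)
  have := ih y (by omega) (by omega)
  omega

open Finset in
lemma natCast_sub_deltaFn {m : ℕ} {r : Fin m → ℕ} (hr : StrictMono r) (x : ℕ) :
    (x : ℤ) - deltaFn m r x = #(range x \ univ.image r) := by
  have hfilter : (univ.filter fun i => (r i : ℤ) < x).map ⟨r, hr.injective⟩ =
      univ.image r ∩ range x := by
    ext y
    simp only [mem_map, mem_filter, mem_univ, true_and, Function.Embedding.coeFn_mk, mem_inter,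
      mem_image, mem_range]
    constructor
    · rintro ⟨i, hi, rfl⟩
      exact ⟨⟨i, rfl⟩, by exact_mod_cast hi⟩
    · rintro ⟨⟨i, rfl⟩, hi⟩
      exact ⟨i, by exact_mod_cast hi, rfl⟩
  rw [deltaFn, ← card_map, hfilter, card_sdiff, Nat.cast_sub (card_le_card inter_subset_right),
    card_range]

open Finset in
lemma card_range_succ_sdiff (s : Finset ℕ) (x : ℕ) :
    #(range (x + 1) \ s) = #(range x \ s) + if x ∈ s then 0 else 1 := by
  rw [range_add_one]
  split_ifs with h
  · rw [insert_sdiff_of_mem _ h, add_zero]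
  · rw [insert_sdiff_of_notMem _ h, card_insert_of_notMem (by simp)]

lemma lineR_add_one {n x : ℕ} (h : x + 1 ≤ n) : lineR n x (x + 1) :=
  ⟨by omega, h, by omega, by omega⟩

lemma eq_of_lineR_of_level_eq_add_one {n p a b : ℕ} {d : ℕ → ℕ} (ha : lineR n p a)
    (hb : lineR n p b) (hda : d a = d p + 1) (hdb : d b = d p + 1)
    (hp : p = 0 ∨ ∃ c, lineR n p c ∧ d c + 1 = d p) : a = b := by
  have hap : a ≠ p := by rintro rfl; omega
  have hbp : b ≠ p := by rintro rfl; omega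
  unfold lineR at ha hb
  rcases hp with rfl | ⟨c, hc, hdc⟩
  · omega
  have hcp : c ≠ p := by rintro rfl; omega
  have hca : c ≠ a := by rintro rfl; omega
  have hcb : c ≠ b := by rintro rfl; omega
  unfold lineR at hc
  omega

namespace LineCong

variable {n : ℕ} (θ : LineCong n)

lemma qrel_symm {x y : ℕ} (h : qrel θ x y) : qrel θ y x := by
  obtain ⟨a, b, ha, hb, hab⟩ := h
  exact ⟨b, a, hb, ha, hab.symm⟩

lemma qrel_of_rel_right {x y z : ℕ} (h : qrel θ x y) (hyz : θ.rel y z) : qrel θ x z := by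
  obtain ⟨a, b, ha, hb, hab⟩ := h
  exact ⟨a, b, ha, θ.trans hb hyz, hab⟩

lemma qrel_of_lineR {x y : ℕ} (h : lineR n x y) : qrel θ x y :=
  ⟨x, y, θ.refl x h.1, θ.refl y h.2.1, h⟩

lemma exists_lineR_rel_of_qrel {u v u' : ℕ} (h : qrel θ u v) (hu : θ.rel u u') :
    ∃ w, lineR n u' w ∧ θ.rel w v := by
  obtain ⟨a, b, ha, hb, hab⟩ := h
  obtain ⟨w, huw, hwb⟩ := θ.bisim (θ.trans (θ.symm hu) (θ.symm ha)) hab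
  exact ⟨w, huw, θ.trans hwb hb⟩

def Reach : ℕ → ℕ → Prop
  | 0, x => θ.rel 0 x
  | t + 1, x => ∃ z, Reach t z ∧ qrel θ z x

variable {θ} in
lemma Reach.le {t x : ℕ} (h : θ.Reach t x) : x ≤ n := by
  cases t with
  | zero => exact (θ.dom h).2
  | succ t =>
    obtain ⟨z, -, a, b, -, hb, -⟩ := h
    exact (θ.dom hb).2

variable {θ} in
lemma Reach.of_rel {t x y : ℕ} (h : θ.Reach t x) (hxy : θ.rel x y) : θ.Reach t y := by
  cases t with
  | zero => exact θ.trans h hxy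
  | succ t =>
    obtain ⟨z, hz, hzx⟩ := h
    exact ⟨z, hz, θ.qrel_of_rel_right hzx hxy⟩

lemma exists_reach {x : ℕ} (hx : x ≤ n) : ∃ t, θ.Reach t x := by
  induction x with
  | zero => exact ⟨0, θ.refl 0 hx⟩
  | succ x ih =>
    obtain ⟨t, ht⟩ := ih (by omega)
    exact ⟨t + 1, x, ht, θ.qrel_of_lineR (lineR_add_one hx)⟩

/-- The distance from `0/θ` to `x/θ` in the quotient frame (junk value `0` for `x > n`). -/
noncomputable def level (x : ℕ) : ℕ := sInf {t | θ.Reach t x}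

lemma reach_level {x : ℕ} (hx : x ≤ n) : θ.Reach (θ.level x) x :=
  Nat.sInf_mem (θ.exists_reach hx)

lemma level_le_of_reach {t x : ℕ} (h : θ.Reach t x) : θ.level x ≤ t :=
  Nat.sInf_le h

lemma level_zero : θ.level 0 = 0 :=
  Nat.eq_zero_of_le_zero (θ.level_le_of_reach (θ.refl 0 (Nat.zero_le n)))

lemma rel_zero_of_level_eq_zero {x : ℕ} (hx : x ≤ n) (h : θ.level x = 0) : θ.rel 0 x := by
  have := θ.reach_level hx
  rwa [h] at this

lemma level_eq_of_rel {x y : ℕ} (h : θ.rel x y) : θ.level x = θ.level y :=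
  le_antisymm (θ.level_le_of_reach ((θ.reach_level (θ.dom h).2).of_rel (θ.symm h)))
    (θ.level_le_of_reach ((θ.reach_level (θ.dom h).1).of_rel h))

lemma level_le_level_add_one {x y : ℕ} (h : lineR n x y) : θ.level y ≤ θ.level x + 1 :=
  θ.level_le_of_reach ⟨x, θ.reach_level h.1, θ.qrel_of_lineR h⟩

lemma exists_qrel_of_level_eq_add_one {x t : ℕ} (hx : x ≤ n) (h : θ.level x = t + 1) :
    ∃ v, v ≤ n ∧ θ.level v = t ∧ qrel θ v x := by
  obtain ⟨v, hv, hvx⟩ : θ.Reach (t + 1) x := h ▸ θ.reach_level hx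
  have h1 := θ.level_le_of_reach hv
  have h2 := θ.level_le_of_reach (t := θ.level v + 1) ⟨v, θ.reach_level hv.le, hvx⟩
  exact ⟨v, hv.le, by omega, hvx⟩

lemma exists_lineR_level_eq_of_level_eq_add_one {x t : ℕ} (hx : x ≤ n)
    (h : θ.level x = t + 1) : ∃ w, lineR n x w ∧ θ.level w = t := by
  obtain ⟨v, -, hvt, hvx⟩ := θ.exists_qrel_of_level_eq_add_one hx h
  obtain ⟨w, hxw, hwv⟩ := θ.exists_lineR_rel_of_qrel (θ.qrel_symm hvx) (θ.refl x hx)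
  exact ⟨w, hxw, by rw [θ.level_eq_of_rel hwv, hvt]⟩

/-- Induction on the level: the classes at level `t + 1` are neighbours of the single class at
level `t`, and a suitable point `p` of that class has only one neighbour one level up, because
`p = 0` or its other neighbour lies one level down. -/
lemma rel_of_level_eq : ∀ t {x y : ℕ}, x ≤ n → y ≤ n → θ.level x = t → θ.level y = t →
    θ.rel x y
  | 0, _, _, hx, hy, hdx, hdy =>
    θ.trans (θ.symm (θ.rel_zero_of_level_eq_zero hx hdx)) (θ.rel_zero_of_level_eq_zero hy hdy)
  | t + 1, x, y, hx, hy, hdx, hdy => by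
    obtain ⟨v, hv, hdv, hvx⟩ := θ.exists_qrel_of_level_eq_add_one hx hdx
    obtain ⟨w, hw, hdw, hwy⟩ := θ.exists_qrel_of_level_eq_add_one hy hdy
    have hvw := rel_of_level_eq t hv hw hdv hdw
    obtain ⟨p, hvp, hp⟩ : ∃ p, θ.rel v p ∧
        (p = 0 ∨ ∃ c, lineR n p c ∧ θ.level c + 1 = θ.level p) := by
      cases t with
      | zero => exact ⟨0, θ.symm (θ.rel_zero_of_level_eq_zero hv hdv), Or.inl rfl⟩
      | succ s =>
        obtain ⟨c, hvc, hdc⟩ := θ.exists_lineR_level_eq_of_level_eq_add_one hv hdv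
        exact ⟨v, θ.refl v hv, Or.inr ⟨c, hvc, by omega⟩⟩
    obtain ⟨a, hpa, hax⟩ := θ.exists_lineR_rel_of_qrel hvx hvp
    obtain ⟨b, hpb, hby⟩ := θ.exists_lineR_rel_of_qrel hwy (θ.trans (θ.symm hvw) hvp)
    have hdp : θ.level p = t := (θ.level_eq_of_rel hvp) ▸ hdv
    obtain rfl : a = b := eq_of_lineR_of_level_eq_add_one hpa hpb
      (by rw [θ.level_eq_of_rel hax, hdx, hdp]) (by rw [θ.level_eq_of_rel hby, hdy, hdp]) hp
    exact θ.trans (θ.symm hax) hby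

lemma rel_iff_level_eq {x y : ℕ} (hx : x ≤ n) (hy : y ≤ n) :
    θ.rel x y ↔ θ.level x = θ.level y :=
  ⟨θ.level_eq_of_rel, θ.rel_of_level_eq _ hx hy rfl ∘ Eq.symm⟩

lemma isLowerSet_level_image : IsLowerSet (θ.level '' Set.Iic n) := by
  intro a b hba
  induction a, hba using Nat.le_induction with
  | base => exact id
  | succ a _ ih =>
    rintro ⟨x, hx, hdx⟩
    obtain ⟨v, hv, hdv, -⟩ := θ.exists_qrel_of_level_eq_add_one hx hdx
    exact ih ⟨v, hv, hdv⟩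

lemma cls_eq_setOf_level_eq {x : ℕ} (hx : x ≤ n) :
    cls θ x = {y | y ≤ n ∧ θ.level y = θ.level x} := by
  ext y
  exact ⟨fun h => ⟨(θ.dom h).2, (θ.level_eq_of_rel h).symm⟩,
    fun h => (θ.rel_iff_level_eq hx h.1).2 h.2.symm⟩

lemma ncard_classes : (classes θ).ncard = (θ.level '' Set.Iic n).ncard := by
  have hclasses : classes θ =
      (fun j => {y | y ≤ n ∧ θ.level y = j}) '' (θ.level '' Set.Iic n) := by
    rw [Set.image_image]
    ext S
    constructor
    · rintro ⟨x, hx, rfl⟩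
      exact ⟨x, hx, (θ.cls_eq_setOf_level_eq hx).symm⟩
    · rintro ⟨x, hx, rfl⟩
      exact ⟨x, hx, (θ.cls_eq_setOf_level_eq hx).symm⟩
  rw [hclasses]
  refine Set.InjOn.ncard_image ?_
  rintro _ ⟨x, hx, rfl⟩ _ ⟨y, -, rfl⟩ h
  exact ((Set.ext_iff.1 h x).1 ⟨hx, rfl⟩).2

lemma level_image : θ.level '' Set.Iic n = Set.Iic (stepC θ) := by
  obtain huniv | ⟨a, ha⟩ := θ.isLowerSet_level_image.eq_univ_or_Iio
  · exact absurd (huniv ▸ (Set.finite_Iic n).image θ.level) Set.infinite_univ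
  have h0 : 0 ∈ θ.level '' Set.Iic n := ⟨0, Nat.zero_le n, θ.level_zero⟩
  rw [ha] at h0
  rw [ha, stepC, θ.ncard_classes, ha, Set.ncard_Iio_nat]
  ext j
  simp only [Set.mem_Iio, Set.mem_Iic, Set.mem_Iio] at h0 ⊢
  omega

lemma level_le_stepC {x : ℕ} (hx : x ≤ n) : θ.level x ≤ stepC θ := by
  have h : θ.level x ∈ θ.level '' Set.Iic n := Set.mem_image_of_mem _ hx
  rwa [θ.level_image] at h

lemma exists_lineR_level_eq_add_one {x : ℕ} (hx : x ≤ n) (h : θ.level x < stepC θ) :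
    ∃ w, lineR n x w ∧ θ.level w = θ.level x + 1 := by
  obtain ⟨y, hy, hdy⟩ : θ.level x + 1 ∈ θ.level '' Set.Iic n := θ.level_image ▸ h
  obtain ⟨v, hv, hdv, hvy⟩ := θ.exists_qrel_of_level_eq_add_one hy hdy
  obtain ⟨w, hxw, hwy⟩ := θ.exists_lineR_rel_of_qrel hvy (θ.rel_of_level_eq _ hv hx hdv rfl)
  exact ⟨w, hxw, by rw [θ.level_eq_of_rel hwy, hdy]⟩

/-- A point strictly between the two ends of the quotient has neighbours one level below and one
level above; on a line these must be its two neighbours, so the level moves on without turning. -/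
lemma level_add_level_add_two {x : ℕ} (hx : x + 2 ≤ n) (h0 : 0 < θ.level (x + 1))
    (hk : θ.level (x + 1) < stepC θ) :
    θ.level x + θ.level (x + 2) = 2 * θ.level (x + 1) := by
  obtain ⟨u, hu, hdu⟩ := θ.exists_lineR_level_eq_of_level_eq_add_one (x := x + 1)
    (t := θ.level (x + 1) - 1) (by omega) (by omega)
  obtain ⟨w, hw, hdw⟩ := θ.exists_lineR_level_eq_add_one (by omega) hk
  have hu1 : u ≠ x + 1 := by rintro rfl; omega
  have hw1 : w ≠ x + 1 := by rintro rfl; omega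
  have huw : u ≠ w := by rintro rfl; omega
  unfold lineR at hu hw
  obtain ⟨rfl, rfl⟩ | ⟨rfl, rfl⟩ : u = x ∧ w = x + 2 ∨ u = x + 2 ∧ w = x := by omega
  all_goals omega

open Finset in
theorem level_eq_triWave {m : ℕ} {r : Fin m → ℕ}
    (hrange : ∀ x : ℕ, (∃ i, r i = x) ↔ θ.rel x (x + 1)) {x : ℕ} (hx : x ≤ n) :
    θ.level x = triWave (stepC θ) #(range x \ univ.image r) := by
  refine eq_triWave_of_reflecting_walk (f := fun x => #(range x \ univ.image r)) θ.level_zero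
    (by simp) (fun x hx => θ.level_le_stepC hx)
    (fun x hx => ⟨θ.level_le_level_add_one (lineR_add_one hx),
      θ.level_le_level_add_one (lineR_add_one hx).symm⟩)
    (fun x hx => ?_) (fun x hx => θ.level_add_level_add_two hx) x hx
  rw [card_range_succ_sdiff]
  refine congrArg _ (if_congr ?_ rfl rfl)
  rw [mem_image]
  simp only [mem_univ, true_and]
  rw [hrange, θ.rel_iff_level_eq (by omega) hx, eq_comm]

lemma one_le_stepC (hnt : ¬ TrivialCong θ) : 1 ≤ stepC θ := by
  simp only [TrivialCong, not_forall] at hnt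
  obtain ⟨x, y, hx, hy, hxy⟩ := hnt
  rw [θ.rel_iff_level_eq hx hy] at hxy
  have := θ.level_le_stepC hx
  have := θ.level_le_stepC hy
  omega

end LineCong

/-- Every nontrivial congruence of `L_n` equals `⟨k; r̄⟩` restricted to `{0,…,n}`, where `k` is
its step and `r̄` enumerates the left parts of its rests in increasing order. -/
theorem stmt_7 (n : ℕ) (θ : LineCong n) (hnt : ¬ TrivialCong θ)
    (k : ℕ) (hk : k = stepC θ)
    (m : ℕ) (r : Fin m → ℕ) (hr : StrictMono r)
    (hrange : ∀ x : ℕ, (∃ i, r i = x) ↔ θ.rel x (x + 1)) :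
    ∀ x y : ℕ, x ≤ n → y ≤ n → (θ.rel x y ↔ conr k m r (x : ℤ) (y : ℤ)) := by
  intro x y hx hy
  have hk0 : 0 < k := hk ▸ θ.one_le_stepC hnt
  rw [θ.rel_iff_level_eq hx hy, θ.level_eq_triWave hrange hx, θ.level_eq_triWave hrange hy, ← hk,
    triWave_eq_triWave_iff hk0, ← natCast_sub_deltaFn hr, ← natCast_sub_deltaFn hr]
  rfl
end

section
/- Let n ≥ 2 and let θ be a congruence of L_n. The following are equivalent: (1) θ is trivial; (2) there exists x with x−1 θ x θ x+1; (3) 0 θ 1; (4) n−1 θ n. -/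
lemma lemA {n : ℕ} (θ : LineCong n) (h01 : θ.rel 0 1) :
    ∀ k, k ≤ n → θ.rel 0 k := by
  intro k
  induction k with
  | zero => intro _; exact θ.refl 0 (Nat.zero_le n)
  | succ k ih =>
    intro hk
    have h0k : θ.rel 0 k := ih (by omega)
    have hline : lineR n k (k + 1) := ⟨by omega, hk, by omega, by omega⟩
    obtain ⟨y', hy'line, hy'rel⟩ := θ.bisim h0k hline
    have hy' : y' = 0 ∨ y' = 1 := by
      obtain ⟨_, _, h1, h2⟩ := hy'line; omega
    have h0y' : θ.rel 0 y' := by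
      rcases hy' with h | h
      · subst h; exact θ.refl 0 (Nat.zero_le n)
      · subst h; exact h01
    exact θ.trans h0y' hy'rel

lemma lemA' {n : ℕ} (θ : LineCong n) (h01 : θ.rel 0 1) : TrivialCong θ := by
  intro x y hx hy
  exact θ.trans (θ.symm (lemA θ h01 x hx)) (lemA θ h01 y hy)

lemma lemB {n : ℕ} (θ : LineCong n) (hn : 1 ≤ n) (h : θ.rel (n - 1) n) :
    TrivialCong θ := by
  have key : ∀ j, θ.rel n (n - j) := by
    intro j
    induction j with
    | zero => exact θ.refl n le_rfl
    | succ j ih =>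
      by_cases hj : j < n
      · have hline : lineR n (n - j) (n - (j + 1)) := ⟨by omega, by omega, by omega, by omega⟩
        obtain ⟨y', hy'line, hy'rel⟩ := θ.bisim ih hline
        have hy' : y' = n - 1 ∨ y' = n := by
          obtain ⟨_, h0, h1, h2⟩ := hy'line; omega
        have hny' : θ.rel n y' := by
          rcases hy' with h' | h'
          · rw [h']; exact θ.symm h
          · rw [h']; exact θ.refl n le_rfl
        exact θ.trans hny' hy'rel
      · have : n - (j + 1) = n - j := by omega
        rw [this]; exact ih
  intro x y hx hy
  have hnx : θ.rel n x := by have := key (n - x); rwa [Nat.sub_sub_self hx] at this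
  have hny : θ.rel n y := by have := key (n - y); rwa [Nat.sub_sub_self hy] at this
  exact θ.trans (θ.symm hnx) hny

lemma lemC {n : ℕ} (θ : LineCong n) :
    ∀ a, a + 2 ≤ n → θ.rel a (a + 1) → θ.rel (a + 1) (a + 2) → θ.rel 0 1 := by
  intro a
  induction a with
  | zero => intro _ h _; exact h
  | succ b ih =>
    intro hle h1 h2
    -- derive a triple at b
    have hline : lineR n (b + 1) b := ⟨by omega, by omega, by omega, by omega⟩
    have hrel : θ.rel (b + 2) (b + 1) := θ.symm h1
    obtain ⟨y', hy'line, hy'rel⟩ := θ.bisim hrel hline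
    have hy' : y' = b + 1 ∨ y' = b + 2 ∨ y' = b + 3 := by
      obtain ⟨_, _, hA, hB⟩ := hy'line; omega
    have hb1y' : θ.rel (b + 1) y' := by
      rcases hy' with h' | h' | h'
      · subst h'; exact θ.refl _ (by omega)
      · subst h'; exact h1
      · subst h'; exact θ.trans h1 h2
    have hb1b : θ.rel (b + 1) b := θ.trans hb1y' hy'rel
    exact ih (by omega) (θ.symm hb1b) h1

/-- For `n ≥ 2` and a congruence `θ` of `L_n`, triviality is equivalent to each of:
`∃ x, x-1 θ x θ x+1`; `0 θ 1`; `n-1 θ n`. -/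
theorem stmt_9 (n : ℕ) (hn : 2 ≤ n) (θ : LineCong n) :
    (TrivialCong θ ↔ ∃ x, x + 2 ≤ n ∧ θ.rel x (x + 1) ∧ θ.rel (x + 1) (x + 2)) ∧
    (TrivialCong θ ↔ θ.rel 0 1) ∧
    (TrivialCong θ ↔ θ.rel (n - 1) n) := by
  refine ⟨⟨fun h => ⟨0, hn, h 0 1 (by omega) (by omega), h 1 2 (by omega) (by omega)⟩,
    fun ⟨x, hx, h1, h2⟩ => lemA' θ (lemC θ x hx h1 h2)⟩,
    ⟨fun h => h 0 1 (by omega) (by omega), fun h => lemA' θ h⟩,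
    ⟨fun h => h (n - 1) n (by omega) le_rfl, fun h => lemB θ (by omega) h⟩⟩
end

section
/- Let θ and δ be congruences of L_n such that θ ∨ δ (the join in the lattice of congruences) is not trivial, and let e be a common extreme of θ and δ. Then e is the left (respectively right) part of a rest of θ if and only if e is the left (respectively right) part of a rest of δ. -/
/-!
Let `J = θ ∨ δ`. A congruence that relates some point to all of its neighbours is trivial, since
by bisimulation the class of that point is closed under moving along the line. Hence a nontrivial
congruence has no rest at an end of the line and no two rests sharing a point. At an interior common extreme
`e`, the class of `e` in `δ` has at most two neighbouring classes, so `δ` relates two of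
`e - 1, e, e + 1`; together with a rest of `θ` at `e` this puts all three in one `J`-class unless
`δ` has the very same rest.
-/

variable {n : ℕ}

namespace LineCong

lemma rel_of_rel_of_lineR (η : LineCong n) {x y z : ℕ} (hxy : η.rel x y) (hyz : lineR n y z)
    (hx : ∀ w, lineR n x w → η.rel x w) : η.rel x z := by
  obtain ⟨w, hxw, hwz⟩ := η.bisim hxy hyz
  exact η.trans (hx w hxw) hwz

lemma trivial_of_forall_lineR_rel (η : LineCong n) {x : ℕ} (hxn : x ≤ n)
    (hx : ∀ w, lineR n x w → η.rel x w) : TrivialCong η := by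
  have down : ∀ j, η.rel x (x - j) := by
    intro j
    induction j with
    | zero => exact η.refl x hxn
    | succ j ih => exact η.rel_of_rel_of_lineR ih ⟨by omega, by omega, by omega, by omega⟩ hx
  have up : ∀ z, z ≤ n → η.rel x z := by
    intro z
    induction z with
    | zero => intro _; simpa using down x
    | succ z ih =>
      intro hz
      exact η.rel_of_rel_of_lineR (ih (by omega)) ⟨by omega, hz, by omega, by omega⟩ hx
  intro y z hy hz
  exact η.trans (η.symm (up y hy)) (up z hz)

lemma trivial_of_rel_zero_one (η : LineCong n) (h : η.rel 0 1) : TrivialCong η :=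
  η.trivial_of_forall_lineR_rel (Nat.zero_le n) fun w hw => by
    obtain rfl | rfl : w = 0 ∨ w = 1 := by obtain ⟨-, _, -, _⟩ := hw; omega
    exacts [η.refl 0 (Nat.zero_le n), h]

lemma trivial_of_rel_pred_self (η : LineCong n) (h : η.rel (n - 1) n) : TrivialCong η :=
  η.trivial_of_forall_lineR_rel le_rfl fun w hw => by
    obtain hw | hw : w = n - 1 ∨ w = n := by obtain ⟨-, _, _, -⟩ := hw; omega
    exacts [hw ▸ η.symm h, hw ▸ η.refl n le_rfl]

lemma trivial_of_rel_of_rel_succ (η : LineCong n) {a : ℕ} (h₁ : η.rel a (a + 1))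
    (h₂ : η.rel (a + 1) (a + 2)) : TrivialCong η :=
  η.trivial_of_forall_lineR_rel (η.dom h₂).1 fun w hw => by
    obtain rfl | rfl | rfl : w = a ∨ w = a + 1 ∨ w = a + 2 := by obtain ⟨-, _, _, _⟩ := hw; omega
    exacts [η.symm h₁, η.refl _ (η.dom h₂).1, h₂]

lemma cls_ne_of_not_rel (η : LineCong n) {a b : ℕ} (hb : b ≤ n) (h : ¬η.rel a b) :
    cls η a ≠ cls η b := fun hab => h (show b ∈ cls η a from hab ▸ η.refl b hb)

/-- The classes of `a`, `a + 1`, `a + 2` are all `R_η`-successors of the class of `a + 1`. -/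
lemma rel_of_vq_le_two (η : LineCong n) {a : ℕ} (ha : a + 2 ≤ n) (hv : vq η (a + 1) ≤ 2) :
    η.rel a (a + 1) ∨ η.rel (a + 1) (a + 2) ∨ η.rel a (a + 2) := by
  by_contra! ⟨h₁, h₂, h₃⟩
  set V : Set (Set ℕ) := {S | ∃ y, qrel η (a + 1) y ∧ S = cls η y}
  have mem : ∀ y, lineR n (a + 1) y → cls η y ∈ V := fun y hy =>
    ⟨y, ⟨a + 1, y, η.refl _ (by omega), η.refl _ hy.2.1, hy⟩, rfl⟩
  have hsub : {cls η a, cls η (a + 1), cls η (a + 2)} ⊆ V := by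
    rintro S (rfl | rfl | rfl) <;> apply mem <;> exact ⟨by omega, by omega, by omega, by omega⟩
  have hfin : V.Finite := (Set.finite_Iic n).finite_subsets.subset <| by
    rintro S ⟨y, -, rfl⟩ z hz
    exact (η.dom hz).2
  have h3 : ({cls η a, cls η (a + 1), cls η (a + 2)} : Set (Set ℕ)).ncard = 3 :=
    Set.ncard_eq_three.mpr ⟨_, _, _, η.cls_ne_of_not_rel (by omega) h₁,
      η.cls_ne_of_not_rel ha h₃, η.cls_ne_of_not_rel ha h₂, rfl⟩
  have hV : 3 ≤ V.ncard := h3 ▸ Set.ncard_le_ncard hsub hfin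
  exact absurd hv (show ¬V.ncard ≤ 2 by omega)

end LineCong

lemma joinRel_swap {θ δ : LineCong n} {x y : ℕ} (h : joinRel θ δ x y) : joinRel δ θ x y :=
  Relation.TransGen.mono (fun _ _ => Or.symm) _ _ h

def joinCong (θ δ : LineCong n) : LineCong n where
  rel := joinRel θ δ
  refl x hx := .single (.inl (θ.refl x hx))
  symm h := by
    induction h with
    | single h => exact .single (h.imp θ.symm δ.symm)
    | tail _ h ih => exact .head (h.imp θ.symm δ.symm) ih
  trans := .trans
  dom h := by
    induction h with
    | single h => exact h.elim θ.dom δ.dom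
    | tail _ h ih => exact ⟨ih.1, (h.elim θ.dom δ.dom).2⟩
  bisim {x x' y} h hxy := by
    have step : ∀ {x x' y}, (θ.rel x' x ∨ δ.rel x' x) → lineR n x y →
        ∃ y', lineR n x' y' ∧ (θ.rel y' y ∨ δ.rel y' y) := by
      rintro x x' y (h | h) hxy
      · obtain ⟨y', h₁, h₂⟩ := θ.bisim h hxy; exact ⟨y', h₁, .inl h₂⟩
      · obtain ⟨y', h₁, h₂⟩ := δ.bisim h hxy; exact ⟨y', h₁, .inr h₂⟩
    induction h using Relation.TransGen.head_induction_on generalizing y with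
    | single h =>
      obtain ⟨y', h₁, h₂⟩ := step h hxy
      exact ⟨y', h₁, .single h₂⟩
    | head h _ ih =>
      obtain ⟨y₁, h₁, hy₁⟩ := ih hxy
      obtain ⟨y₂, h₂, hy₂⟩ := step h h₁
      exact ⟨y₂, h₂, .head hy₂ hy₁⟩

lemma not_trivialCong_joinCong_swap {θ δ : LineCong n} (hJ : ¬TrivialCong (joinCong θ δ)) :
    ¬TrivialCong (joinCong δ θ) :=
  fun h => hJ fun x y hx hy => joinRel_swap (h x y hx hy)

lemma not_trivialCong_of_joinCong {θ δ : LineCong n} (hJ : ¬TrivialCong (joinCong θ δ)) :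
    ¬TrivialCong θ :=
  fun h => hJ fun x y hx hy => .single (.inl (h x y hx hy))

lemma rel_of_joinRel_of_vq_le_two {θ δ : LineCong n} (hJ : ¬TrivialCong (joinCong θ δ)) {a : ℕ}
    (ha : a + 2 ≤ n) (hv : vq δ (a + 1) ≤ 2) :
    (joinRel θ δ a (a + 1) → δ.rel a (a + 1)) ∧
      (joinRel θ δ (a + 1) (a + 2) → δ.rel (a + 1) (a + 2)) := by
  let J := joinCong θ δ
  have hδ : ∀ {x y}, δ.rel x y → J.rel x y := fun h => .single (.inr h)
  have not_both : ¬(J.rel a (a + 1) ∧ J.rel (a + 1) (a + 2)) := fun h =>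
    hJ (J.trivial_of_rel_of_rel_succ h.1 h.2)
  rcases δ.rel_of_vq_le_two ha hv with h | h | h
  · exact ⟨fun _ => h, fun h' => (not_both ⟨hδ h, h'⟩).elim⟩
  · exact ⟨fun h' => (not_both ⟨h', hδ h⟩).elim, fun _ => h⟩
  · exact ⟨fun h' => (not_both ⟨h', J.trans (J.symm h') (hδ h)⟩).elim,
      fun h' => (not_both ⟨J.trans (hδ h) (J.symm h'), h'⟩).elim⟩

lemma rel_succ_of_rel_succ {θ δ : LineCong n} (hJ : ¬TrivialCong (joinCong θ δ)) {e : ℕ}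
    (he : IsExtremeC δ e) (h : θ.rel e (e + 1)) : δ.rel e (e + 1) := by
  rcases e with _ | a
  · exact absurd (θ.trivial_of_rel_zero_one h) (not_trivialCong_of_joinCong hJ)
  · exact (rel_of_joinRel_of_vq_le_two hJ (θ.dom h).2 he.2).2 (.single (.inl h))

lemma rel_pred_of_rel_pred {θ δ : LineCong n} (hJ : ¬TrivialCong (joinCong θ δ)) {a : ℕ}
    (he : IsExtremeC δ (a + 1)) (h : θ.rel a (a + 1)) : δ.rel a (a + 1) := by
  obtain ha | rfl : a + 2 ≤ n ∨ a + 1 = n := by have := (θ.dom h).2; omega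
  · exact (rel_of_joinRel_of_vq_le_two hJ ha he.2).1 (.single (.inl h))
  · exact absurd (θ.trivial_of_rel_pred_self h) (not_trivialCong_of_joinCong hJ)

/-- If `θ ∨ δ` is nontrivial and `e` is a common extreme, then `e` is the left (resp. right) part
of a rest of `θ` iff it is so for `δ`. -/
theorem stmt_10 (n : ℕ) (θ δ : LineCong n)
    (hJ : ¬ ∀ x y, x ≤ n → y ≤ n → joinRel θ δ x y)
    (e : ℕ) (heθ : IsExtremeC θ e) (heδ : IsExtremeC δ e) :
    (θ.rel e (e + 1) ↔ δ.rel e (e + 1)) ∧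
    (0 < e → (θ.rel (e - 1) e ↔ δ.rel (e - 1) e)) := by
  have hJ' : ¬TrivialCong (joinCong δ θ) := not_trivialCong_joinCong_swap hJ
  refine ⟨⟨rel_succ_of_rel_succ hJ heδ, rel_succ_of_rel_succ hJ' heθ⟩, fun he => ?_⟩
  obtain ⟨a, rfl⟩ := Nat.exists_eq_add_one_of_ne_zero he.ne'
  exact ⟨rel_pred_of_rel_pred hJ heδ, rel_pred_of_rel_pred hJ' heθ⟩
end

section
/- If ρ and θ are congruences of L_n with ρ ⊆ θ, then every extreme of ρ is an extreme of θ. -/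
/-- If `ρ ⊆ θ` then every extreme of `ρ` is an extreme of `θ`. -/
theorem stmt_11 (n : ℕ) (ρ θ : LineCong n) (h : LeCong ρ θ) (e : ℕ)
    (he : IsExtremeC ρ e) : IsExtremeC θ e := by
  obtain ⟨hen, hv⟩ := he
  refine ⟨hen, ?_⟩
  set Sρ : Set (Set ℕ) := {S : Set ℕ | ∃ y, qrel ρ e y ∧ S = cls ρ y} with hSρ
  set Sθ : Set (Set ℕ) := {S : Set ℕ | ∃ y, qrel θ e y ∧ S = cls θ y} with hSθ
  -- saturation map
  set g : Set ℕ → Set ℕ := fun S => {w | ∃ z ∈ S, θ.rel z w} with hg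
  have hρfin : Sρ.Finite := by
    apply Set.Finite.subset ((Set.finite_Iic n).image (cls ρ))
    rintro S ⟨y, ⟨x', y', hx', hy', hl⟩, rfl⟩
    exact ⟨y, (ρ.dom hy').2, rfl⟩
  have hsub : Sθ ⊆ g '' Sρ := by
    rintro S ⟨y, ⟨x', y', hx', hy', hl⟩, rfl⟩
    have hbis := θ.bisim (θ.symm hx') hl
    obtain ⟨y0, hly0, hy0⟩ := hbis
    have hy0n : y0 ≤ n := hly0.2.1
    refine ⟨cls ρ y0, ⟨y0, ⟨e, y0, ρ.refl e hen, ρ.refl y0 hy0n, hly0⟩, rfl⟩, ?_⟩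
    ext w
    constructor
    · rintro ⟨z, hz, hzw⟩
      exact θ.trans (θ.trans (θ.symm hy') (θ.symm hy0)) (θ.trans (h _ _ hz) hzw)
    · intro hw
      exact ⟨y0, ρ.refl y0 hy0n, θ.trans (θ.trans hy0 hy') hw⟩
  calc Sθ.ncard ≤ (g '' Sρ).ncard :=
        Set.ncard_le_ncard hsub (hρfin.image g)
    _ ≤ Sρ.ncard := Set.ncard_image_le hρfin
    _ ≤ 2 := hv
end

section
/- Let θ = ⟨k; r̄⟩ and δ = ⟨l; s̄⟩ be congruences of L_n with nontrivial join, and let e₁ be the first positive common extreme. Then (θ ∨ δ) restricted to [0, e₁] equals the join (computed in Con L_{e₁}) of the restrictions θ_{e₁} and δ_{e₁}. -/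
namespace SP15

variable {n : ℕ}

lemma mkLine {x y : ℕ} (hx : x ≤ n) (hy : y ≤ n) (h1 : x ≤ y + 1) (h2 : y ≤ x + 1) :
    lineR n x y := ⟨hx, hy, h1, h2⟩

lemma lineR_cases {x y : ℕ} (h : lineR n x y) : y = x ∨ y = x + 1 ∨ x = y + 1 := by
  obtain ⟨_, _, h1, h2⟩ := h; omega

lemma lineR_bound {x y : ℕ} (h : lineR n x y) : x ≤ n ∧ y ≤ n := ⟨h.1, h.2.1⟩

/-- Three consecutive related points force triviality. -/
lemma triv3 (α : LineCong n) {c : ℕ} (h1 : α.rel c (c+1)) (h2 : α.rel (c+1) (c+2)) :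
    ∀ x y, x ≤ n → y ≤ n → α.rel x y := by
  have hc2 : c + 2 ≤ n := (α.dom h2).2
  have key : ∀ a, α.rel a (c+1) → ∀ b, b ≤ n → a ≤ b + 1 → b ≤ a + 1 → α.rel b (c+1) := by
    intro a ha b hb hab hba
    have haN : a ≤ n := (α.dom ha).1
    obtain ⟨w, hw, hwb⟩ := α.bisim (α.symm ha) (mkLine haN hb hab hba)
    have hwc : α.rel w (c+1) := by
      rcases lineR_cases hw with h | h | h
      · subst h; exact α.refl _ (by omega)
      · subst h; exact α.symm h2
      · have : w = c := by omega
        subst this; exact h1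
    exact α.trans (α.symm hwb) hwc
  have main : ∀ x, x ≤ n → α.rel x (c+1) := by
    have up : ∀ i x, x = c + 1 + i → x ≤ n → α.rel x (c+1) := by
      intro i
      induction i with
      | zero => intro x hx hxn; subst hx; exact α.refl _ hxn
      | succ i ih =>
        intro x hx hxn
        have h' : α.rel (c+1+i) (c+1) := ih _ rfl (by omega)
        exact key _ h' x hxn (by omega) (by omega)
    have down : ∀ i x, x + i = c + 1 → α.rel x (c+1) := by
      intro i
      induction i with
      | zero => intro x hx; have : x = c + 1 := by omega
                subst this; exact α.refl _ (by omega)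
      | succ i ih =>
        intro x hx
        have h' : α.rel (x+1) (c+1) := ih _ (by omega)
        exact key _ h' x (by omega) (by omega) (by omega)
    intro x hxn
    rcases le_or_gt x (c+1) with h | h
    · exact down (c + 1 - x) x (by omega)
    · exact up (x - (c+1)) x (by omega) hxn
  intro x y hx hy
  exact α.trans (main x hx) (α.symm (main y hy))

/-- No rest at 0. -/
lemma rest0_triv (α : LineCong n) (h : α.rel 0 1) :
    ∀ x y, x ≤ n → y ≤ n → α.rel x y := by
  have h1 : 1 ≤ n := (α.dom h).2
  rcases le_or_gt 2 n with h2 | h2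
  · obtain ⟨w, hw, hw2⟩ := α.bisim h (mkLine h1 h2 (by omega) (by omega))
    have : w = 0 ∨ w = 1 := by rcases lineR_cases hw with h' | h' | h' <;> omega
    rcases this with rfl | rfl
    · exact triv3 α h (α.trans (α.symm h) hw2)
    · exact triv3 α h hw2
  · -- n = 1
    intro x y hx hy
    have hx1 : x ≤ 1 := by omega
    have hy1 : y ≤ 1 := by omega
    interval_cases x <;> interval_cases y <;>
      first
        | exact α.refl _ (by omega)
        | exact h
        | exact α.symm h

/-- No rest at the top. -/
lemma restTop_triv (α : LineCong n) {c : ℕ} (h : α.rel c (c+1)) (htop : n < c + 2) :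
    ∀ x y, x ≤ n → y ≤ n → α.rel x y := by
  rcases Nat.eq_zero_or_eq_succ_pred c with hc | hc
  · subst hc; exact rest0_triv α h
  · obtain ⟨w, rfl⟩ : ∃ w, c = w + 1 := ⟨c - 1, by omega⟩
    have hc1 : w + 2 ≤ n := (α.dom h).2
    obtain ⟨u, hu, huw⟩ := α.bisim (α.symm h)
      (show lineR n (w+1) w from mkLine (by omega) (by omega) (by omega) (by omega))
    have hun : u ≤ n := (lineR_bound hu).2
    rcases lineR_cases hu with h' | h' | h'
    · subst h'
      have hww : α.rel w (w+1) := α.trans (α.symm huw) (α.symm h)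
      exact triv3 α hww h
    · omega
    · have : u = w + 1 := by omega
      subst this
      have hww : α.rel w (w+1) := α.symm huw
      exact triv3 α hww h
  
/-- Rest reflection: either trivial or the rest reflects. -/
lemma S2 (α : LineCong n) {c : ℕ} (h : α.rel c (c+1)) :
    (∀ x y, x ≤ n → y ≤ n → α.rel x y) ∨
      (∃ w, w + 1 = c ∧ c + 2 ≤ n ∧ α.rel w (c+2)) := by
  rcases Nat.eq_zero_or_pos c with rfl | hc
  · exact Or.inl (rest0_triv α h)
  rcases lt_or_ge n (c+2) with htop | htop
  · exact Or.inl (restTop_triv α h htop)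
  obtain ⟨u, hu, hu2⟩ := α.bisim h
    (show lineR n (c+1) (c+2) from mkLine (by omega) (by omega) (by omega) (by omega))
  rcases lineR_cases hu with h' | h' | h'
  · subst h'
    exact Or.inl (triv3 α h (α.trans (α.symm h) hu2))
  · subst h'
    exact Or.inl (triv3 α h hu2)
  · exact Or.inr ⟨u, by omega, htop, hu2⟩

end SP15

section DEV2
namespace SP15

variable {n : ℕ} (θ δ : LineCong n)

lemma jsingle_l {a b : ℕ} (h : θ.rel a b) : joinRel θ δ a b :=
  Relation.TransGen.single (Or.inl h)

lemma jsingle_r {a b : ℕ} (h : δ.rel a b) : joinRel θ δ a b :=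
  Relation.TransGen.single (Or.inr h)

lemma jrefl {a : ℕ} (h : a ≤ n) : joinRel θ δ a a := jsingle_l θ δ (θ.refl a h)

lemma jtrans {a b c : ℕ} (h1 : joinRel θ δ a b) (h2 : joinRel θ δ b c) :
    joinRel θ δ a c := Relation.TransGen.trans h1 h2

lemma jsymm {a b : ℕ} (h : joinRel θ δ a b) : joinRel θ δ b a := by
  induction h with
  | single h => exact Relation.TransGen.single (by rcases h with h | h
                                                   · exact Or.inl (θ.symm h)
                                                   · exact Or.inr (δ.symm h))
  | tail _ hbc ih =>
      refine Relation.TransGen.trans (Relation.TransGen.single ?_) ih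
      rcases hbc with h | h
      · exact Or.inl (θ.symm h)
      · exact Or.inr (δ.symm h)

lemma jdom {a b : ℕ} (h : joinRel θ δ a b) : a ≤ n ∧ b ≤ n := by
  induction h with
  | single h => rcases h with h | h
                · exact θ.dom h
                · exact δ.dom h
  | tail _ hbc ih =>
      refine ⟨ih.1, ?_⟩
      rcases hbc with h | h
      · exact (θ.dom h).2
      · exact (δ.dom h).2

lemma jbisim : ∀ {a b : ℕ}, joinRel θ δ a b → ∀ y, lineR n b y →
    ∃ y', lineR n a y' ∧ joinRel θ δ y' y := by
  intro a b h
  induction h with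
  | single h =>
      intro y hy
      rcases h with h | h
      · obtain ⟨y', h1, h2⟩ := θ.bisim h hy
        exact ⟨y', h1, jsingle_l θ δ h2⟩
      · obtain ⟨y', h1, h2⟩ := δ.bisim h hy
        exact ⟨y', h1, jsingle_r θ δ h2⟩
  | tail _ hbc ih =>
      intro y hy
      rcases hbc with h | h
      · obtain ⟨w, hw1, hw2⟩ := θ.bisim h hy
        obtain ⟨y', h1, h2⟩ := ih w hw1
        exact ⟨y', h1, jtrans θ δ h2 (jsingle_l θ δ hw2)⟩
      · obtain ⟨w, hw1, hw2⟩ := δ.bisim h hy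
        obtain ⟨y', h1, h2⟩ := ih w hw1
        exact ⟨y', h1, jtrans θ δ h2 (jsingle_r θ δ hw2)⟩

/-- The join as a line congruence. -/
noncomputable def JC : LineCong n where
  rel := joinRel θ δ
  refl := fun a h => jrefl θ δ h
  symm := fun h => jsymm θ δ h
  trans := fun h1 h2 => jtrans θ δ h1 h2
  dom := fun h => jdom θ δ h
  bisim := fun h hl => jbisim θ δ h _ hl

variable (hJ : ¬ ∀ x y, x ≤ n → y ≤ n → joinRel θ δ x y)

include hJ in
lemma Jfalse {a : ℕ} (h1 : joinRel θ δ a (a+1)) (h2 : joinRel θ δ (a+1) (a+2)) : False :=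
  hJ (triv3 (JC θ δ) h1 h2)

include hJ in
lemma trivFalse_l (h : ∀ x y, x ≤ n → y ≤ n → θ.rel x y) : False :=
  hJ (fun x y hx hy => jsingle_l θ δ (h x y hx hy))

include hJ in
lemma trivFalse_r (h : ∀ x y, x ≤ n → y ≤ n → δ.rel x y) : False :=
  hJ (fun x y hx hy => jsingle_r θ δ (h x y hx hy))

end SP15
end DEV2

section DEV3
namespace SP15

variable {n : ℕ}

lemma cls_ne {α : LineCong n} {a b : ℕ} (hb : b ≤ n) (h : ¬ α.rel a b) :
    cls α a ≠ cls α b := by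
  intro he
  exact h (by have : b ∈ cls α b := α.refl b hb
              rw [← he] at this; exact this)

/-- Extremes: the three neighbouring classes collapse. -/
lemma tri (α : LineCong n) (p : ℕ) (hp : p + 2 ≤ n) (hvq : vq α (p+1) ≤ 2) :
    α.rel p (p+2) ∨ α.rel (p+1) (p+2) ∨ α.rel (p+1) p := by
  by_contra hcon
  push_neg at hcon
  obtain ⟨h02, h12, h10⟩ := hcon
  set S : Set (Set ℕ) := {S : Set ℕ | ∃ y, qrel α (p+1) y ∧ S = cls α y} with hS
  have hfin : S.Finite := by
    have hsub : S ⊆ {T : Set ℕ | T ⊆ Set.Iic n} := by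
      rintro T ⟨y, _, rfl⟩
      intro z hz
      exact (α.dom hz).2
    exact Set.Finite.subset (Set.Finite.finite_subsets (Set.finite_Iic n)) hsub
  have m0 : cls α p ∈ S := ⟨p, ⟨p+1, p, α.refl _ (by omega), α.refl _ (by omega),
      mkLine (by omega) (by omega) (by omega) (by omega)⟩, rfl⟩
  have m1 : cls α (p+1) ∈ S := ⟨p+1, ⟨p+1, p+1, α.refl _ (by omega), α.refl _ (by omega),
      mkLine (by omega) (by omega) (by omega) (by omega)⟩, rfl⟩
  have m2 : cls α (p+2) ∈ S := ⟨p+2, ⟨p+1, p+2, α.refl _ (by omega), α.refl _ (by omega),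
      mkLine (by omega) (by omega) (by omega) (by omega)⟩, rfl⟩
  have d01 : cls α p ≠ cls α (p+1) := by
    intro he
    exact h10 (α.symm (by have : (p+1) ∈ cls α (p+1) := α.refl _ (by omega)
                          rw [← he] at this; exact this))
  have d02 : cls α p ≠ cls α (p+2) := cls_ne (by omega) h02
  have d12 : cls α (p+1) ≠ cls α (p+2) := cls_ne (by omega) h12
  have h3 : ({cls α p, cls α (p+1), cls α (p+2)} : Set (Set ℕ)).ncard = 3 := by
    rw [Set.ncard_eq_three]
    exact ⟨_, _, _, d01, d02, d12, rfl⟩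
  have hle : ({cls α p, cls α (p+1), cls α (p+2)} : Set (Set ℕ)).ncard ≤ S.ncard := by
    apply Set.ncard_le_ncard _ hfin
    intro T hT
    rcases hT with rfl | rfl | rfl
    · exact m0
    · exact m1
    · exact m2
  have : vq α (p+1) = S.ncard := rfl
  omega

end SP15
end DEV3

section DEV4
namespace SP15

variable {n : ℕ} (θ δ : LineCong n)
variable (hJ : ¬ ∀ x y, x ≤ n → y ≤ n → joinRel θ δ x y)

section Cases

variable (σ τ : LineCong n)
variable (hσJ : ∀ {a b : ℕ}, σ.rel a b → joinRel θ δ a b)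
variable (hτJ : ∀ {a b : ℕ}, τ.rel a b → joinRel θ δ a b)

include hJ hσJ hτJ

/-- Mismatch case A: `σ` rests, `τ` steps up. -/
lemma caseA {z B : ℕ} (hBn : B + 1 ≤ n)
    (hσ1 : σ.rel (z+1) B) (hτ1 : τ.rel (z+1) B)
    (hσ2 : σ.rel (z+2) B) (hτ2 : τ.rel (z+2) (B+1)) :
    σ.rel (z+2) (B+1) := by
  have hz2 : z + 2 ≤ n := (σ.dom hσ2).1
  have J1 : joinRel θ δ B (B+1) :=
    jtrans θ δ (jsymm θ δ (hσJ hσ2)) (hτJ hτ2)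
  have σrest : σ.rel (z+1) (z+2) := σ.trans hσ1 (σ.symm hσ2)
  have Jr : joinRel θ δ (z+1) (z+2) := hσJ σrest
  obtain ⟨ζ, hζ, hζr⟩ := σ.bisim hσ2
    (show lineR n B (B+1) from mkLine (by omega) hBn (by omega) (by omega))
  have hζn : ζ ≤ n := (lineR_bound hζ).2
  rcases lineR_cases hζ with h' | h' | h'
  · subst h'; exact hζr
  · -- ζ = z + 3
    subst h'
    obtain ⟨ω, hω, hωr⟩ := τ.bisim (τ.symm hτ2)
      (show lineR n (z+2) (z+3) from mkLine (by omega) (by omega) (by omega) (by omega))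
    have hωn : ω ≤ n := (lineR_bound hω).2
    rcases lineR_cases hω with h'' | h'' | h''
    · -- ω = B+1 : τ.rel (B+1) (z+3)
      subst h''
      have J23 : joinRel θ δ (z+2) (z+3) :=
        jtrans θ δ (hτJ hτ2) (hτJ hωr)
      exact absurd J23 (fun hh => Jfalse θ δ hJ Jr hh)
    · -- ω = B+2
      subst h''
      have J2 : joinRel θ δ (B+1) (B+2) :=
        jtrans θ δ (jsymm θ δ (hσJ hζr)) (jsymm θ δ (hτJ hωr))
      exact absurd J2 (fun hh => Jfalse θ δ hJ J1 hh)
    · -- B + 1 = ω + 1, ω = B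
      have : ω = B := by omega
      subst this
      have J13 : joinRel θ δ (z+1) (z+3) :=
        jtrans θ δ (hτJ hτ1) (hτJ hωr)
      have J23 : joinRel θ δ (z+2) (z+3) := jtrans θ δ (jsymm θ δ Jr) J13
      exact absurd J23 (fun hh => Jfalse θ δ hJ Jr hh)
  · -- z + 2 = ζ + 1, ζ = z+1
    have : ζ = z + 1 := by omega
    subst this
    exact σ.trans (σ.symm σrest) hζr

/-- Mismatch case B: `σ` steps down, `τ` rests. -/
lemma caseB {z b : ℕ}
    (hσ1 : σ.rel (z+1) (b+1)) (hτ1 : τ.rel (z+1) (b+1))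
    (hσ2 : σ.rel (z+2) b) (hτ2 : τ.rel (z+2) (b+1)) :
    τ.rel (z+2) b := by
  have hz2 : z + 2 ≤ n := (σ.dom hσ2).1
  have hbn : b + 1 ≤ n := (σ.dom hσ1).2
  have τrest : τ.rel (z+1) (z+2) := τ.trans hτ1 (τ.symm hτ2)
  have Jr : joinRel θ δ (z+1) (z+2) := hτJ τrest
  have JB : joinRel θ δ b (b+1) :=
    jtrans θ δ (jsymm θ δ (hσJ hσ2)) (hτJ hτ2)
  obtain ⟨ζ, hζ, hζr⟩ := τ.bisim hτ2
    (show lineR n (b+1) b from mkLine hbn (by omega) (by omega) (by omega))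
  have hζn : ζ ≤ n := (lineR_bound hζ).2
  rcases lineR_cases hζ with h' | h' | h'
  · subst h'; exact hζr
  · -- ζ = z+3
    subst h'
    obtain ⟨ω, hω, hωr⟩ := σ.bisim (σ.symm hσ2)
      (show lineR n (z+2) (z+3) from mkLine (by omega) (by omega) (by omega) (by omega))
    have hωn : ω ≤ n := (lineR_bound hω).2
    rcases lineR_cases hω with h'' | h'' | h''
    · -- ω = b
      rw [h''] at hωr
      have J23 : joinRel θ δ (z+2) (z+3) :=
        jtrans θ δ (hσJ hσ2) (hσJ hωr)
      exact absurd J23 (fun hh => Jfalse θ δ hJ Jr hh)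
    · -- ω = b+1
      rw [h''] at hωr
      have J13 : joinRel θ δ (z+1) (z+3) :=
        jtrans θ δ (hσJ hσ1) (hσJ hωr)
      have J23 : joinRel θ δ (z+2) (z+3) := jtrans θ δ (jsymm θ δ Jr) J13
      exact absurd J23 (fun hh => Jfalse θ δ hJ Jr hh)
    · -- b = ω + 1
      have Jωb : joinRel θ δ ω b :=
        jtrans θ δ (hσJ hωr) (hτJ hζr)
      have h1 : joinRel θ δ ω (ω+1) := by rw [← h'']; exact Jωb
      have J2 : joinRel θ δ (ω+1) (ω+2) := by
        have e2 : ω + 2 = b + 1 := by omega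
        rw [← h'', e2]
        exact JB
      exact absurd J2 (fun hh => Jfalse θ δ hJ h1 hh)
  · -- z+2 = ζ+1, ζ = z+1
    have : ζ = z + 1 := by omega
    subst this
    exact τ.trans (τ.symm τrest) hζr

/-- Mismatch case C: opposite steps. -/
lemma caseC {z b A : ℕ} (hb2 : b + 2 ≤ n)
    (hσ2 : σ.rel (z+2) b) (hτ2 : τ.rel (z+2) (b+2))
    (hσ1 : σ.rel (z+1) (b+1)) (hτ1 : τ.rel (z+1) (b+1))
    (hσ0 : σ.rel z A) (hτ0 : τ.rel z A)
    (hadj : A = b ∨ A = b + 1 ∨ A = b + 2) :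
    σ.rel (z+2) (b+2) ∨ τ.rel (z+2) b ∨ (A = b + 1 ∧ σ.rel z (z+1) ∧ τ.rel z (z+1)) := by
  have hz2 : z + 2 ≤ n := (σ.dom hσ2).1
  have Jg : joinRel θ δ b (b+2) :=
    jtrans θ δ (jsymm θ δ (hσJ hσ2)) (hτJ hτ2)
  have noJ1 : joinRel θ δ b (b+1) → False := fun h =>
    Jfalse θ δ hJ h (jtrans θ δ (jsymm θ δ h) Jg)
  have noJ2 : joinRel θ δ (b+1) (b+2) → False := fun h =>
    Jfalse θ δ hJ (jtrans θ δ Jg (jsymm θ δ h)) h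
  rcases hadj with hA | hA | hA
  · -- A = b  (C2)
    rw [hA] at hσ0
    have hσz2 : σ.rel z (z+2) := σ.trans hσ0 (σ.symm hσ2)
    obtain ⟨ζ, hζ, hζr⟩ := σ.bisim hσ1
      (show lineR n (b+1) (b+2) from mkLine (by omega) hb2 (by omega) (by omega))
    rcases lineR_cases hζ with h' | h' | h'
    · subst h'
      exact absurd (hσJ (σ.trans (σ.symm hσ1) hζr)) (fun hh => noJ2 hh)
    · subst h'
      exact Or.inl hζr
    · have : ζ = z := by omega
      subst this
      exact Or.inl (σ.trans (σ.symm hσz2) hζr)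
  · -- A = b + 1 (C1)
    have hσ0' : σ.rel z (b+1) := by rw [← hA]; exact hσ0
    have hτ0' : τ.rel z (b+1) := by rw [← hA]; exact hτ0
    exact Or.inr (Or.inr ⟨hA, σ.trans hσ0' (σ.symm hσ1), τ.trans hτ0' (τ.symm hτ1)⟩)
  · -- A = b + 2 (C3)
    rw [hA] at hτ0
    have hτz2 : τ.rel z (z+2) := τ.trans hτ0 (τ.symm hτ2)
    obtain ⟨ζ, hζ, hζr⟩ := τ.bisim hτ1
      (show lineR n (b+1) b from mkLine (by omega) (by omega) (by omega) (by omega))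
    rcases lineR_cases hζ with h' | h' | h'
    · subst h'
      exact absurd (jsymm θ δ (hτJ (τ.trans (τ.symm hτ1) hζr))) (fun hh => noJ1 hh)
    · subst h'
      exact Or.inr (Or.inl hζr)
    · have : ζ = z := by omega
      subst this
      exact Or.inr (Or.inl (τ.trans (τ.symm hτz2) hζr))

end Cases

include hJ in
/-- Common extremal type at a common extreme. -/
lemma common_type {e₀ : ℕ} (hen : e₀ + 2 ≤ n)
    (hexθ : vq θ (e₀+1) ≤ 2) (hexδ : vq δ (e₀+1) ≤ 2) :
    (θ.rel e₀ (e₀+2) ∧ δ.rel e₀ (e₀+2)) ∨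
    (θ.rel (e₀+1) (e₀+2) ∧ δ.rel (e₀+1) (e₀+2)) ∨
    (θ.rel (e₀+1) e₀ ∧ δ.rel (e₀+1) e₀) := by
  have tθ := tri θ e₀ hen hexθ
  have tδ := tri δ e₀ hen hexδ
  -- cross-type contradictions
  have kθ : ∀ {a b : ℕ}, θ.rel a b → joinRel θ δ a b := fun h => jsingle_l θ δ h
  have kδ : ∀ {a b : ℕ}, δ.rel a b → joinRel θ δ a b := fun h => jsingle_r θ δ h
  rcases tθ with h1 | h1 | h1 <;> rcases tδ with h2 | h2 | h2
  · exact Or.inl ⟨h1, h2⟩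
  · -- θ refl, δ restUp
    exfalso
    have Ja : joinRel θ δ e₀ (e₀+1) := jtrans θ δ (kθ h1) (jsymm θ δ (kδ h2))
    exact Jfalse θ δ hJ Ja (kδ h2)
  · -- θ refl, δ restDown
    exfalso
    have Ja : joinRel θ δ e₀ (e₀+1) := jsymm θ δ (kδ h2)
    have Jb : joinRel θ δ (e₀+1) (e₀+2) := jtrans θ δ (kδ h2) (kθ h1)
    exact Jfalse θ δ hJ Ja Jb
  · exfalso
    have Ja : joinRel θ δ e₀ (e₀+1) := jtrans θ δ (kδ h2) (jsymm θ δ (kθ h1))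
    exact Jfalse θ δ hJ Ja (kθ h1)
  · exact Or.inr (Or.inl ⟨h1, h2⟩)
  · exfalso
    have Ja : joinRel θ δ e₀ (e₀+1) := jsymm θ δ (kδ h2)
    exact Jfalse θ δ hJ Ja (kθ h1)
  · exfalso
    have Ja : joinRel θ δ e₀ (e₀+1) := jsymm θ δ (kθ h1)
    have Jb : joinRel θ δ (e₀+1) (e₀+2) := jtrans θ δ (kθ h1) (kδ h2)
    exact Jfalse θ δ hJ Ja Jb
  · exfalso
    have Ja : joinRel θ δ e₀ (e₀+1) := jsymm θ δ (kθ h1)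
    exact Jfalse θ δ hJ Ja (kδ h2)
  · exact Or.inr (Or.inr ⟨h1, h2⟩)

end SP15
end DEV4

section DEV5
namespace SP15

variable {n : ℕ} (θ δ : LineCong n)

/-- Candidate normalisation near the common extreme `e₀+1`. -/
lemma normC (σ : LineCong n) {e₀ z B p : ℕ}
    (hσT : σ.rel e₀ (e₀+2) ∨ σ.rel (e₀+1) (e₀+2) ∨ σ.rel (e₀+1) e₀)
    (hB : B ≤ e₀ + 1) (hlp : lineR n B p) (hp : σ.rel p (z+2))
    (hBne : σ.rel (e₀+1) e₀ → B ≠ e₀+1) :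
    ∃ p', p' ≤ e₀+1 ∧ σ.rel (z+2) p' ∧ (p' = B ∨ p' = B + 1 ∨ B = p' + 1) ∧
      (σ.rel (e₀+1) e₀ → p' ≠ e₀+1) := by
  have hcases := lineR_cases hlp
  by_cases hrd : σ.rel (e₀+1) e₀
  · have hBe : B ≤ e₀ := by
      have := hBne hrd; omega
    by_cases hpe : p = e₀ + 1
    · -- forced B = e₀
      have hBe₀ : B = e₀ := by omega
      refine ⟨e₀, by omega, ?_, by omega, by omega⟩
      rw [hpe] at hp
      exact σ.trans (σ.symm hp) hrd
    · refine ⟨p, by omega, σ.symm hp, by omega, by omega⟩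
  · by_cases hpe : p = e₀ + 2
    · have hBe : B = e₀ + 1 := by omega
      rw [hpe] at hp
      rcases hσT with h | h | h
      · -- reflection at the extreme
        refine ⟨e₀, by omega, σ.trans (σ.symm hp) (σ.symm h), by omega,
          fun h' => absurd h' hrd⟩
      · refine ⟨e₀+1, by omega, σ.trans (σ.symm hp) (σ.symm h), by omega,
          fun h' => absurd h' hrd⟩
      · exact absurd h hrd
    · refine ⟨p, by omega, σ.symm hp, by omega, fun h' => absurd h' hrd⟩

variable (hJ : ¬ ∀ x y, x ≤ n → y ≤ n → joinRel θ δ x y)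

include hJ in
/-- The inductive step: a common mirror representative for the next point. -/
lemma stepU {e₀ : ℕ} (hen : e₀ + 2 ≤ n)
    (hct : (θ.rel e₀ (e₀+2) ∧ δ.rel e₀ (e₀+2)) ∨
           (θ.rel (e₀+1) (e₀+2) ∧ δ.rel (e₀+1) (e₀+2)) ∨
           (θ.rel (e₀+1) e₀ ∧ δ.rel (e₀+1) e₀))
    {z A B : ℕ} (hzn : z + 2 ≤ n)
    (hA : A ≤ e₀+1) (hB : B ≤ e₀+1)
    (hRA : θ.rel z A ∧ δ.rel z A) (hRB : θ.rel (z+1) B ∧ δ.rel (z+1) B)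
    (hadj : A = B ∨ A = B + 1 ∨ B = A + 1)
    (hBne : (θ.rel (e₀+1) e₀ ∧ δ.rel (e₀+1) e₀) → B ≠ e₀+1)
    (hD : ∀ w, w + 1 = z → ∃ D, D ≤ e₀+1 ∧ (D = A ∨ D = A + 1 ∨ A = D + 1) ∧
      (θ.rel w D ∧ δ.rel w D) ∧ ((θ.rel (e₀+1) e₀ ∧ δ.rel (e₀+1) e₀) → D ≠ e₀+1)) :
    ∃ C, C ≤ e₀+1 ∧ (C = B ∨ C = B + 1 ∨ B = C + 1) ∧
      (θ.rel (z+2) C ∧ δ.rel (z+2) C) ∧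
      ((θ.rel (e₀+1) e₀ ∧ δ.rel (e₀+1) e₀) → C ≠ e₀+1) := by
  have kθ : ∀ {a b : ℕ}, θ.rel a b → joinRel θ δ a b := fun h => jsingle_l θ δ h
  have kδ : ∀ {a b : ℕ}, δ.rel a b → joinRel θ δ a b := fun h => jsingle_r θ δ h
  have noRDθ : θ.rel e₀ (e₀+2) → θ.rel (e₀+1) e₀ → False := fun h1 h2 =>
    trivFalse_l θ δ hJ (triv3 θ (θ.symm h2) (θ.trans h2 h1))
  have noUpθ : θ.rel (e₀+1) (e₀+2) → θ.rel (e₀+1) e₀ → False := fun h1 h2 =>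
    trivFalse_l θ δ hJ (triv3 θ (θ.symm h2) h1)
  have noRDδ : δ.rel e₀ (e₀+2) → δ.rel (e₀+1) e₀ → False := fun h1 h2 =>
    trivFalse_r θ δ hJ (triv3 δ (δ.symm h2) (δ.trans h2 h1))
  have noUpδ : δ.rel (e₀+1) (e₀+2) → δ.rel (e₀+1) e₀ → False := fun h1 h2 =>
    trivFalse_r θ δ hJ (triv3 δ (δ.symm h2) h1)
  have hTθ : θ.rel e₀ (e₀+2) ∨ θ.rel (e₀+1) (e₀+2) ∨ θ.rel (e₀+1) e₀ := by
    rcases hct with ⟨h, _⟩ | ⟨h, _⟩ | ⟨h, _⟩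
    exacts [Or.inl h, Or.inr (Or.inl h), Or.inr (Or.inr h)]
  have hTδ : δ.rel e₀ (e₀+2) ∨ δ.rel (e₀+1) (e₀+2) ∨ δ.rel (e₀+1) e₀ := by
    rcases hct with ⟨_, h⟩ | ⟨_, h⟩ | ⟨_, h⟩
    exacts [Or.inl h, Or.inr (Or.inl h), Or.inr (Or.inr h)]
  have hBneθ : θ.rel (e₀+1) e₀ → B ≠ e₀+1 := by
    intro hrd
    rcases hct with ⟨h, h'⟩ | ⟨h, h'⟩ | hb
    · exact absurd hrd (noRDθ h)
    · exact absurd hrd (noUpθ h)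
    · exact hBne hb
  have hBneδ : δ.rel (e₀+1) e₀ → B ≠ e₀+1 := by
    intro hrd
    rcases hct with ⟨h, h'⟩ | ⟨h, h'⟩ | hb
    · exact absurd hrd (noRDδ h')
    · exact absurd hrd (noUpδ h')
    · exact hBne hb
  -- candidates
  obtain ⟨p, hlp, hpθ⟩ := θ.bisim (θ.symm hRB.1)
    (show lineR n (z+1) (z+2) from mkLine (by omega) (by omega) (by omega) (by omega))
  obtain ⟨q, hlq, hqδ⟩ := δ.bisim (δ.symm hRB.2)
    (show lineR n (z+1) (z+2) from mkLine (by omega) (by omega) (by omega) (by omega))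
  obtain ⟨p', hp'e, hθp', hshp, hnp'⟩ := normC θ hTθ hB hlp hpθ hBneθ
  obtain ⟨q', hq'e, hδq', hshq, hnq'⟩ := normC δ hTδ hB hlq hqδ hBneδ
  -- common-rest handler (case C1)
  have hC1 : θ.rel z (z+1) → δ.rel z (z+1) → A = B →
      ∃ C, C ≤ e₀+1 ∧ (C = B ∨ C = B + 1 ∨ B = C + 1) ∧
        (θ.rel (z+2) C ∧ δ.rel (z+2) C) ∧
        ((θ.rel (e₀+1) e₀ ∧ δ.rel (e₀+1) e₀) → C ≠ e₀+1) := by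
    intro ht hs hAB
    rcases S2 θ ht with htr | ⟨w, hw, _, hθw⟩
    · exact absurd htr (fun h => trivFalse_l θ δ hJ h)
    rcases S2 δ hs with hsr | ⟨w2, hw2, _, hδw⟩
    · exact absurd hsr (fun h => trivFalse_r θ δ hJ h)
    have hww : w2 = w := by omega
    rw [hww] at hδw
    obtain ⟨D, hDe, hDadj, ⟨hθD, hδD⟩, hDne⟩ := hD w (by omega)
    refine ⟨D, hDe, by omega, ⟨?_, ?_⟩, hDne⟩
    · exact θ.trans (θ.symm hθw) hθD
    · exact δ.trans (δ.symm hδw) hδD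
  clear hpθ hqδ hlp hlq
  rcases hshp with hp1 | hp1 | hp1 <;> rcases hshq with hq1 | hq1 | hq1
  · -- p' = B, q' = B
    have h1 : θ.rel (z+2) B := by rw [← hp1]; exact hθp'
    have h2 : δ.rel (z+2) B := by rw [← hq1]; exact hδq'
    exact ⟨B, hB, by omega, ⟨h1, h2⟩, fun h => hBne h⟩
  · -- p' = B, q' = B + 1 : case A (θ rests, δ up)
    have h1 : θ.rel (z+2) B := by rw [← hp1]; exact hθp'
    have h2 : δ.rel (z+2) (B+1) := by rw [← hq1]; exact hδq'
    have hres := caseA θ δ hJ θ δ kθ kδ (z := z) (B := B) (by omega)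
      hRB.1 hRB.2 h1 h2
    exact ⟨B + 1, by omega, by omega, ⟨hres, h2⟩,
      fun h => by have := hnq' h.2; omega⟩
  · -- p' = B, B = q' + 1 : case B with (σ,τ) = (δ,θ)
    have hθ2 : θ.rel (z+2) (q'+1) := by rw [← hq1, ← hp1]; exact hθp'
    have hσ1 : δ.rel (z+1) (q'+1) := by rw [← hq1]; exact hRB.2
    have hτ1 : θ.rel (z+1) (q'+1) := by rw [← hq1]; exact hRB.1
    have hres := caseB θ δ hJ δ θ kδ kθ (z := z) (b := q') hσ1 hτ1 hδq' hθ2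
    exact ⟨q', hq'e, by omega, ⟨hres, hδq'⟩, fun h => hnq' h.2⟩
  · -- p' = B + 1, q' = B : case A with (σ,τ) = (δ,θ)
    have h1 : θ.rel (z+2) (B+1) := by rw [← hp1]; exact hθp'
    have h2 : δ.rel (z+2) B := by rw [← hq1]; exact hδq'
    have hres := caseA θ δ hJ δ θ kδ kθ (z := z) (B := B) (by omega)
      hRB.2 hRB.1 h2 h1
    exact ⟨B + 1, by omega, by omega, ⟨h1, hres⟩,
      fun h => by have := hnp' h.1; omega⟩
  · -- p' = B + 1, q' = B + 1
    have h1 : θ.rel (z+2) (B+1) := by rw [← hp1]; exact hθp'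
    have h2 : δ.rel (z+2) (B+1) := by rw [← hq1]; exact hδq'
    exact ⟨B + 1, by omega, by omega, ⟨h1, h2⟩,
      fun h => by have := hnp' h.1; omega⟩
  · -- p' = B + 1, B = q' + 1 : case C with (σ,τ) = (δ,θ), b = q'
    have hτ2 : θ.rel (z+2) (q'+2) := by
      have : q' + 2 = p' := by omega
      rw [this]; exact hθp'
    have hσ1 : δ.rel (z+1) (q'+1) := by rw [← hq1]; exact hRB.2
    have hτ1 : θ.rel (z+1) (q'+1) := by rw [← hq1]; exact hRB.1
    have hadj' : A = q' ∨ A = q' + 1 ∨ A = q' + 2 := by omega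
    have hres := caseC θ δ hJ δ θ kδ kθ (z := z) (b := q') (A := A) (by omega)
      hδq' hτ2 hσ1 hτ1 hRA.2 hRA.1 hadj'
    rcases hres with h | h | ⟨hAB, hs, ht⟩
    · exact ⟨q' + 2, by omega, by omega, ⟨hτ2, h⟩, by
        intro hrd; have := hnp' hrd.1; omega⟩
    · exact ⟨q', hq'e, by omega, ⟨h, hδq'⟩, by intro _; omega⟩
    · exact hC1 ht hs (by omega)
  · -- B = p' + 1, q' = B : case B with (σ,τ) = (θ,δ)
    have hδ2 : δ.rel (z+2) (p'+1) := by rw [← hp1, ← hq1]; exact hδq'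
    have hσ1 : θ.rel (z+1) (p'+1) := by rw [← hp1]; exact hRB.1
    have hτ1 : δ.rel (z+1) (p'+1) := by rw [← hp1]; exact hRB.2
    have hres := caseB θ δ hJ θ δ kθ kδ (z := z) (b := p') hσ1 hτ1 hθp' hδ2
    exact ⟨p', hp'e, by omega, ⟨hθp', hres⟩, fun h => hnp' h.1⟩
  · -- B = p' + 1, q' = B + 1 : case C with (σ,τ) = (θ,δ), b = p'
    have hτ2 : δ.rel (z+2) (p'+2) := by
      have : p' + 2 = q' := by omega
      rw [this]; exact hδq'
    have hσ1 : θ.rel (z+1) (p'+1) := by rw [← hp1]; exact hRB.1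
    have hτ1 : δ.rel (z+1) (p'+1) := by rw [← hp1]; exact hRB.2
    have hadj' : A = p' ∨ A = p' + 1 ∨ A = p' + 2 := by omega
    have hres := caseC θ δ hJ θ δ kθ kδ (z := z) (b := p') (A := A) (by omega)
      hθp' hτ2 hσ1 hτ1 hRA.1 hRA.2 hadj'
    rcases hres with h | h | ⟨hAB, ht, hs⟩
    · exact ⟨p' + 2, by omega, by omega, ⟨h, hτ2⟩, by
        intro hrd; have := hnq' hrd.2; omega⟩
    · exact ⟨p', hp'e, by omega, ⟨hθp', h⟩, by intro _; omega⟩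
    · exact hC1 ht hs (by omega)
  · -- B = p' + 1, B = q' + 1
    have hpq : q' = p' := by omega
    rw [hpq] at hδq'
    exact ⟨p', hp'e, by omega, ⟨hθp', hδq'⟩, by intro _; omega⟩

end SP15
end DEV5

section DEV6
namespace SP15

variable {n : ℕ} (θ δ : LineCong n)
variable (hJ : ¬ ∀ x y, x ≤ n → y ≤ n → joinRel θ δ x y)

include hJ in
/-- Mirror representatives below the common extreme, as a chained invariant. -/
lemma Qk {e₀ : ℕ} (hen : e₀ + 2 ≤ n)
    (hexθ : vq θ (e₀+1) ≤ 2) (hexδ : vq δ (e₀+1) ≤ 2) :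
    ∀ k, e₀ + k + 1 ≤ n →
      ∃ A B, A ≤ e₀+1 ∧ B ≤ e₀+1 ∧
        (θ.rel (e₀+k) A ∧ δ.rel (e₀+k) A) ∧
        (θ.rel (e₀+k+1) B ∧ δ.rel (e₀+k+1) B) ∧
        (A = B ∨ A = B + 1 ∨ B = A + 1) ∧
        ((θ.rel (e₀+1) e₀ ∧ δ.rel (e₀+1) e₀) → A ≠ e₀+1 ∧ B ≠ e₀+1) ∧
        (∀ w, w + 1 = e₀ + k → ∃ D, D ≤ e₀+1 ∧ (D = A ∨ D = A + 1 ∨ A = D + 1) ∧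
          (θ.rel w D ∧ δ.rel w D) ∧
          ((θ.rel (e₀+1) e₀ ∧ δ.rel (e₀+1) e₀) → D ≠ e₀+1)) := by
  have hct := common_type θ δ hJ hen hexθ hexδ
  intro k
  induction k with
  | zero =>
      intro _
      have hA : θ.rel e₀ e₀ ∧ δ.rel e₀ e₀ :=
        ⟨θ.refl _ (by omega), δ.refl _ (by omega)⟩
      have hDgen : ∀ w, w + 1 = e₀ + 0 → ∃ D, D ≤ e₀+1 ∧ (D = e₀ ∨ D = e₀ + 1 ∨ e₀ = D + 1) ∧
          (θ.rel w D ∧ δ.rel w D) ∧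
          ((θ.rel (e₀+1) e₀ ∧ δ.rel (e₀+1) e₀) → D ≠ e₀+1) := by
        intro w hw
        exact ⟨w, by omega, by omega,
          ⟨θ.refl _ (by omega), δ.refl _ (by omega)⟩, by omega⟩
      rcases hct with ⟨h1, h2⟩ | ⟨h1, h2⟩ | ⟨h1, h2⟩
      · -- reflection world
        refine ⟨e₀, e₀+1, by omega, by omega, hA,
          ⟨θ.refl _ (by omega), δ.refl _ (by omega)⟩, by omega, ?_, hDgen⟩
        intro hrd
        exact absurd (triv3 θ (θ.symm hrd.1) (θ.trans hrd.1 h1))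
          (fun h => trivFalse_l θ δ hJ h)
      · -- rest-up world
        refine ⟨e₀, e₀+1, by omega, by omega, hA,
          ⟨θ.refl _ (by omega), δ.refl _ (by omega)⟩, by omega, ?_, hDgen⟩
        intro hrd
        exact absurd (triv3 θ (θ.symm hrd.1) h1)
          (fun h => trivFalse_l θ δ hJ h)
      · -- rest-down world
        exact ⟨e₀, e₀, by omega, by omega, hA, ⟨h1, h2⟩, by omega,
          fun _ => ⟨by omega, by omega⟩, hDgen⟩
  | succ k ih =>
      intro hkn
      obtain ⟨A, B, hA, hB, hRA, hRB, hadj, hne, hD⟩ := ih (by omega)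
      have hstep := stepU θ δ hJ hen hct (z := e₀ + k) (A := A) (B := B)
        (by omega) hA hB hRA hRB hadj (fun h => (hne h).2) hD
      obtain ⟨C, hC, hadjC, hRC, hCne⟩ := hstep
      refine ⟨B, C, hB, hC, hRB, ?_, by omega, ?_, ?_⟩
      · have : e₀ + (k+1) + 1 = e₀ + k + 2 := by omega
        rw [this]; exact hRC
      · intro hrd; exact ⟨(hne hrd).2, hCne hrd⟩
      · intro w hw
        refine ⟨A, hA, hadj, ?_, fun hrd => (hne hrd).1⟩
        have : w = e₀ + k := by omega
        rw [this]; exact hRA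

include hJ in
lemma REP {e₀ : ℕ} (hen : e₀ + 2 ≤ n)
    (hexθ : vq θ (e₀+1) ≤ 2) (hexδ : vq δ (e₀+1) ≤ 2) :
    ∀ x, x ≤ n → ∃ m, m ≤ e₀ + 1 ∧ θ.rel x m ∧ δ.rel x m := by
  intro x hx
  rcases le_or_gt x (e₀+1) with h | h
  · exact ⟨x, h, θ.refl _ hx, δ.refl _ hx⟩
  · obtain ⟨k, hk⟩ : ∃ k, x = e₀ + k + 1 := ⟨x - e₀ - 1, by omega⟩
    obtain ⟨A, B, hA, hB, hRA, hRB, -⟩ :=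
      Qk θ δ hJ hen hexθ hexδ k (by omega)
    exact ⟨B, hB, by rw [hk]; exact hRB.1, by rw [hk]; exact hRB.2⟩

end SP15
end DEV6

section DEV7
namespace SP15

variable {n : ℕ} (θ δ : LineCong n)

/-- Lift a chain of the restrictions to the big line. -/
lemma lift_up {e₁ : ℕ} (θ' δ' : LineCong e₁)
    (hθ' : ∀ x y, θ'.rel x y ↔ (x ≤ e₁ ∧ y ≤ e₁ ∧ θ.rel x y))
    (hδ' : ∀ x y, δ'.rel x y ↔ (x ≤ e₁ ∧ y ≤ e₁ ∧ δ.rel x y)) :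
    ∀ a b, joinRel θ' δ' a b → joinRel θ δ a b := by
  intro a b h
  induction h with
  | single h =>
      rcases h with h | h
      · exact jsingle_l θ δ ((hθ' _ _).mp h).2.2
      · exact jsingle_r θ δ ((hδ' _ _).mp h).2.2
  | tail _ hbc ih =>
      refine jtrans θ δ ih ?_
      rcases hbc with h | h
      · exact jsingle_l θ δ ((hθ' _ _).mp h).2.2
      · exact jsingle_r θ δ ((hδ' _ _).mp h).2.2

/-- When the whole line is below the extreme. -/
lemma push_all {e₁ : ℕ} (θ' δ' : LineCong e₁)
    (hθ' : ∀ x y, θ'.rel x y ↔ (x ≤ e₁ ∧ y ≤ e₁ ∧ θ.rel x y))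
    (hδ' : ∀ x y, δ'.rel x y ↔ (x ≤ e₁ ∧ y ≤ e₁ ∧ δ.rel x y))
    (hne : n ≤ e₁) :
    ∀ a b, joinRel θ δ a b → joinRel θ' δ' a b := by
  intro a b h
  induction h with
  | single h =>
      rcases h with h | h
      · exact Relation.TransGen.single (Or.inl ((hθ' _ _).mpr
          ⟨le_trans (θ.dom h).1 hne, le_trans (θ.dom h).2 hne, h⟩))
      · exact Relation.TransGen.single (Or.inr ((hδ' _ _).mpr
          ⟨le_trans (δ.dom h).1 hne, le_trans (δ.dom h).2 hne, h⟩))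
  | tail _ hbc ih =>
      refine Relation.TransGen.trans ih (Relation.TransGen.single ?_)
      rcases hbc with h | h
      · exact Or.inl ((hθ' _ _).mpr
          ⟨le_trans (θ.dom h).1 hne, le_trans (θ.dom h).2 hne, h⟩)
      · exact Or.inr ((hδ' _ _).mpr
          ⟨le_trans (δ.dom h).1 hne, le_trans (δ.dom h).2 hne, h⟩)

/-- Push a chain down using mirror representatives. -/
lemma push_down {e₁ : ℕ} (θ' δ' : LineCong e₁)
    (hθ' : ∀ x y, θ'.rel x y ↔ (x ≤ e₁ ∧ y ≤ e₁ ∧ θ.rel x y))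
    (hδ' : ∀ x y, δ'.rel x y ↔ (x ≤ e₁ ∧ y ≤ e₁ ∧ δ.rel x y))
    (hrep : ∀ x, x ≤ n → ∃ m, m ≤ e₁ ∧ θ.rel x m ∧ δ.rel x m) :
    ∀ a b, joinRel θ δ a b → ∀ ma mb, ma ≤ e₁ → mb ≤ e₁ →
      (θ.rel a ma ∧ δ.rel a ma) → (θ.rel b mb ∧ δ.rel b mb) →
      joinRel θ' δ' ma mb := by
  intro a b h
  induction h with
  | single h =>
      intro ma mb hma hmb hra hrb
      rcases h with h | h
      · exact Relation.TransGen.single (Or.inl ((hθ' _ _).mpr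
          ⟨hma, hmb, θ.trans (θ.symm hra.1) (θ.trans h hrb.1)⟩))
      · exact Relation.TransGen.single (Or.inr ((hδ' _ _).mpr
          ⟨hma, hmb, δ.trans (δ.symm hra.2) (δ.trans h hrb.2)⟩))
  | @tail b c hab hbc ih =>
      intro ma mc hma hmc hra hrc
      have hbn : b ≤ n := (jdom θ δ hab).2
      obtain ⟨mb, hmb, hrb⟩ := hrep b hbn
      have h1 := ih ma mb hma hmb hra hrb
      have h2 : joinRel θ' δ' mb mc := by
        rcases hbc with h | h
        · exact Relation.TransGen.single (Or.inl ((hθ' _ _).mpr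
            ⟨hmb, hmc, θ.trans (θ.symm hrb.1) (θ.trans h hrc.1)⟩))
        · exact Relation.TransGen.single (Or.inr ((hδ' _ _).mpr
            ⟨hmb, hmc, δ.trans (δ.symm hrb.2) (δ.trans h hrc.2)⟩))
      exact Relation.TransGen.trans h1 h2

end SP15
end DEV7

/-- For congruences with nontrivial join, `(θ ∨ δ)` restricted to `[0,e₁]` equals the join, in
`Con L_{e₁}`, of the restrictions of `θ` and `δ`. -/
theorem stmt_15 (n : ℕ) (θ δ : LineCong n)
    (hJ : ¬ ∀ x y, x ≤ n → y ≤ n → joinRel θ δ x y)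
    (e₁ : ℕ) (he₁ : IsLeast {e | 0 < e ∧ IsExtremeC θ e ∧ IsExtremeC δ e} e₁)
    (θ' δ' : LineCong e₁)
    (hθ' : ∀ x y, θ'.rel x y ↔ (x ≤ e₁ ∧ y ≤ e₁ ∧ θ.rel x y))
    (hδ' : ∀ x y, δ'.rel x y ↔ (x ≤ e₁ ∧ y ≤ e₁ ∧ δ.rel x y)) :
    ∀ x y, x ≤ e₁ → y ≤ e₁ → (joinRel θ δ x y ↔ joinRel θ' δ' x y) := by
  obtain ⟨⟨hpos, ⟨he₁n, hvqθ⟩, ⟨_, hvqδ⟩⟩, -⟩ := he₁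
  intro x y hx hy
  constructor
  · intro h
    rcases le_or_gt n e₁ with hne | hlt
    · exact SP15.push_all θ δ θ' δ' hθ' hδ' hne x y h
    · obtain ⟨e₀, rfl⟩ : ∃ e₀, e₁ = e₀ + 1 := ⟨e₁ - 1, by omega⟩
      have hen : e₀ + 2 ≤ n := by omega
      have hrep := SP15.REP θ δ hJ hen hvqθ hvqδ
      have hxn : x ≤ n := by omega
      have hyn : y ≤ n := by omega
      have hmain := SP15.push_down θ δ θ' δ' hθ' hδ' hrep x y h x y hx hy
        ⟨θ.refl _ hxn, δ.refl _ hxn⟩ ⟨θ.refl _ hyn, δ.refl _ hyn⟩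
      exact hmain
  · intro h
    exact SP15.lift_up θ δ θ' δ' hθ' hδ' x y h


-- #print axioms stmt_15
end

section
/- Let θ = ⟨k; r̄⟩ be a mirrored congruence of L_n and δ a congruence of frequency 2 (so a δ b iff a = b or a + b = n). Then θ and δ permute: θ ∘ δ = δ ∘ θ. -/
/-! With `F(x) = x - Δ(x)`, `θ` identifies `x` and `y` iff `F x ≡ ±F y (mod 2k)`, and mirroring
gives `F(n - x) = F(n) - F(x)`. Hence the reflection `x ↦ n - x` preserves `θ` as soon as
`F(n) = n - m` is a multiple of `k` (then `F(n) ≡ -F(n)`) or is below `k` (then `±` never folds two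
values of `[0, F(n)]` together). The remaining case contradicts the bisimulation property: `F` climbs
through `[0, k]` in unit steps, so if `F(n)` folded to some `d ∈ (0, k)`, the class of the endpoint
`n` would contain points adjacent to the classes of `d - 1` and of `d + 1`, while `n` itself has
the single neighbour `n - 1`. Since `δ` identifies each point with its reflection, a
reflection-invariant `θ` permutes with `δ`. -/

section DeltaFn

variable {m : ℕ} {r : Fin m → ℕ}

theorem deltaFn_of_nonpos {x : ℤ} (hx : x ≤ 0) : deltaFn m r x = 0 := by
  simp only [deltaFn, Nat.cast_eq_zero, Finset.card_eq_zero, Finset.filter_eq_empty_iff]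
  intro i _
  omega

theorem deltaFn_mono : Monotone (deltaFn m r) := fun x y hxy => by
  unfold deltaFn
  gcongr with i

theorem deltaFn_add_one_le (hr : Function.Injective r) (x : ℤ) :
    deltaFn m r (x + 1) ≤ deltaFn m r x + 1 := by
  unfold deltaFn
  have hat : (Finset.univ.filter fun i => (r i : ℤ) = x).card ≤ 1 :=
    Finset.card_le_one.mpr fun a ha b hb => by
      simp only [Finset.mem_filter] at ha hb
      exact hr (by omega)
  have hsub : (Finset.univ.filter fun i => (r i : ℤ) < x + 1) ⊆
      (Finset.univ.filter fun i => (r i : ℤ) < x) ∪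
        Finset.univ.filter fun i => (r i : ℤ) = x := by
    intro i
    simp only [Finset.mem_filter, Finset.mem_union, Finset.mem_univ, true_and]
    omega
  have := (Finset.card_le_card hsub).trans (Finset.card_union_le _ _)
  omega

theorem deltaFn_sub {n : ℕ} (hr : Function.Injective r) (hmir : ∀ i, ∃ j, r j + r i + 1 = n)
    (x : ℤ) : deltaFn m r (n - x) = m - deltaFn m r x := by
  choose σ hσ using hmir
  have hσσ : ∀ i, σ (σ i) = i := fun i => hr (by have := hσ i; have := hσ (σ i); omega)
  have hcard : (Finset.univ.filter fun i => (r i : ℤ) < n - x).card =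
      (Finset.univ.filter fun i => ¬ (r i : ℤ) < x).card := by
    refine Finset.card_nbij' σ σ ?_ ?_ (fun i _ => hσσ i) (fun i _ => hσσ i) <;>
    · intro i
      have := hσ i
      simp only [Finset.coe_filter, Finset.mem_univ, true_and, Set.mem_ofPred_eq]
      omega
  have hsplit := Finset.card_filter_add_card_filter_not (s := Finset.univ)
    fun i : Fin m => (r i : ℤ) < x
  rw [Finset.card_univ, Fintype.card_fin] at hsplit
  unfold deltaFn
  omega

end DeltaFn

def reducedPos (m : ℕ) (r : Fin m → ℕ) (x : ℤ) : ℤ := x - deltaFn m r x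

section ReducedPos

variable {m : ℕ} {r : Fin m → ℕ}

theorem reducedPos_zero : reducedPos m r 0 = 0 := by
  simp [reducedPos, deltaFn_of_nonpos le_rfl]

theorem reducedPos_le_add_one (hr : Function.Injective r) (x : ℤ) :
    reducedPos m r x ≤ reducedPos m r (x + 1) := by
  have := deltaFn_add_one_le hr x
  unfold reducedPos
  omega

theorem reducedPos_add_one_le (x : ℤ) : reducedPos m r (x + 1) ≤ reducedPos m r x + 1 := by
  have := deltaFn_mono (m := m) (r := r) (show x ≤ x + 1 by omega)
  unfold reducedPos
  omega

theorem monotone_reducedPos_natCast (hr : Function.Injective r) :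
    Monotone fun x : ℕ => reducedPos m r x :=
  monotone_nat_of_le_succ fun x => by exact_mod_cast reducedPos_le_add_one hr x

theorem reducedPos_sub {n : ℕ} (hr : Function.Injective r)
    (hmir : ∀ i, ∃ j, r j + r i + 1 = n) (x : ℤ) :
    reducedPos m r (n - x) = (n - m) - reducedPos m r x := by
  simp only [reducedPos, deltaFn_sub hr hmir]
  ring

theorem reducedPos_natCast_self {n : ℕ} (hr : Function.Injective r)
    (hmir : ∀ i, ∃ j, r j + r i + 1 = n) : reducedPos m r n = n - m := by
  simpa [reducedPos_zero] using reducedPos_sub hr hmir 0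

theorem reducedPos_mem_Icc {n x : ℕ} (hr : Function.Injective r)
    (hmir : ∀ i, ∃ j, r j + r i + 1 = n) (hx : x ≤ n) :
    0 ≤ reducedPos m r x ∧ reducedPos m r x ≤ n - m := by
  have h0 := monotone_reducedPos_natCast hr (Nat.zero_le x)
  have hn := monotone_reducedPos_natCast hr hx
  simp only [Nat.cast_zero, reducedPos_zero, reducedPos_natCast_self hr hmir] at h0 hn
  exact ⟨h0, hn⟩

end ReducedPos

theorem exists_lt_eq_sub_one_and_succ_eq {f : ℕ → ℤ} (hf : ∀ x, f (x + 1) ≤ f x + 1)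
    {v : ℤ} (h0 : f 0 < v) {n : ℕ} (hn : v ≤ f n) :
    ∃ x < n, f x = v - 1 ∧ f (x + 1) = v := by
  induction n with
  | zero => omega
  | succ n ih =>
    by_cases hv : v ≤ f n
    · obtain ⟨x, hxn, hx⟩ := ih hv
      exact ⟨x, by omega, hx⟩
    · exact ⟨n, by omega, by have := hf n; omega, by have := hf n; omega⟩

theorem Int.eq_of_modEq_or_modEq_neg {k a b : ℤ} (ha : 0 ≤ a) (hak : a ≤ k) (hb : 0 ≤ b)
    (hbk : b ≤ k) (h : a ≡ b [ZMOD 2 * k] ∨ a ≡ -b [ZMOD 2 * k]) : a = b := by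
  rcases h with h | h
  · rcases eq_or_lt_of_le (ha.trans hak) with rfl | hk
    · omega
    · have := Int.eq_zero_of_abs_lt_dvd h.dvd (by rw [abs_lt]; omega)
      omega
  · have hdvd : 2 * k ∣ a + b := by
      have := h.dvd
      rwa [show -b - a = -(a + b) by ring, Int.dvd_neg] at this
    rcases eq_or_lt_of_le (add_nonneg ha hb) with hab | hab
    · omega
    · have := Int.le_of_dvd hab hdvd
      omega

theorem Int.exists_modEq_or_modEq_neg_of_not_dvd {k C : ℤ} (hk : 0 < k) (hC : ¬ k ∣ C) :
    ∃ d, 0 < d ∧ d < k ∧ (C ≡ d [ZMOD 2 * k] ∨ C ≡ -d [ZMOD 2 * k]) := by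
  have hrem := Int.emod_add_mul_ediv C (2 * k)
  have hlo := Int.emod_nonneg C (show 2 * k ≠ 0 by omega)
  have hhi := Int.emod_lt_of_pos C (show 0 < 2 * k by omega)
  have hC' : C % (2 * k) ≠ 0 ∧ C % (2 * k) ≠ k := by
    constructor <;> intro h <;> apply hC
    · exact ⟨2 * (C / (2 * k)), by linear_combination h - hrem⟩
    · exact ⟨2 * (C / (2 * k)) + 1, by linear_combination h - hrem⟩
  rcases lt_or_gt_of_ne hC'.2 with hlt | hgt
  · exact ⟨C % (2 * k), by omega, hlt, .inl (Int.mod_modEq C _).symm⟩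
  · refine ⟨2 * k - C % (2 * k), by omega, by omega, .inr ?_⟩
    exact (Int.mod_modEq C _).symm.trans (Int.modEq_iff_dvd.mpr ⟨-1, by ring⟩)

theorem Int.sub_modEq_or_modEq_neg {k C u v : ℤ} (hC : k ∣ C ∨ C < k) (hu : 0 ≤ u)
    (huC : u ≤ C) (hv : 0 ≤ v) (hvC : v ≤ C) (h : u ≡ v [ZMOD 2 * k] ∨ u ≡ -v [ZMOD 2 * k]) :
    C - u ≡ C - v [ZMOD 2 * k] ∨ C - u ≡ -(C - v) [ZMOD 2 * k] := by
  rcases h with h | h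
  · exact .inl (Int.ModEq.sub_left C h)
  rcases hC with hdvd | hlt
  · obtain ⟨q, rfl⟩ := hdvd
    have hCC : k * q ≡ -(k * q) [ZMOD 2 * k] := Int.modEq_iff_dvd.mpr ⟨-q, by ring⟩
    exact .inr ((hCC.sub h).trans (by ring_nf; rfl))
  · rw [Int.eq_of_modEq_or_modEq_neg hu (by omega) hv (by omega) (.inr h)]
    exact .inl rfl

theorem LineCong.rel_last_or_rel_pred_of_rel_last {n x y : ℕ} (θ : LineCong n)
    (hx : θ.rel n x) (hxy : lineR n x y) : θ.rel n y ∨ θ.rel (n - 1) y := by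
  obtain ⟨z, ⟨-, hzn, hnz, -⟩, hzy⟩ := θ.bisim hx hxy
  obtain rfl | rfl : z = n ∨ z = n - 1 := by omega
  exacts [.inl hzy, .inr hzy]

section Mirrored

variable {n k m : ℕ} {r : Fin m → ℕ} {θ : LineCong n}

theorem modEq_of_rel
    (hθ : ∀ x y : ℕ, θ.rel x y ↔ (x ≤ n ∧ y ≤ n ∧ conr k m r (x : ℤ) (y : ℤ)))
    {x y : ℕ} (h : θ.rel x y) :
    reducedPos m r x ≡ reducedPos m r y [ZMOD 2 * k] ∨
      reducedPos m r x ≡ -reducedPos m r y [ZMOD 2 * k] :=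
  ((hθ x y).mp h).2.2

theorem dvd_or_lt_of_rel_iff_conr (hk : 0 < k) (hr : Function.Injective r)
    (hmir : ∀ i, ∃ j, r j + r i + 1 = n)
    (hθ : ∀ x y : ℕ, θ.rel x y ↔ (x ≤ n ∧ y ≤ n ∧ conr k m r (x : ℤ) (y : ℤ))) :
    (k : ℤ) ∣ n - m ∨ (n : ℤ) - m < k := by
  by_contra! hcon
  obtain ⟨hndvd, hkC⟩ := hcon
  set f : ℕ → ℤ := fun x => reducedPos m r x with hf
  have hstep : ∀ x, f (x + 1) ≤ f x + 1 := fun x => by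
    simpa [hf] using reducedPos_add_one_le (m := m) (r := r) x
  have hf0 : f 0 = 0 := by simpa [hf] using reducedPos_zero
  have hfn : f n = n - m := reducedPos_natCast_self hr hmir
  obtain ⟨d, hd0, hdk, hCd⟩ := Int.exists_modEq_or_modEq_neg_of_not_dvd (by omega) hndvd
  obtain ⟨x₀, hx₀n, hfx₀, hfx₀'⟩ :=
    exists_lt_eq_sub_one_and_succ_eq hstep (v := d) (by omega) (n := n) (by omega)
  obtain ⟨x₁, hx₁n, hfx₁, hfx₁'⟩ :=
    exists_lt_eq_sub_one_and_succ_eq hstep (v := d + 1) (by omega) (n := n) (by omega)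
  have hrel_last : ∀ x ≤ n, f x = d → θ.rel n x := fun x hx hfx =>
    (hθ n x).mpr ⟨le_rfl, hx, by rw [← hfn, ← hfx] at hCd; exact hCd⟩
  have hval : ∀ {x y : ℕ}, θ.rel x y → 0 ≤ f x → f x ≤ k → 0 ≤ f y → f y ≤ k → f x = f y :=
    fun h h1 h2 h3 h4 => Int.eq_of_modEq_or_modEq_neg h1 h2 h3 h4 (modEq_of_rel hθ h)
  have hrel₀ := hrel_last (x₀ + 1) hx₀n hfx₀'
  have hrel₁ := hrel_last x₁ hx₁n.le (by omega)
  rcases θ.rel_last_or_rel_pred_of_rel_last hrel₀ (y := x₀)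
      ⟨hx₀n, by omega, by omega, by omega⟩ with h₀ | h₀
  · have := hval (θ.trans (θ.symm hrel₀) h₀) (by omega) (by omega) (by omega) (by omega)
    omega
  rcases θ.rel_last_or_rel_pred_of_rel_last hrel₁ (y := x₁ + 1)
      ⟨hx₁n.le, hx₁n, by omega, by omega⟩ with h₁ | h₁
  · have := hval (θ.trans (θ.symm hrel₁) h₁) (by omega) (by omega) (by omega) (by omega)
    omega
  · have := hval (θ.trans (θ.symm h₀) h₁) (by omega) (by omega) (by omega) (by omega)
    omega

theorem rel_sub_of_rel_iff_conr (hk : 0 < k) (hr : Function.Injective r)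
    (hmir : ∀ i, ∃ j, r j + r i + 1 = n)
    (hθ : ∀ x y : ℕ, θ.rel x y ↔ (x ≤ n ∧ y ≤ n ∧ conr k m r (x : ℤ) (y : ℤ)))
    {a b : ℕ} (h : θ.rel a b) : θ.rel (n - a) (n - b) := by
  obtain ⟨ha, hb, -⟩ := (hθ a b).mp h
  refine (hθ _ _).mpr ⟨n.sub_le a, n.sub_le b, ?_⟩
  have hsub : ∀ x ≤ n, reducedPos m r ((n - x : ℕ) : ℤ) = (n - m) - reducedPos m r x :=
    fun x hx => by rw [Nat.cast_sub hx]; exact reducedPos_sub hr hmir x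
  have hua := reducedPos_mem_Icc hr hmir ha
  have hub := reducedPos_mem_Icc hr hmir hb
  show reducedPos m r _ ≡ reducedPos m r _ [ZMOD _] ∨ reducedPos m r _ ≡ -reducedPos m r _ [ZMOD _]
  rw [hsub a ha, hsub b hb]
  exact Int.sub_modEq_or_modEq_neg (dvd_or_lt_of_rel_iff_conr hk hr hmir hθ) hua.1 hua.2
    hub.1 hub.2 (modEq_of_rel hθ h)

end Mirrored

theorem LineCong.comp_comm_of_rel_sub {n : ℕ} (θ δ : LineCong n)
    (hθ : ∀ a b, θ.rel a b → θ.rel (n - a) (n - b))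
    (hδ : ∀ a b : ℕ, δ.rel a b ↔ (a ≤ n ∧ b ≤ n ∧ (a = b ∨ a + b = n))) (a c : ℕ) :
    (∃ b, θ.rel a b ∧ δ.rel b c) ↔ (∃ b, δ.rel a b ∧ θ.rel b c) := by
  have one_way : ∀ a c, (∃ b, θ.rel a b ∧ δ.rel b c) → ∃ b, δ.rel a b ∧ θ.rel b c := by
    rintro a c ⟨b, hab, hbc⟩
    obtain ⟨ha, hb⟩ := θ.dom hab
    obtain ⟨-, hc, rfl | hbc⟩ := (hδ b c).mp hbc
    · exact ⟨a, δ.refl a ha, hab⟩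
    · refine ⟨n - a, (hδ a (n - a)).mpr ⟨ha, n.sub_le a, .inr (by omega)⟩, ?_⟩
      simpa [show c = n - b by omega] using hθ a b hab
  exact ⟨one_way a c, fun ⟨b, hab, hbc⟩ =>
    let ⟨b', h₁, h₂⟩ := one_way c a ⟨b, θ.symm hbc, δ.symm hab⟩
    ⟨b', θ.symm h₂, δ.symm h₁⟩⟩

theorem stmt_16_general (n k m : ℕ) (hk : 0 < k) (r : Fin m → ℕ) (hr : StrictMono r)
    (θ : LineCong n)
    (hθ : ∀ x y : ℕ, θ.rel x y ↔ (x ≤ n ∧ y ≤ n ∧ conr k m r (x : ℤ) (y : ℤ)))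
    (hmir : ∀ x : ℕ, (∃ i, r i = x) ↔ (∃ j, r j + x + 1 = n))
    (δ : LineCong n)
    (hδ : ∀ a b : ℕ, δ.rel a b ↔ (a ≤ n ∧ b ≤ n ∧ (a = b ∨ a + b = n))) :
    ∀ a c : ℕ, (∃ b, θ.rel a b ∧ δ.rel b c) ↔ (∃ b, δ.rel a b ∧ θ.rel b c) :=
  θ.comp_comm_of_rel_sub δ
    (fun _ _ => rel_sub_of_rel_iff_conr hk hr.injective (fun i => (hmir (r i)).mp ⟨i, rfl⟩) hθ)
    hδ

/-- A mirrored congruence `θ = ⟨k; r̄⟩` permutes with the frequency-2 congruence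
(`a δ b ↔ a = b ∨ a + b = n`). -/
theorem stmt_16 (n k m : ℕ) (hk : 0 < k) (r : Fin m → ℕ) (hr : StrictMono r)
    (hrn : ∀ i, r i + 1 ≤ n)
    (θ : LineCong n)
    (hθ : ∀ x y : ℕ, θ.rel x y ↔ (x ≤ n ∧ y ≤ n ∧ conr k m r (x : ℤ) (y : ℤ)))
    (hmir : ∀ x : ℕ, (∃ i, r i = x) ↔ (∃ j, r j + x + 1 = n))
    (δ : LineCong n)
    (hδ : ∀ a b : ℕ, δ.rel a b ↔ (a ≤ n ∧ b ≤ n ∧ (a = b ∨ a + b = n))) :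
    ∀ a c : ℕ, (∃ b, θ.rel a b ∧ δ.rel b c) ↔ (∃ b, δ.rel a b ∧ θ.rel b c) :=
  stmt_16_general n k m hk r hr θ hθ hmir δ hδ
end

section
/- If θ is a congruence of L_n that is not mirrored and δ is the frequency-2 congruence of L_n (a δ b iff a = b or a + b = n), then the join θ ∨ δ is the trivial congruence L_n × L_n. -/
private lemma tgSymm {α : Type*} {r : α → α → Prop} (h : ∀ {x y}, r x y → r y x)
    {x y : α} (hxy : Relation.TransGen r x y) : Relation.TransGen r y x := by
  induction hxy with
  | single h' => exact Relation.TransGen.single (h h')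
  | tail _ h' ih => exact Relation.TransGen.head (h h') ih

private lemma mkmod {n a b : ℤ} (h : n ∣ b - a) : a ≡ b [ZMOD n] := Int.modEq_iff_dvd.mpr h

private lemma mod_two_cancel {k a : ℤ} (h : 2*k ∣ 2*a) : k ∣ a := by
  obtain ⟨c, hc⟩ := h
  exact ⟨c, by linarith⟩

private lemma fold_ex {k : ℤ} (hk : 0 < k) (a : ℤ) :
    ∃ s, 0 ≤ s ∧ s ≤ k ∧ (s ≡ a [ZMOD 2*k] ∨ s ≡ -a [ZMOD 2*k]) := by
  have h2k : (0:ℤ) < 2*k := by omega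
  set s1 := a % (2*k) with hs1
  have hb1 : 0 ≤ s1 := Int.emod_nonneg a (by omega)
  have hb2 : s1 < 2*k := Int.emod_lt_of_pos a h2k
  have hs1a : s1 ≡ a [ZMOD 2*k] := Int.emod_emod_of_dvd a dvd_rfl
  obtain ⟨c1, hc1⟩ := Int.ModEq.dvd hs1a
  by_cases h : s1 ≤ k
  · exact ⟨s1, hb1, h, Or.inl hs1a⟩
  · refine ⟨2*k - s1, by omega, by omega, Or.inr (mkmod ⟨-c1 - 1, by linear_combination -hc1⟩)⟩

section Stair
variable {F : ℕ → ℤ} {b : ℕ}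

private lemma stair_mono (hstep : ∀ x, x < b → F (x+1) = F x ∨ F (x+1) = F x + 1)
    {x y : ℕ} (hxy : x ≤ y) (hyb : y ≤ b) : F x ≤ F y := by
  induction y with
  | zero => interval_cases x; exact le_refl _
  | succ y ih =>
    rcases Nat.eq_or_lt_of_le hxy with h | h
    · rw [h]
    · have hy : x ≤ y := Nat.lt_succ_iff.mp h
      have h2 := ih hy (Nat.le_of_succ_le hyb)
      rcases hstep y hyb with h1 | h1 <;> omega

private lemma stair_ivt (hstep : ∀ x, x < b → F (x+1) = F x ∨ F (x+1) = F x + 1)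
    {a c : ℕ} (hac : a ≤ c) (hcb : c ≤ b) {t : ℤ} (h1 : F a ≤ t) (h2 : t ≤ F c) :
    ∃ x, a ≤ x ∧ x ≤ c ∧ F x = t := by
  induction c with
  | zero =>
    have : a = 0 := Nat.le_zero.mp hac
    subst this; exact ⟨0, le_refl _, le_refl _, le_antisymm h1 h2⟩
  | succ c ih =>
    rcases Nat.eq_or_lt_of_le hac with h | h
    · exact ⟨a, le_refl _, hac, by rw [h] at h1 ⊢; omega⟩
    · have hac' : a ≤ c := Nat.lt_succ_iff.mp h
      by_cases ht : t ≤ F c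
      · obtain ⟨x, hx1, hx2, hx3⟩ := ih hac' (Nat.le_of_succ_le hcb) ht
        exact ⟨x, hx1, Nat.le_succ_of_le hx2, hx3⟩
      · refine ⟨c+1, h.le, le_refl _, ?_⟩
        rcases hstep c hcb with h1' | h1' <;> omega

private lemma stair_transition (hstep : ∀ x, x < b → F (x+1) = F x ∨ F (x+1) = F x + 1)
    {a c : ℕ} (hac : a ≤ c) (hcb : c ≤ b) {t : ℤ} (h1 : F a ≤ t) (h2 : t < F c) :
    ∃ w, a ≤ w ∧ w + 1 ≤ c ∧ F w = t ∧ F (w+1) = t + 1 := by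
  induction c with
  | zero =>
    have : a = 0 := Nat.le_zero.mp hac
    subst this; omega
  | succ c ih =>
    rcases Nat.eq_or_lt_of_le hac with h | h
    · subst h; omega
    · have hac' : a ≤ c := Nat.lt_succ_iff.mp h
      by_cases ht : t < F c
      · obtain ⟨w, hw1, hw2, hw3, hw4⟩ := ih hac' (Nat.le_of_succ_le hcb) ht
        exact ⟨w, hw1, Nat.le_succ_of_le hw2, hw3, hw4⟩
      · have h3 : F a ≤ F c := stair_mono hstep hac' (Nat.le_of_succ_le hcb)
        refine ⟨c, hac', le_refl _, ?_, ?_⟩ <;>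
          rcases hstep c hcb with h1' | h1' <;> omega

end Stair

private lemma main_lemma (n : ℕ) (k N : ℤ) (hk : 0 < k) (hkN : k ∣ N)
    (J : ℕ → ℕ → Prop)
    (Jsymm : ∀ {x y}, J x y → J y x)
    (Jtrans : ∀ {x y z}, J x y → J y z → J x z)
    (F H : ℕ → ℤ)
    (hF0 : F 0 = 0) (hFn : F n = N) (hH0 : H 0 = 0)
    (hFstep : ∀ x, x < n → F (x+1) = F x ∨ F (x+1) = F x + 1)
    (hHstep : ∀ x, x < n → H (x+1) = H x ∨ H (x+1) = H x + 1)
    (hFpause : ∀ x, x < n → F (x+1) = F x → (k ∣ F x ∧ 0 < F x ∧ F x < N))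
    (hHpause : ∀ x, x < n → H (x+1) = H x → (k ∣ H x ∧ 0 < H x ∧ H x < N))
    (hFuniq : ∀ x y, x < n → y < n → F (x+1) = F x → F (y+1) = F y → F x = F y → x = y)
    (hθJ : ∀ x y, x ≤ n → y ≤ n →
      (F x ≡ F y [ZMOD 2*k] ∨ F x ≡ -F y [ZMOD 2*k]) → J x y)
    (hδJ : ∀ x, x ≤ n → J x (n - x))
    (hFH : ∀ x, x ≤ n → F (n - x) = N - H x)
    (x0 : ℕ) (hx0n : x0 + 1 ≤ n)
    (hx0F : F (x0+1) = F x0) (hx0H : H (x0+1) = H x0 + 1)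
    (hmin : ∀ x, x < x0 → (F (x+1) = F x ↔ H (x+1) = H x)) :
    ∀ x, x ≤ n → J x 0 := by
  -- lockstep on [0, x0]
  have lockstep : ∀ x, x ≤ x0 → H x = F x := by
    intro x
    induction x with
    | zero => intro _; rw [hF0, hH0]
    | succ x ih =>
      intro hx
      have hx' : x < x0 := hx
      have hxn : x < n := by omega
      have ihx := ih (by omega)
      have hm := hmin x hx'
      rcases hFstep x hxn with h1 | h1 <;> rcases hHstep x hxn with h2 | h2
      · omega
      · rw [hm.mp h1] at h2; omega
      · rw [hm.mpr h2] at h1; omega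
      · omega
  obtain ⟨hkv, hv0, hvN⟩ := hFpause x0 (by omega) hx0F
  set v0 := F x0 with hv0def
  have hkv0 : k ≤ v0 := Int.le_of_dvd hv0 hkv
  have hkNv : k ∣ N - v0 := dvd_sub hkN hkv
  have hvNk : v0 ≤ N - k := by
    have := Int.le_of_dvd (by omega) hkNv
    omega
  have hHx0 : H x0 = v0 := lockstep x0 le_rfl
  obtain ⟨cv, hcv⟩ := hkv
  obtain ⟨cN, hcN⟩ := hkN
  -- the sweep
  have sweep : ∀ i : ℕ, (i:ℤ) ≤ k - 1 →
      (x0+1+i ≤ n ∧ F (x0+1+i) = v0 + i ∧ H (x0+1+i) = v0 + 1 + i) := by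
    intro i
    induction i with
    | zero =>
      intro _
      refine ⟨hx0n, ?_, ?_⟩
      · show F (x0+1) = v0 + ((0:ℕ):ℤ)
        rw [hx0F]; push_cast; ring
      · show H (x0+1) = v0 + 1 + ((0:ℕ):ℤ)
        rw [hx0H, hHx0]; push_cast; ring
    | succ i ih =>
      intro hik
      have hik' : (i:ℤ) ≤ k - 1 := by push_cast at hik ⊢; omega
      obtain ⟨h1, h2, h3⟩ := ih hik'
      have hFlt : F (x0+1+i) < N := by push_cast at hik ⊢; omega
      have hxn : x0+1+i < n := by
        rcases Nat.eq_or_lt_of_le h1 with he | he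
        · rw [he, hFn] at hFlt; omega
        · exact he
      have hF' : F (x0+1+i+1) = F (x0+1+i) + 1 := by
        rcases hFstep (x0+1+i) hxn with hp | hp
        · exfalso
          obtain ⟨hd, _, _⟩ := hFpause (x0+1+i) hxn hp
          rw [h2] at hd
          have hdi : k ∣ (i:ℤ) := by
            obtain ⟨c, hc⟩ := hd
            exact ⟨c - cv, by linear_combination hc - hcv⟩
          have hi0 : i = 0 := by
            by_contra hne
            have hpos : (0:ℤ) < (i:ℤ) := by exact_mod_cast Nat.pos_of_ne_zero hne
            have := Int.le_of_dvd hpos hdi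
            push_cast at hik
            omega
          subst hi0
          have hval : F (x0+1) = F x0 := by
            have h2' : F (x0+1) = v0 + ((0:ℕ):ℤ) := h2
            rw [hv0def] at h2'
            push_cast at h2'
            omega
          have : x0+1 = x0 := hFuniq (x0+1) x0 hxn (by omega) hp hx0F hval
          omega
        · exact hp
      have hH' : H (x0+1+i+1) = H (x0+1+i) + 1 := by
        rcases hHstep (x0+1+i) hxn with hp | hp
        · exfalso
          obtain ⟨hd, _, _⟩ := hHpause (x0+1+i) hxn hp
          rw [h3] at hd
          have hdi : k ∣ (i:ℤ) + 1 := by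
            obtain ⟨c, hc⟩ := hd
            exact ⟨c - cv, by linear_combination hc - hcv⟩
          have := Int.le_of_dvd (by omega) hdi
          push_cast at hik
          omega
        · exact hp
      refine ⟨by omega, ?_, ?_⟩
      · show F (x0+1+(i+1)) = v0 + ((i:ℤ)+1)
        have : x0+1+(i+1) = x0+1+i+1 := by omega
        rw [this, hF', h2]; ring
      · show H (x0+1+(i+1)) = v0 + 1 + ((i:ℤ)+1)
        have : x0+1+(i+1) = x0+1+i+1 := by omega
        rw [this, hH', h3]; ring
  -- prefix points (E2)
  have zpt : ∀ s : ℤ, 0 ≤ s → s ≤ v0 →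
      ∃ z, z ≤ n ∧ F z = s ∧ F (n - z) = N - s := by
    intro s h0 h1
    obtain ⟨z, _, hz2, hz3⟩ := stair_ivt hFstep (Nat.zero_le x0) (by omega)
      (t := s) (by rw [hF0]; exact h0) (by rw [← hv0def]; exact h1)
    have hzn : z ≤ n := by omega
    refine ⟨z, hzn, hz3, ?_⟩
    rw [hFH z hzn, lockstep z hz2, hz3]
  -- LinkP
  set LinkP : ℤ → Prop := fun t => ∃ u w, u ≤ n ∧ w ≤ n ∧ J u w ∧
      (F u ≡ t [ZMOD 2*k] ∨ F u ≡ -t [ZMOD 2*k]) ∧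
      (F w ≡ t+1 [ZMOD 2*k] ∨ F w ≡ -(t+1) [ZMOD 2*k]) with hLinkP
  have core : ∀ t : ℤ, ∀ i : ℕ, (i:ℤ) ≤ k - 1 → v0 + i ≡ t [ZMOD 2*k] → LinkP t := by
    intro t i hik hit
    obtain ⟨h1, h2, h3⟩ := sweep i hik
    obtain ⟨ct, hct⟩ := Int.ModEq.dvd hit
    obtain ⟨s, hs0, hsk, hs⟩ := fold_ex hk (t+1)
    obtain ⟨z, hz1, hz2, hz3⟩ := zpt s hs0 (le_trans hsk hkv0)
    have e1 : J (x0+1+i) (n - (x0+1+i)) := hδJ _ h1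
    have e2 : J z (n - z) := hδJ _ hz1
    have hFnu : F (n - (x0+1+i)) = N - (v0 + 1 + i) := by
      rw [hFH _ h1, h3]
    have key : F (n - (x0+1+i)) ≡ F (n - z) [ZMOD 2*k] ∨
        F (n - (x0+1+i)) ≡ -F (n - z) [ZMOD 2*k] := by
      rw [hFnu, hz3]
      rcases hs with hs | hs
      · obtain ⟨cs, hcs⟩ := Int.ModEq.dvd hs
        exact Or.inl (mkmod ⟨cs - ct, by linear_combination hcs - hct⟩)
      · obtain ⟨cs, hcs⟩ := Int.ModEq.dvd hs
        exact Or.inr (mkmod ⟨-cs - ct - cN, by linear_combination -hcs - hct - 2*hcN⟩)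
    have th1 : J (n - (x0+1+i)) (n - z) := hθJ _ _ (Nat.sub_le n _) (Nat.sub_le n _) key
    have Juw : J (x0+1+i) z := Jtrans e1 (Jtrans th1 (Jsymm e2))
    refine ⟨x0+1+i, z, h1, hz1, Juw, Or.inl (by rw [h2]; exact hit), ?_⟩
    rcases hs with hs | hs
    · exact Or.inl (by rw [hz2]; exact hs)
    · exact Or.inr (by rw [hz2]; exact hs)
  have cover : ∀ t : ℤ, ∃ i : ℕ, (i:ℤ) ≤ k - 1 ∧
      (v0 + i ≡ t [ZMOD 2*k] ∨ v0 + i ≡ -t-1 [ZMOD 2*k]) := by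
    intro t
    have h2k : (0:ℤ) < 2*k := by omega
    set d := (t - v0) % (2*k) with hd
    have hb1 : 0 ≤ d := Int.emod_nonneg _ (by omega)
    have hb2 : d < 2*k := Int.emod_lt_of_pos _ h2k
    have hdm : d ≡ t - v0 [ZMOD 2*k] := Int.emod_emod_of_dvd _ dvd_rfl
    obtain ⟨c1, hc1⟩ := Int.ModEq.dvd hdm
    by_cases h : d ≤ k - 1
    · refine ⟨d.toNat, ?_, Or.inl ?_⟩
      · rw [Int.toNat_of_nonneg hb1]; exact h
      · rw [Int.toNat_of_nonneg hb1]
        exact mkmod ⟨c1, by linear_combination hc1⟩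
    · refine ⟨(2*k - 1 - d).toNat, ?_, Or.inr ?_⟩
      · rw [Int.toNat_of_nonneg (by omega)]; omega
      · rw [Int.toNat_of_nonneg (by omega)]
        exact mkmod ⟨-c1 - cv - 1, by linear_combination -hc1 - 2*hcv⟩
  have inv : ∀ t : ℤ, LinkP (-t-1) → LinkP t := by
    intro t h
    obtain ⟨u, w, hu, hw, Juw, hFu, hFw⟩ := h
    refine ⟨w, u, hw, hu, Jsymm Juw, ?_, ?_⟩
    · rcases hFw with h' | h'
      · refine Or.inr ?_
        obtain ⟨c, hc⟩ := Int.ModEq.dvd h'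
        exact mkmod ⟨c, by linear_combination hc⟩
      · refine Or.inl ?_
        obtain ⟨c, hc⟩ := Int.ModEq.dvd h'
        exact mkmod ⟨c, by linear_combination hc⟩
    · rcases hFu with h' | h'
      · refine Or.inr ?_
        obtain ⟨c, hc⟩ := Int.ModEq.dvd h'
        exact mkmod ⟨c, by linear_combination hc⟩
      · refine Or.inl ?_
        obtain ⟨c, hc⟩ := Int.ModEq.dvd h'
        exact mkmod ⟨c, by linear_combination hc⟩
  have linkAll : ∀ t : ℤ, LinkP t := by
    intro t
    obtain ⟨i, h1, h2 | h2⟩ := cover t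
    · exact core t i h1 h2
    · refine inv t (core (-t-1) i h1 h2)
  -- final induction on values
  have Fub : ∀ x, x ≤ n → F x ≤ N := by
    intro x hx
    rw [← hFn]
    exact stair_mono hFstep hx le_rfl
  have Flb : ∀ x, x ≤ n → 0 ≤ F x := by
    intro x hx
    rw [← hF0]
    exact stair_mono hFstep (Nat.zero_le x) hx
  have Q : ∀ t : ℕ, (t:ℤ) ≤ N → ∀ x, x ≤ n → F x = (t:ℤ) → J x 0 := by
    intro t
    induction t with
    | zero =>
      intro _ x hx hFx
      refine hθJ x 0 hx (by omega) (Or.inl ?_)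
      rw [hF0, hFx]
      push_cast
      exact Int.ModEq.refl 0
    | succ t ih =>
      intro hle x hx hFx
      obtain ⟨u, w, hu, hw, Juw, hFu, hFw⟩ := linkAll (t:ℤ)
      obtain ⟨y, _, hy2, hy3⟩ := stair_ivt hFstep (Nat.zero_le n) le_rfl
        (t := (t:ℤ)) (by rw [hF0]; positivity) (by rw [hFn]; push_cast at hle ⊢; omega)
      have J0y : J y 0 := ih (by push_cast at hle ⊢; omega) y hy2 hy3
      have Jyu : J y u := by
        refine hθJ y u hy2 hu ?_
        rw [hy3]
        rcases hFu with h' | h'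
        · exact Or.inl h'.symm
        · refine Or.inr ?_
          obtain ⟨c, hc⟩ := Int.ModEq.dvd h'
          exact mkmod ⟨c, by linear_combination hc⟩
      have Jwx : J w x := by
        refine hθJ w x hw hx ?_
        rw [hFx]
        push_cast
        rcases hFw with h' | h'
        · exact Or.inl h'
        · exact Or.inr h'
      exact Jtrans (Jsymm Jwx) (Jtrans (Jsymm Juw) (Jtrans (Jsymm Jyu) J0y))
  intro x hx
  have h1 := Flb x hx
  have h2 := Fub x hx
  refine Q (F x).toNat (by rw [Int.toNat_of_nonneg h1]; exact h2) x hx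
    (by rw [Int.toNat_of_nonneg h1])

private lemma delta_zero (m : ℕ) (r : Fin m → ℕ) : deltaFn m r 0 = 0 := by
  unfold deltaFn
  have h : Finset.univ.filter (fun i => (r i : ℤ) < 0) = ∅ :=
    Finset.filter_eq_empty_iff.mpr (fun i _ => Int.not_lt.mpr (Int.natCast_nonneg _))
  rw [h]
  simp

private lemma delta_full {n m : ℕ} (r : Fin m → ℕ) (hrn : ∀ i, r i + 1 ≤ n) :
    deltaFn m r (n:ℤ) = m := by
  unfold deltaFn
  have h : Finset.univ.filter (fun i => (r i : ℤ) < (n:ℤ)) = Finset.univ := by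
    apply Finset.filter_true_of_mem
    intro i _
    have := hrn i
    exact_mod_cast (by omega : (r i : ℤ) < (n:ℤ))
  rw [h]
  simp

private lemma delta_step {m : ℕ} (r : Fin m → ℕ) (hr : StrictMono r) (x : ℕ) :
    deltaFn m r ((x:ℤ)+1) = deltaFn m r (x:ℤ) + (if ∃ i, r i = x then 1 else 0) := by
  unfold deltaFn
  have hsplit : Finset.univ.filter (fun i => (r i : ℤ) < (x:ℤ)+1) =
      Finset.univ.filter (fun i => (r i : ℤ) < (x:ℤ)) ∪
      Finset.univ.filter (fun i => (r i : ℤ) = (x:ℤ)) := by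
    ext i
    simp only [Finset.mem_filter, Finset.mem_union, Finset.mem_univ, true_and]
    omega
  have hdisj : Disjoint (Finset.univ.filter (fun i => (r i : ℤ) < (x:ℤ)))
      (Finset.univ.filter (fun i => (r i : ℤ) = (x:ℤ))) := by
    rw [Finset.disjoint_left]
    intro i hi1 hi2
    simp only [Finset.mem_filter, Finset.mem_univ, true_and] at hi1 hi2
    omega
  rw [hsplit, Finset.card_union_of_disjoint hdisj]
  by_cases h : ∃ i, r i = x
  · obtain ⟨i0, hi0⟩ := h
    have hone : Finset.univ.filter (fun i => (r i : ℤ) = (x:ℤ)) = {i0} := by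
      ext j
      simp only [Finset.mem_filter, Finset.mem_univ, true_and, Finset.mem_singleton]
      constructor
      · intro hj
        apply hr.injective
        have : r j = x := by exact_mod_cast hj
        rw [this, hi0]
      · intro hj
        rw [hj, hi0]
    rw [hone, if_pos ⟨i0, hi0⟩]
    simp
  · have hnone : Finset.univ.filter (fun i => (r i : ℤ) = (x:ℤ)) = ∅ := by
      apply Finset.filter_eq_empty_iff.mpr
      intro i _ hi
      exact h ⟨i, by exact_mod_cast hi⟩
    rw [hnone, if_neg h]
    simp

private def Ffun (m : ℕ) (r : Fin m → ℕ) (a : ℕ) : ℤ := (a:ℤ) - deltaFn m r (a:ℤ)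

private lemma Ffun_zero (m : ℕ) (r : Fin m → ℕ) : Ffun m r 0 = 0 := by
  unfold Ffun
  rw [Nat.cast_zero, delta_zero]
  ring

private lemma Ffun_n {n m : ℕ} (r : Fin m → ℕ) (hrn : ∀ i, r i + 1 ≤ n) :
    Ffun m r n = (n:ℤ) - (m:ℤ) := by
  unfold Ffun
  rw [delta_full r hrn]

private lemma Ffun_step {m : ℕ} (r : Fin m → ℕ) (hr : StrictMono r) (a : ℕ) :
    Ffun m r (a+1) = Ffun m r a ∨ Ffun m r (a+1) = Ffun m r a + 1 := by
  have hd := delta_step r hr a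
  have hc : ((a+1:ℕ):ℤ) = (a:ℤ)+1 := by push_cast; ring
  unfold Ffun
  rw [hc, hd]
  by_cases h : ∃ i, r i = a
  · rw [if_pos h]; left; ring
  · rw [if_neg h]; right; ring

private lemma Ffun_pause {m : ℕ} (r : Fin m → ℕ) (hr : StrictMono r) (a : ℕ) :
    Ffun m r (a+1) = Ffun m r a ↔ ∃ i, r i = a := by
  have hd := delta_step r hr a
  have hc : ((a+1:ℕ):ℤ) = (a:ℤ)+1 := by push_cast; ring
  unfold Ffun
  rw [hc, hd]
  by_cases h : ∃ i, r i = a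
  · rw [if_pos h]
    constructor
    · intro _; exact h
    · intro _; ring
  · rw [if_neg h]
    constructor
    · intro h2; omega
    · intro h2; exact absurd h2 h

/-- If `θ = ⟨k; r̄⟩` is not mirrored and `δ` is the frequency-2 congruence, then `θ ∨ δ` is
trivial. -/
theorem stmt_17 (n k m : ℕ) (hk : 0 < k) (r : Fin m → ℕ) (hr : StrictMono r)
    (hrn : ∀ i, r i + 1 ≤ n)
    (θ : LineCong n)
    (hθ : ∀ x y : ℕ, θ.rel x y ↔ (x ≤ n ∧ y ≤ n ∧ conr k m r (x : ℤ) (y : ℤ)))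
    (hmir : ¬ ∀ x : ℕ, (∃ i, r i = x) ↔ (∃ j, r j + x + 1 = n))
    (δ : LineCong n)
    (hδ : ∀ a b : ℕ, δ.rel a b ↔ (a ≤ n ∧ b ≤ n ∧ (a = b ∨ a + b = n))) :
    ∀ x y, x ≤ n → y ≤ n → joinRel θ δ x y := by
  classical
  have Jsymm : ∀ {a b : ℕ}, joinRel θ δ a b → joinRel θ δ b a := fun h =>
    tgSymm (fun h' => h'.elim (fun h2 => Or.inl (θ.symm h2)) (fun h2 => Or.inr (δ.symm h2))) h
  have Jtrans : ∀ {a b c : ℕ}, joinRel θ δ a b → joinRel θ δ b c → joinRel θ δ a c :=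
    fun h1 h2 => Relation.TransGen.trans h1 h2
  have Jθ : ∀ {a b : ℕ}, θ.rel a b → joinRel θ δ a b :=
    fun h => Relation.TransGen.single (Or.inl h)
  have Jδ : ∀ {a b : ℕ}, δ.rel a b → joinRel θ δ a b :=
    fun h => Relation.TransGen.single (Or.inr h)
  suffices hall : ∀ z, z ≤ n → joinRel θ δ z 0 by
    intro x y hx hy
    exact Jtrans (hall x hx) (Jsymm (hall y hy))
  set F := Ffun m r with hFdef
  set N : ℤ := (n:ℤ) - (m:ℤ) with hNdef
  have hrel : ∀ a b : ℕ, θ.rel a b ↔ (a ≤ n ∧ b ≤ n ∧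
      (F a ≡ F b [ZMOD 2*(k:ℤ)] ∨ F a ≡ -F b [ZMOD 2*(k:ℤ)])) := fun a b => hθ a b
  have hkz : (0:ℤ) < (k:ℤ) := by exact_mod_cast hk
  have hF0 : F 0 = 0 := Ffun_zero m r
  have hFn : F n = N := Ffun_n r hrn
  have Fstep : ∀ a : ℕ, F (a+1) = F a ∨ F (a+1) = F a + 1 := Ffun_step r hr
  have Fpause : ∀ a : ℕ, (F (a+1) = F a ↔ ∃ i, r i = a) := Ffun_pause r hr
  have Fmono : ∀ {a b : ℕ}, a ≤ b → F a ≤ F b := by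
    intro a b hab
    exact stair_mono (F := F) (b := b) (fun x _ => Fstep x) hab le_rfl
  have Flb : ∀ a : ℕ, 0 ≤ F a := fun a => by
    have h := Fmono (Nat.zero_le a); rw [hF0] at h; exact h
  have Fub : ∀ a : ℕ, a ≤ n → F a ≤ N := fun a ha => by
    have h := Fmono ha; rw [hFn] at h; exact h
  have hN0 : 0 ≤ N := by rw [← hFn]; exact Flb n
  by_cases hN : N = 0
  · intro z hz
    refine Jθ ((hrel z 0).mpr ⟨hz, by omega, Or.inl ?_⟩)
    have h1 : F z = 0 := le_antisymm (by rw [← hN]; exact Fub z hz) (Flb z)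
    rw [h1, hF0]
  have hN1 : 1 ≤ N := by omega
  -- mirror witness
  have hmir2 : ∃ a, a + 1 ≤ n ∧
      ¬ ((F (a+1) = F a) ↔ (F ((n - (a+1)) + 1) = F (n - (a+1)))) := by
    rw [not_forall] at hmir
    obtain ⟨a, ha⟩ := hmir
    have han : a + 1 ≤ n := by
      by_contra h
      apply ha
      constructor
      · rintro ⟨i, hi⟩; have := hrn i; omega
      · rintro ⟨j, hj⟩; have := hrn j; omega
    refine ⟨a, han, fun hiff => ha ?_⟩
    rw [Fpause a, Fpause (n - (a+1))] at hiff
    constructor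
    · intro h
      obtain ⟨j, hj⟩ := hiff.mp h
      have := hrn j
      exact ⟨j, by omega⟩
    · intro h'
      obtain ⟨j, hj⟩ := h'
      have := hrn j
      exact hiff.mpr ⟨j, by omega⟩
  obtain ⟨x1, hx1spec, hx1min⟩ : ∃ x1, (x1 + 1 ≤ n ∧
      ¬ ((F (x1+1) = F x1) ↔ (F ((n - (x1+1)) + 1) = F (n - (x1+1))))) ∧
      ∀ y, y < x1 → ¬ (y + 1 ≤ n ∧
      ¬ ((F (y+1) = F y) ↔ (F ((n - (y+1)) + 1) = F (n - (y+1))))) :=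
    ⟨Nat.find hmir2, Nat.find_spec hmir2, fun y hy => Nat.find_min hmir2 hy⟩
  obtain ⟨hx1n, hx1ne⟩ := hx1spec
  have hpauseF : ∃ p, p < n ∧ F (p+1) = F p := by
    by_cases hc : F (x1+1) = F x1
    · exact ⟨x1, by omega, hc⟩
    · have hB : F ((n - (x1+1)) + 1) = F (n - (x1+1)) := by tauto
      exact ⟨n - (x1+1), by omega, hB⟩
  -- C1
  have C1 : ∀ a, a < n → F (a+1) = F a → 0 < F a := by
    intro a ha hp
    by_contra hcon0
    have hFa0 : F a = 0 := le_antisymm (by have := Flb a; omega) (Flb a)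
    have hF1 : F 1 = 0 := by
      rcases Nat.eq_zero_or_pos a with h0 | h0
      · subst h0; rw [hp, hFa0]
      · have h1 := Fmono (show 1 ≤ a from h0)
        have h2 := Flb 1
        omega
    obtain ⟨w, _, hw2, hw3, hw4⟩ := stair_transition (F := F) (b := n) (fun x _ => Fstep x)
      (Nat.zero_le n) le_rfl (t := 0) (le_of_eq hF0) (by rw [hFn]; omega)
    have hw1 : 1 ≤ w := by
      by_contra hw0
      have hw00 : w = 0 := by omega
      rw [hw00] at hw4
      norm_num at hw4
      omega
    have hθ0w : θ.rel 0 w := (hrel 0 w).mpr ⟨by omega, by omega,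
      Or.inl (by rw [hF0, hw3])⟩
    obtain ⟨y', hy1, hy2⟩ := θ.bisim hθ0w (show lineR n w (w+1) from ⟨by omega, by omega, by omega, by omega⟩)
    obtain ⟨_, _, _, hy14⟩ := hy1
    have hFy' : F y' = 0 := by
      interval_cases y'
      · exact hF0
      · exact hF1
    obtain ⟨_, _, hcon⟩ := (hrel y' (w+1)).mp hy2
    rw [hFy', hw4] at hcon
    rcases hcon with h' | h' <;>
      · have h2 := dvd_trans ⟨(k:ℤ), rfl⟩ (Int.ModEq.dvd h')
        omega
  -- C2
  have C2 : ∀ a, a < n → F (a+1) = F a → F a < N := by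
    intro a ha hp
    by_contra hcon0
    have hFaN : F a = N := le_antisymm (Fub a (by omega)) (by omega)
    have hFn1 : F (n-1) = N := by
      rcases Nat.lt_or_ge (a+1) n with h0 | h0
      · have h1 := Fmono (show a+1 ≤ n-1 by omega)
        have h2 := Fub (n-1) (by omega)
        rw [hp, hFaN] at h1
        omega
      · have ha' : a = n - 1 := by omega
        rw [← ha', hFaN]
    obtain ⟨w, _, hw2, hw3, hw4⟩ := stair_transition (F := F) (b := n) (fun x _ => Fstep x)
      (Nat.zero_le n) le_rfl (t := N-1) (by rw [hF0]; omega) (by rw [hFn]; omega)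
    have hθnw : θ.rel n (w+1) := (hrel n (w+1)).mpr ⟨le_rfl, by omega,
      Or.inl (by rw [hFn, hw4]; exact mkmod ⟨0, by ring⟩)⟩
    obtain ⟨y', hy1, hy2⟩ := θ.bisim hθnw (show lineR n (w+1) w from ⟨by omega, by omega, by omega, by omega⟩)
    obtain ⟨_, hy12, hy13, _⟩ := hy1
    have hFy' : F y' = N := by
      have hy' : y' = n - 1 ∨ y' = n := by omega
      rcases hy' with h' | h'
      · rw [h', hFn1]
      · rw [h', hFn]
    obtain ⟨_, _, hcon⟩ := (hrel y' w).mp hy2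
    rw [hFy', hw3] at hcon
    rcases hcon with h' | h' <;>
      · have h2 := dvd_trans ⟨(k:ℤ), rfl⟩ (Int.ModEq.dvd h')
        omega
  -- C3
  have C3aux : ∀ a b, a < n → b < n → a < b → F (a+1) = F a → F (b+1) = F b →
      F a = F b → False := by
    intro a b ha hb hab hpa hpb hv
    have hv0 : 0 < F a := C1 a ha hpa
    have hvN : F a < N := C2 a ha hpa
    have hFa2 : F (a+2) = F a := by
      have h1 := Fmono (show a+1 ≤ a+2 by omega)
      have h2 := Fmono (show a+2 ≤ b+1 by omega)
      rw [hpa] at h1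
      rw [hpb, ← hv] at h2
      omega
    obtain ⟨w, _, hw2, hw3, hw4⟩ := stair_transition (F := F) (b := n) (fun x _ => Fstep x)
      (Nat.zero_le n) le_rfl (t := F a) (by rw [hF0]; omega) (by rw [hFn]; omega)
    have hθaw : θ.rel (a+1) w := (hrel (a+1) w).mpr ⟨by omega, by omega,
      Or.inl (by rw [hpa, hw3])⟩
    obtain ⟨y', hy1, hy2⟩ := θ.bisim hθaw (show lineR n w (w+1) from ⟨by omega, by omega, by omega, by omega⟩)
    obtain ⟨_, _, hy13, hy14⟩ := hy1
    have hFy' : F y' = F a := by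
      have hy' : y' = a ∨ y' = a + 1 ∨ y' = a + 2 := by omega
      rcases hy' with h' | h' | h'
      · rw [h']
      · rw [h', hpa]
      · rw [h', hFa2]
    obtain ⟨_, _, hcon⟩ := (hrel y' (w+1)).mp hy2
    rw [hFy', hw4] at hcon
    rcases hcon with h' | h' <;>
      · have h2 := dvd_trans ⟨(k:ℤ), rfl⟩ (Int.ModEq.dvd h')
        omega
  have C3 : ∀ a b, a < n → b < n → F (a+1) = F a → F (b+1) = F b → F a = F b → a = b := by
    intro a b ha hb hpa hpb hv
    rcases Nat.lt_trichotomy a b with h | h | h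
    · exact (C3aux a b ha hb h hpa hpb hv).elim
    · exact h
    · exact (C3aux b a hb ha h hpb hpa hv.symm).elim
  -- C4
  have C4 : ∀ a, a < n → F (a+1) = F a → (k:ℤ) ∣ F a := by
    intro a ha hp
    have hv0 : 0 < F a := C1 a ha hp
    have hvN : F a < N := C2 a ha hp
    have ha1 : 1 ≤ a := by
      by_contra h
      have ha0 : a = 0 := by omega
      rw [ha0, hF0] at hv0
      omega
    have hstep := Fstep (a-1)
    rw [show a - 1 + 1 = a by omega] at hstep
    have hFa1 : F (a-1) = F a - 1 := by
      rcases hstep with h' | h'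
      · exfalso
        have := C3 (a-1) a (by omega) ha (by rw [show a-1+1 = a by omega]; exact h') hp h'.symm
        omega
      · omega
    obtain ⟨w, _, hw2, hw3, hw4⟩ := stair_transition (F := F) (b := n) (fun x _ => Fstep x)
      (Nat.zero_le n) le_rfl (t := F a) (by rw [hF0]; omega) (by rw [hFn]; omega)
    have hθaw : θ.rel a w := (hrel a w).mpr ⟨by omega, by omega, Or.inl (by rw [hw3])⟩
    obtain ⟨y', hy1, hy2⟩ := θ.bisim hθaw (show lineR n w (w+1) from ⟨by omega, by omega, by omega, by omega⟩)
    obtain ⟨_, _, hy13, hy14⟩ := hy1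
    have hFy' : F y' = F a ∨ F y' = F a - 1 := by
      have hy' : y' = a - 1 ∨ y' = a ∨ y' = a + 1 := by omega
      rcases hy' with h' | h' | h'
      · right; rw [h', hFa1]
      · left; rw [h']
      · left; rw [h', hp]
    obtain ⟨_, _, hcon⟩ := (hrel y' (w+1)).mp hy2
    rw [hw4] at hcon
    rcases hFy' with he | he <;> rw [he] at hcon
    · exfalso
      rcases hcon with h' | h' <;>
        · have h2 := dvd_trans ⟨(k:ℤ), rfl⟩ (Int.ModEq.dvd h')
          omega
    · rcases hcon with h' | h'
      · have h2 := Int.ModEq.dvd h'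
        rw [show (F a + 1) - (F a - 1) = 2 by ring] at h2
        have h3 := Int.le_of_dvd (by omega) h2
        have hk1 : (k:ℤ) = 1 := by omega
        rw [hk1]
        exact one_dvd _
      · have h2 := Int.ModEq.dvd h'
        rw [show (-(F a + 1)) - (F a - 1) = 2 * (-(F a)) by ring] at h2
        have h3 := mod_two_cancel h2
        exact dvd_neg.mp h3
  -- C5 : k ∣ N
  have hkdN : (k:ℤ) ∣ N := by
    obtain ⟨p, hpn, hpp⟩ := hpauseF
    have hv0 : 0 < F p := C1 p hpn hpp
    have hvN : F p < N := C2 p hpn hpp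
    have hkv : (k:ℤ) ∣ F p := C4 p hpn hpp
    have hkFp : (k:ℤ) ≤ F p := Int.le_of_dvd hv0 hkv
    have hkN : (k:ℤ) < N := by omega
    set s := N % (2*(k:ℤ)) with hsdef
    have hs0 : 0 ≤ s := Int.emod_nonneg _ (by omega)
    have hs2k : s < 2*(k:ℤ) := Int.emod_lt_of_pos _ (by omega)
    have hsmod : s ≡ N [ZMOD 2*(k:ℤ)] := Int.emod_emod_of_dvd _ dvd_rfl
    obtain ⟨cs, hcs⟩ := Int.ModEq.dvd hsmod
    have hn1 : F (n-1) = N - 1 := by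
      have hst := Fstep (n-1)
      rw [show n-1+1 = n by omega] at hst
      rcases hst with h' | h'
      · exfalso
        have := C2 (n-1) (by omega) (by rw [show n-1+1 = n by omega]; exact h')
        rw [hFn] at h'
        omega
      · omega
    have hs01 : s = 0 ∨ s = (k:ℤ) := by
      by_contra hcon0
      push_neg at hcon0
      obtain ⟨hsne0, hsnek⟩ := hcon0
      rcases lt_trichotomy s (k:ℤ) with hlt | heq | hgt
      · -- 0 < s < k
        obtain ⟨w, _, hw2, hw3, hw4⟩ := stair_transition (F := F) (b := n) (fun x _ => Fstep x)
          (Nat.zero_le n) le_rfl (t := s) (by rw [hF0]; omega) (by rw [hFn]; omega)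
        have hθnw : θ.rel n w := (hrel n w).mpr ⟨le_rfl, by omega,
          Or.inl (by rw [hFn, hw3]; exact hsmod.symm)⟩
        obtain ⟨y', hy1, hy2⟩ := θ.bisim hθnw (show lineR n w (w+1) from ⟨by omega, by omega, by omega, by omega⟩)
        obtain ⟨_, hy12, hy13, _⟩ := hy1
        have hFy' : F y' = N ∨ F y' = N - 1 := by
          have hy' : y' = n - 1 ∨ y' = n := by omega
          rcases hy' with h' | h'
          · right; rw [h', hn1]
          · left; rw [h', hFn]
        obtain ⟨_, _, hcon⟩ := (hrel y' (w+1)).mp hy2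
        rw [hw4] at hcon
        rcases hFy' with he | he <;> rw [he] at hcon <;> rcases hcon with h' | h'
        · have h2 := dvd_trans ⟨(k:ℤ), rfl⟩ (Int.ModEq.dvd h')
          have h3 := dvd_trans ⟨(k:ℤ), rfl⟩ (Int.ModEq.dvd hsmod)
          omega
        · have h2 := dvd_trans ⟨(k:ℤ), rfl⟩ (Int.ModEq.dvd h')
          have h3 := dvd_trans ⟨(k:ℤ), rfl⟩ (Int.ModEq.dvd hsmod)
          omega
        · have h2 := Int.ModEq.dvd h'
          have h4 := dvd_add h2 (Int.ModEq.dvd hsmod)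
          rw [show ((s+1) - (N-1)) + (N - s) = 2 by ring] at h4
          have h5 := Int.le_of_dvd (by omega) h4
          omega
        · have h2 := Int.ModEq.dvd h'
          have h4 := dvd_add h2 (Int.ModEq.dvd hsmod)
          rw [show (-(s+1) - (N-1)) + (N - s) = 2 * (-s) by ring] at h4
          have h5 := dvd_neg.mp (mod_two_cancel h4)
          have h6 := Int.le_of_dvd (by omega) h5
          omega
      · exact hsnek heq
      · -- k < s < 2k
        obtain ⟨w', _, hw2, hw3, hw4⟩ := stair_transition (F := F) (b := n) (fun x _ => Fstep x)
          (Nat.zero_le n) le_rfl (t := 2*(k:ℤ) - s - 1) (by rw [hF0]; omega)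
          (by rw [hFn]; omega)
        have hθnw : θ.rel n (w'+1) := (hrel n (w'+1)).mpr ⟨le_rfl, by omega,
          Or.inr (by rw [hFn, hw4]; exact mkmod ⟨-cs - 1, by linear_combination -hcs⟩)⟩
        obtain ⟨y', hy1, hy2⟩ := θ.bisim hθnw (show lineR n (w'+1) w' from ⟨by omega, by omega, by omega, by omega⟩)
        obtain ⟨_, hy12, hy13, _⟩ := hy1
        have hFy' : F y' = N ∨ F y' = N - 1 := by
          have hy' : y' = n - 1 ∨ y' = n := by omega
          rcases hy' with h' | h'
          · right; rw [h', hn1]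
          · left; rw [h', hFn]
        obtain ⟨_, _, hcon⟩ := (hrel y' w').mp hy2
        rw [hw3] at hcon
        rcases hFy' with he | he <;> rw [he] at hcon <;> rcases hcon with h' | h'
        · have h2 := dvd_trans ⟨(k:ℤ), rfl⟩ (Int.ModEq.dvd h')
          have h3 := dvd_trans ⟨(k:ℤ), rfl⟩ (Int.ModEq.dvd hsmod)
          omega
        · have h2 := dvd_trans ⟨(k:ℤ), rfl⟩ (Int.ModEq.dvd h')
          have h3 := dvd_trans ⟨(k:ℤ), rfl⟩ (Int.ModEq.dvd hsmod)
          omega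
        · have h2 := Int.ModEq.dvd h'
          have h4 := dvd_add h2 (Int.ModEq.dvd hsmod)
          rw [show ((2*(k:ℤ)-s-1) - (N-1)) + (N - s) = 2*((k:ℤ) - s) by ring] at h4
          have h5 := mod_two_cancel h4
          have h6 : (k:ℤ) ∣ s := by
            have h7 := dvd_sub (dvd_refl (k:ℤ)) h5
            rwa [show (k:ℤ) - ((k:ℤ) - s) = s by ring] at h7
          have h7 : (k:ℤ) ∣ s - k := dvd_sub h6 dvd_rfl
          have h8 := Int.le_of_dvd (by omega) h7
          omega
        · have h2 := Int.ModEq.dvd h'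
          have h4 := dvd_add h2 (Int.ModEq.dvd hsmod)
          rw [show (-(2*(k:ℤ)-s-1) - (N-1)) + (N - s) = 2*(1 - (k:ℤ)) by ring] at h4
          have h5 := mod_two_cancel h4
          have h6 : (k:ℤ) ∣ 1 := by
            have h7 := dvd_add h5 dvd_rfl
            rwa [show (1 - (k:ℤ)) + (k:ℤ) = 1 by ring] at h7
          have h7 := Int.le_of_dvd one_pos h6
          omega
    rcases hs01 with h' | h'
    · rw [h'] at hcs
      exact ⟨2*cs, by linear_combination hcs⟩
    · rw [h'] at hcs
      exact ⟨2*cs + 1, by linear_combination hcs⟩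
  -- J transfer lemmas
  have hδJ : ∀ z, z ≤ n → joinRel θ δ z (n - z) := by
    intro z hz
    exact Jδ ((hδ z (n - z)).mpr ⟨hz, by omega, Or.inr (by omega)⟩)
  have hθJ : ∀ a b : ℕ, a ≤ n → b ≤ n →
      (F a ≡ F b [ZMOD 2*(k:ℤ)] ∨ F a ≡ -F b [ZMOD 2*(k:ℤ)]) → joinRel θ δ a b := by
    intro a b ha hb h
    exact Jθ ((hrel a b).mpr ⟨ha, hb, h⟩)
  -- H lemmas
  have Hstep : ∀ a, a < n → (N - F (n - (a+1))) = (N - F (n - a)) ∨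
      (N - F (n - (a+1))) = (N - F (n - a)) + 1 := by
    intro a ha
    have he : n - a = (n - (a+1)) + 1 := by omega
    have h := Fstep (n - (a+1))
    rw [← he] at h
    rcases h with h' | h'
    · left; omega
    · right; omega
  have HpauseF : ∀ a, a < n → ((N - F (n - (a+1))) = (N - F (n - a)) ↔
      F ((n - (a+1)) + 1) = F (n - (a+1))) := by
    intro a ha
    have he : n - a = (n - (a+1)) + 1 := by omega
    rw [he]
    omega
  have Hpause : ∀ a, a < n → (N - F (n - (a+1))) = (N - F (n - a)) →
      ((k:ℤ) ∣ (N - F (n - a)) ∧ 0 < (N - F (n - a)) ∧ (N - F (n - a)) < N) := by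
    intro a ha hp
    rw [HpauseF a ha] at hp
    have h1 : n - (a+1) < n := by omega
    have h2 := C1 _ h1 hp
    have h3 := C2 _ h1 hp
    have h4 := C4 _ h1 hp
    have he : n - a = (n - (a+1)) + 1 := by omega
    rw [he, hp]
    exact ⟨dvd_sub hkdN h4, by omega, by omega⟩
  have Huniq : ∀ a b, a < n → b < n → (N - F (n - (a+1))) = (N - F (n - a)) →
      (N - F (n - (b+1))) = (N - F (n - b)) → (N - F (n - a)) = (N - F (n - b)) → a = b := by
    intro a b ha hb hpa hpb hv
    rw [HpauseF a ha] at hpa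
    rw [HpauseF b hb] at hpb
    have hea : n - a = (n - (a+1)) + 1 := by omega
    have heb : n - b = (n - (b+1)) + 1 := by omega
    have hv' : F (n - (a+1)) = F (n - (b+1)):= by
      rw [hea, heb, hpa, hpb] at hv; omega
    have := C3 _ _ (by omega) (by omega) hpa hpb hv'
    omega
  have hθJH : ∀ a b : ℕ, a ≤ n → b ≤ n →
      ((N - F (n - a)) ≡ (N - F (n - b)) [ZMOD 2*(k:ℤ)] ∨
       (N - F (n - a)) ≡ -(N - F (n - b)) [ZMOD 2*(k:ℤ)]) → joinRel θ δ a b := by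
    intro a b ha hb h
    obtain ⟨cn, hcn⟩ := hkdN
    refine Jtrans (hδJ a ha) (Jtrans (hθJ (n - a) (n - b) (by omega) (by omega) ?_)
      (Jsymm (hδJ b hb)))
    rcases h with h' | h'
    · obtain ⟨c, hc⟩ := Int.ModEq.dvd h'
      exact Or.inl (mkmod ⟨-c, by linear_combination -hc⟩)
    · obtain ⟨c, hc⟩ := Int.ModEq.dvd h'
      exact Or.inr (mkmod ⟨-c - cn, by linear_combination -hc - 2*hcn⟩)
  have hFH1 : ∀ z, z ≤ n → F (n - z) = N - (N - F (n - z)) := by intro z _; omega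
  have hFH2 : ∀ z, z ≤ n → (N - F (n - (n - z))) = N - F z := by
    intro z hz
    rw [show n - (n - z) = z by omega]
  have hsym : ∀ x, x < x1 → (F (x+1) = F x ↔ (N - F (n - (x+1))) = (N - F (n - x))) := by
    intro x hx
    have h1 := hx1min x hx
    have h2 : x + 1 ≤ n := by omega
    rw [HpauseF x (by omega)]
    tauto
  by_cases hcase : F (x1+1) = F x1
  · -- F pauses at x1, H does not
    have hHnot : ¬ (N - F (n - (x1+1))) = (N - F (n - x1)) := by
      rw [HpauseF x1 (by omega)]
      tauto
    have hHstep1 : (N - F (n - (x1+1))) = (N - F (n - x1)) + 1 := by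
      rcases Hstep x1 (by omega) with h' | h'
      · exact absurd h' hHnot
      · exact h'
    exact main_lemma n (k:ℤ) N hkz hkdN (joinRel θ δ) Jsymm Jtrans
      F (fun a => N - F (n - a)) hF0 hFn
      (by show N - F (n - 0) = 0; rw [Nat.sub_zero, hFn]; ring)
      (fun a _ => Fstep a) Hstep
      (fun a ha hp => ⟨C4 a ha hp, C1 a ha hp, C2 a ha hp⟩) Hpause C3
      hθJ hδJ hFH1 x1 hx1n hcase hHstep1 hsym
  · -- H pauses at x1, F does not
    have hHp : F ((n - (x1+1)) + 1) = F (n - (x1+1)) := by tauto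
    have hHpause1 : (N - F (n - (x1+1))) = (N - F (n - x1)) := (HpauseF x1 (by omega)).mpr hHp
    have hFstep1 : F (x1+1) = F x1 + 1 := by
      rcases Fstep x1 with h' | h'
      · exact absurd h' hcase
      · exact h'
    exact main_lemma n (k:ℤ) N hkz hkdN (joinRel θ δ) Jsymm Jtrans
      (fun a => N - F (n - a)) F
      (by show N - F (n - 0) = 0; rw [Nat.sub_zero, hFn]; ring)
      (by show N - F (n - n) = N; rw [Nat.sub_self, hF0]; ring)
      hF0 Hstep (fun a _ => Fstep a) Hpause
      (fun a ha hp => ⟨C4 a ha hp, C1 a ha hp, C2 a ha hp⟩) Huniq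
      hθJH hδJ hFH2 x1 hx1n hHpause1 hFstep1
      (fun x hx => (hsym x hx).symm)
end

section
/- For positive integers s, t, the relations x ≡ y (mod s) and x + y ≡ 0 (mod t) permute on the set {0, ..., lcm(s,t)}: if a ≡ b (mod s) and b + c ≡ 0 (mod t) with a, b, c in the set, then there exists x in {0,...,lcm(s,t)} with a + x ≡ 0 (mod t) and x ≡ c (mod s). -/
/-- The relations `x ≡ y (mod s)` and `x + y ≡ 0 (mod t)` permute on `{0,…,lcm(s,t)}`. -/
theorem stmt_18 (s t : ℕ) (hs : 0 < s) (ht : 0 < t) (a b c : ℤ)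
    (ha : 0 ≤ a ∧ a ≤ (Nat.lcm s t : ℤ)) (hb : 0 ≤ b ∧ b ≤ (Nat.lcm s t : ℤ))
    (hc : 0 ≤ c ∧ c ≤ (Nat.lcm s t : ℤ))
    (hab : a ≡ b [ZMOD (s : ℤ)]) (hbc : (t : ℤ) ∣ (b + c)) :
    ∃ x : ℤ, 0 ≤ x ∧ x ≤ (Nat.lcm s t : ℤ) ∧ (t : ℤ) ∣ (a + x) ∧ x ≡ c [ZMOD (s : ℤ)] := by
  set L : ℤ := (Nat.lcm s t : ℤ) with hL
  have hsL : (s : ℤ) ∣ L := Int.natCast_dvd_natCast.mpr (Nat.dvd_lcm_left s t)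
  have htL : (t : ℤ) ∣ L := Int.natCast_dvd_natCast.mpr (Nat.dvd_lcm_right s t)
  have hsab : (s : ℤ) ∣ b - a := Int.ModEq.dvd hab
  have key : ∀ x : ℤ, (t : ℤ) ∣ (a + x) → (s : ℤ) ∣ (c - x) →
      0 ≤ x → x ≤ L → ∃ x : ℤ, 0 ≤ x ∧ x ≤ L ∧ (t : ℤ) ∣ (a + x) ∧ x ≡ c [ZMOD (s : ℤ)] := by
    intro x h1 h2 h3 h4
    exact ⟨x, h3, h4, h1, Int.modEq_iff_dvd.mpr h2⟩
  rcases le_or_gt 0 (b + c - a) with h0 | h0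
  · rcases le_or_gt (b + c - a) L with h1 | h1
    · refine key (b + c - a) ?_ ?_ h0 h1
      · have e : a + (b + c - a) = b + c := by ring
        rw [e]; exact hbc
      · have e : c - (b + c - a) = -(b - a) := by ring
        rw [e]; exact hsab.neg_right
    · refine key (b + c - a - L) ?_ ?_ (by omega) (by omega)
      · have := hbc.sub htL
        have e : a + (b + c - a - L) = b + c - L := by ring
        rw [e]; exact this
      · have : c - (b + c - a - L) = -(b - a) + L := by ring
        rw [this]; exact (hsab.neg_right).add hsL
  · refine key (b + c - a + L) ?_ ?_ (by omega) (by omega)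
    · have := hbc.add htL
      have e : a + (b + c - a + L) = b + c + L := by ring
      rw [e]; exact this
    · have : c - (b + c - a + L) = -(b - a) - L := by ring
      rw [this]; exact (hsab.neg_right).sub hsL
end
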